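/- arXiv:math/0505270 — 9 statements merged into one kernel-verified Lean document; each statement's English description precedes it below -/
import Mathlib

section
/- The Riemann zeta function at 2 satisfies ζ(2) = 3 · ∑_{k=1}^∞ 1/(k² · C(2k,k)), where C(2k,k) is the central binomial coefficient. -/
open Filter Set

noncomputable def aa (i j : ℕ) : ℝ := (i.factorial) * (j.factorial) / ((i + j + 2).factorial : ℕ)

noncomputable def gg (i j : ℕ) : ℝ := (i.factorial) * (j.factorial) / (((i:ℝ) + 1) * ((i + j + 1).factorial : ℕ))

lemma aa_nonneg (i j : ℕ) : 0 ≤ aa i j := by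
  unfold aa; positivity

lemma aa_symm (i j : ℕ) : aa i j = aa j i := by
  unfold aa
  rw [mul_comm ((i.factorial) : ℝ), add_comm (i:ℕ) j]

lemma fact_pos' (n : ℕ) : (0:ℝ) < (n.factorial : ℕ) := by
  exact_mod_cast Nat.factorial_pos n

lemma aa_eq_sub (i j : ℕ) : aa i j = gg i j - gg i (j+1) := by
  unfold aa gg
  have h1 : ((i + j + 2).factorial : ℝ) = ((i:ℝ) + (j:ℝ) + 2) * ((i + j + 1).factorial : ℕ) := by
    have : (i + j + 2).factorial = (i + j + 2) * (i + j + 1).factorial := by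
      rw [show i + j + 2 = (i + j + 1) + 1 by ring, Nat.factorial_succ]
    rw [this]; push_cast; ring
  have h2 : (((j+1)).factorial : ℝ) = ((j:ℝ) + 1) * (j.factorial : ℕ) := by
    rw [Nat.factorial_succ]; push_cast; ring
  have h3 : ((i + (j+1) + 1).factorial : ℕ) = ((i + j + 2).factorial : ℕ) := by ring_nf
  rw [h3, h2, h1]
  have hf := fact_pos' (i + j + 1)
  have hi : (0:ℝ) < (i:ℝ) + 1 := by positivity
  have hj : (0:ℝ) < (i:ℝ) + (j:ℝ) + 2 := by positivity
  field_simp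
  ring

lemma gg_tendsto (i : ℕ) : Tendsto (gg i) atTop (nhds 0) := by
  have hb : ∀ j, gg i j ≤ ((i.factorial) : ℝ) / ((j:ℝ) + 1) := by
    intro j
    unfold gg
    have hfle : ((j + 1).factorial : ℝ) ≤ ((i + j + 1).factorial : ℕ) := by
      exact_mod_cast Nat.factorial_le (by omega)
    have h2 : (((j+1)).factorial : ℝ) = ((j:ℝ) + 1) * (j.factorial : ℕ) := by
      rw [Nat.factorial_succ]; push_cast; ring
    rw [h2] at hfle
    have hjf := fact_pos' j
    have hif := fact_pos' i
    have h1 : (0:ℝ) < (i:ℝ) + 1 := by positivity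
    have hj1 : (0:ℝ) < (j:ℝ) + 1 := by positivity
    rw [div_le_div_iff₀ (by positivity) hj1]
    calc ((i.factorial) : ℝ) * (j.factorial : ℕ) * ((j:ℝ)+1)
        = ((i.factorial) : ℝ) * (((j:ℝ)+1) * (j.factorial : ℕ)) := by ring
      _ ≤ ((i.factorial) : ℝ) * ((i + j + 1).factorial : ℕ) := by
          exact mul_le_mul_of_nonneg_left hfle (le_of_lt hif)
      _ ≤ ((i.factorial) : ℝ) * (((i:ℝ)+1) * ((i + j + 1).factorial : ℕ)) := by
          refine mul_le_mul_of_nonneg_left ?_ (le_of_lt hif)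
          exact le_mul_of_one_le_left (le_of_lt (fact_pos' _)) (by linarith [Nat.cast_nonneg (α := ℝ) i])
  have h0 : ∀ j, 0 ≤ gg i j := by intro j; unfold gg; positivity
  refine squeeze_zero h0 hb ?_
  have h := (tendsto_const_div_atTop_nhds_zero_nat ((i.factorial) : ℝ)).comp
    (tendsto_add_atTop_nat 1)
  have he : ((fun n : ℕ => ((i.factorial) : ℝ) / n) ∘ fun a => a + 1)
      = fun j : ℕ => ((i.factorial) : ℝ) / ((j:ℝ) + 1) := by
    funext j; simp only [Function.comp_apply]; push_cast; ring
  rwa [he] at h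

lemma gg_zero (i : ℕ) : gg i 0 = 1 / ((i:ℝ) + 1) ^ 2 := by
  unfold gg
  have h : ((i + 0 + 1).factorial : ℝ) = ((i:ℝ) + 1) * (i.factorial : ℕ) := by
    rw [show i + 0 + 1 = i + 1 by ring, Nat.factorial_succ]; push_cast; ring
  rw [h]
  have := fact_pos' i
  have h1 : (0:ℝ) < (i:ℝ) + 1 := by positivity
  rw [Nat.factorial_zero]
  field_simp
  ring

lemma gg_diag (i : ℕ) : gg i (i+1) = aa i i := by
  unfold gg aa
  have h3 : i + (i+1) + 1 = i + i + 2 := by ring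
  rw [h3]
  have h2 : (((i+1)).factorial : ℝ) = ((i:ℝ) + 1) * (i.factorial : ℕ) := by
    rw [Nat.factorial_succ]; push_cast; ring
  rw [h2]
  have := fact_pos' i
  have h1 : (0:ℝ) < (i:ℝ) + 1 := by positivity
  have := fact_pos' (i + i + 2)
  field_simp

lemma hasSum_row (i : ℕ) : HasSum (fun j => aa i j) (1 / ((i:ℝ) + 1) ^ 2) := by
  rw [hasSum_iff_tendsto_nat_of_nonneg (fun j => aa_nonneg i j)]
  have hps : ∀ n, ∑ j ∈ Finset.range n, aa i j = gg i 0 - gg i n := by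
    intro n
    simp_rw [aa_eq_sub]
    exact Finset.sum_range_sub' (gg i) n
  simp_rw [hps, gg_zero]
  have := (gg_tendsto i)
  have : Tendsto (fun n => 1 / ((i:ℝ) + 1) ^ 2 - gg i n) atTop
      (nhds (1 / ((i:ℝ) + 1) ^ 2 - 0)) := tendsto_const_nhds.sub this
  simpa using this

lemma hasSum_tail (i : ℕ) : HasSum (fun d => aa i (i + 1 + d)) (aa i i) := by
  rw [hasSum_iff_tendsto_nat_of_nonneg (fun d => aa_nonneg i _)]
  have hps : ∀ n, ∑ d ∈ Finset.range n, aa i (i + 1 + d) = gg i (i+1) - gg i (i+1+n) := by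
    intro n
    have : ∀ d, aa i (i + 1 + d) = gg i (i+1+d) - gg i (i+1+(d+1)) := by
      intro d
      rw [aa_eq_sub]
      ring_nf
    simp_rw [this]
    exact Finset.sum_range_sub' (fun d => gg i (i+1+d)) n
  simp_rw [hps, gg_diag]
  have h2 : Tendsto (fun n : ℕ => gg i (i+1+n)) atTop (nhds 0) := by
    have := (gg_tendsto i).comp (tendsto_add_atTop_nat (i+1))
    simpa [Function.comp_def, add_comm] using this
  have : Tendsto (fun n => aa i i - gg i (i+1+n)) atTop (nhds (aa i i - 0)) :=
    tendsto_const_nhds.sub h2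
  simpa using this

lemma aa_diag_eq (k : ℕ) :
    aa k k = 1 / (((k : ℝ) + 1) ^ 2 * ((2 * (k + 1)).choose (k + 1) : ℝ)) := by
  unfold aa
  have hch := Nat.choose_mul_factorial_mul_factorial (show k + 1 ≤ 2 * (k+1) by omega)
  have h2 : 2 * (k+1) - (k+1) = k + 1 := by omega
  rw [h2] at hch
  have hch' : (((2 * (k + 1)).choose (k + 1) : ℝ)) * ((k+1).factorial : ℕ) * ((k+1).factorial : ℕ)
      = ((2 * (k+1)).factorial : ℕ) := by exact_mod_cast congrArg Nat.cast hch
  have hc : ((k + k + 2).factorial : ℕ) = ((2 * (k+1)).factorial : ℕ) := by ring_nf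
  rw [hc]
  have hkf : (((k+1)).factorial : ℝ) = ((k:ℝ) + 1) * (k.factorial : ℕ) := by
    rw [Nat.factorial_succ]; push_cast; ring
  have hchpos : (0:ℝ) < (((2 * (k + 1)).choose (k + 1) : ℕ) : ℝ) := by
    exact_mod_cast Nat.choose_pos (show k + 1 ≤ 2 * (k+1) by omega)
  have hf := fact_pos' k
  have h1 : (0:ℝ) < (k:ℝ) + 1 := by positivity
  have h2f := fact_pos' (2 * (k+1))
  rw [div_eq_div_iff (by positivity) (by positivity)]
  rw [hkf] at hch'
  linear_combination hch'

lemma summable_inv_sq : Summable (fun i : ℕ => 1 / ((i:ℝ) + 1) ^ 2) := by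
  have := Real.summable_one_div_nat_pow.mpr (show 1 < 2 by norm_num)
  have h := (summable_nat_add_iff 1).mpr this
  simpa using h

lemma summable_aa : Summable (fun p : ℕ × ℕ => aa p.1 p.2) := by
  apply (summable_prod_of_nonneg (fun p => aa_nonneg p.1 p.2)).mpr
  constructor
  · intro i; exact (hasSum_row i).summable
  · apply Summable.congr summable_inv_sq
    intro i
    exact ((hasSum_row i).tsum_eq).symm

def eD : ℕ ≃ {p : ℕ × ℕ // p.1 = p.2} where
  toFun n := ⟨(n, n), rfl⟩
  invFun p := p.1.1
  left_inv n := rfl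
  right_inv := by
    rintro ⟨⟨a, b⟩, h⟩
    simp only at h
    subst h
    rfl

def eA : ℕ × ℕ ≃ {p : ℕ × ℕ // p.2 < p.1} where
  toFun q := ⟨(q.1 + 1 + q.2, q.1), by omega⟩
  invFun p := (p.1.2, p.1.1 - p.1.2 - 1)
  left_inv := by
    rintro ⟨j, d⟩
    show ((j : ℕ), j + 1 + d - j - 1) = (j, d)
    simp only [Prod.mk.injEq]
    exact ⟨trivial, by omega⟩
  right_inv := by
    rintro ⟨⟨a, b⟩, h⟩
    have h' : b < a := h
    apply Subtype.ext
    show ((b + 1 + (a - b - 1) : ℕ), b) = (a, b)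
    simp only [Prod.mk.injEq]
    exact ⟨by omega, trivial⟩

def eB : ℕ × ℕ ≃ {p : ℕ × ℕ // p.1 < p.2} where
  toFun q := ⟨(q.1, q.1 + 1 + q.2), by omega⟩
  invFun p := (p.1.1, p.1.2 - p.1.1 - 1)
  left_inv := by
    rintro ⟨j, d⟩
    show ((j : ℕ), j + 1 + d - j - 1) = (j, d)
    simp only [Prod.mk.injEq]
    exact ⟨trivial, by omega⟩
  right_inv := by
    rintro ⟨⟨a, b⟩, h⟩
    have h' : a < b := h
    apply Subtype.ext
    show ((a : ℕ), a + 1 + (b - a - 1)) = (a, b)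
    simp only [Prod.mk.injEq]
    exact ⟨trivial, by omega⟩

lemma indicator_split (p : ℕ × ℕ) :
    aa p.1 p.2 =
      Set.indicator {q : ℕ × ℕ | q.2 < q.1} (fun q => aa q.1 q.2) p
        + Set.indicator {q : ℕ × ℕ | q.1 < q.2} (fun q => aa q.1 q.2) p
        + Set.indicator {q : ℕ × ℕ | q.1 = q.2} (fun q => aa q.1 q.2) p := by
  rcases lt_trichotomy p.1 p.2 with h | h | h
  · rw [Set.indicator_of_notMem (by simp only [Set.mem_setOf_eq]; omega),
      Set.indicator_of_mem (by simpa using h),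
      Set.indicator_of_notMem (by simp only [Set.mem_setOf_eq]; omega)]
    ring
  · rw [Set.indicator_of_notMem (by simp only [Set.mem_setOf_eq]; omega),
      Set.indicator_of_notMem (by simp only [Set.mem_setOf_eq]; omega),
      Set.indicator_of_mem (by simpa using h)]
    ring
  · rw [Set.indicator_of_mem (by simpa using h),
      Set.indicator_of_notMem (by simp only [Set.mem_setOf_eq]; omega),
      Set.indicator_of_notMem (by simp only [Set.mem_setOf_eq]; omega)]
    ring

lemma tsum_A : ∑' x : {p : ℕ × ℕ // p.2 < p.1}, aa x.1.1 x.1.2 = ∑' n : ℕ, aa n n := by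
  have key : ∀ q : ℕ × ℕ, aa (q.1 + 1 + q.2) q.1 = aa q.1 (q.1 + 1 + q.2) := fun q =>
    aa_symm _ _
  rw [← Equiv.tsum_eq eA (fun x : {p : ℕ × ℕ // p.2 < p.1} => aa x.1.1 x.1.2)]
  have hs : Summable fun q : ℕ × ℕ => aa (q.1 + 1 + q.2) q.1 := by
    have : Summable fun x : {p : ℕ × ℕ // p.2 < p.1} => aa x.1.1 x.1.2 :=
      summable_aa.subtype _
    exact (Equiv.summable_iff eA (f := fun x : {p : ℕ × ℕ // p.2 < p.1} => aa x.1.1 x.1.2)).mpr this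
  have : ∑' q : ℕ × ℕ, aa (q.1 + 1 + q.2) q.1 = ∑' (j : ℕ) (d : ℕ), aa (j + 1 + d) j :=
    Summable.tsum_prod' hs (fun j => by
      apply Summable.congr (hasSum_tail j).summable
      intro d
      exact (aa_symm j (j + 1 + d)).symm ▸ (aa_symm (j + 1 + d) j))
  calc ∑' q : ℕ × ℕ, aa ((eA q).1.1) ((eA q).1.2)
      = ∑' q : ℕ × ℕ, aa (q.1 + 1 + q.2) q.1 := rfl
    _ = ∑' (j : ℕ) (d : ℕ), aa (j + 1 + d) j := this
    _ = ∑' j : ℕ, aa j j := by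
        apply tsum_congr
        intro j
        have h1 : (fun d => aa (j + 1 + d) j) = fun d => aa j (j + 1 + d) := by
          funext d; exact aa_symm _ _
        rw [h1]
        exact (hasSum_tail j).tsum_eq

lemma tsum_B : ∑' x : {p : ℕ × ℕ // p.1 < p.2}, aa x.1.1 x.1.2 = ∑' n : ℕ, aa n n := by
  rw [← Equiv.tsum_eq eB (fun x : {p : ℕ × ℕ // p.1 < p.2} => aa x.1.1 x.1.2)]
  have hs : Summable fun q : ℕ × ℕ => aa q.1 (q.1 + 1 + q.2) := by
    have : Summable fun x : {p : ℕ × ℕ // p.1 < p.2} => aa x.1.1 x.1.2 :=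
      summable_aa.subtype _
    exact (Equiv.summable_iff eB (f := fun x : {p : ℕ × ℕ // p.1 < p.2} => aa x.1.1 x.1.2)).mpr
      this
  have : ∑' q : ℕ × ℕ, aa q.1 (q.1 + 1 + q.2) = ∑' (j : ℕ) (d : ℕ), aa j (j + 1 + d) :=
    Summable.tsum_prod' hs (fun j => (hasSum_tail j).summable)
  calc ∑' q : ℕ × ℕ, aa ((eB q).1.1) ((eB q).1.2)
      = ∑' q : ℕ × ℕ, aa q.1 (q.1 + 1 + q.2) := rfl
    _ = ∑' (j : ℕ) (d : ℕ), aa j (j + 1 + d) := this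
    _ = ∑' j : ℕ, aa j j := tsum_congr fun j => (hasSum_tail j).tsum_eq

lemma tsum_D : ∑' x : {p : ℕ × ℕ // p.1 = p.2}, aa x.1.1 x.1.2 = ∑' n : ℕ, aa n n := by
  rw [← Equiv.tsum_eq eD (fun x : {p : ℕ × ℕ // p.1 = p.2} => aa x.1.1 x.1.2)]
  rfl

theorem zeta_two_central_binom :
    ∑' n : ℕ, 1 / ((n : ℝ) + 1) ^ 2 =
      3 * ∑' k : ℕ, 1 / (((k : ℝ) + 1) ^ 2 * ((2 * (k + 1)).choose (k + 1) : ℝ)) := by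
  have hL : ∑' n : ℕ, 1 / ((n : ℝ) + 1) ^ 2 = ∑' p : ℕ × ℕ, aa p.1 p.2 := by
    rw [Summable.tsum_prod' summable_aa (fun i => (hasSum_row i).summable)]
    exact (tsum_congr fun i => (hasSum_row i).tsum_eq).symm
  have hsplit : ∑' p : ℕ × ℕ, aa p.1 p.2 =
      (∑' x : {p : ℕ × ℕ // p.2 < p.1}, aa x.1.1 x.1.2)
        + (∑' x : {p : ℕ × ℕ // p.1 < p.2}, aa x.1.1 x.1.2)
        + (∑' x : {p : ℕ × ℕ // p.1 = p.2}, aa x.1.1 x.1.2) := by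
    have hiA := summable_aa.indicator {q : ℕ × ℕ | q.2 < q.1}
    have hiB := summable_aa.indicator {q : ℕ × ℕ | q.1 < q.2}
    have hiD := summable_aa.indicator {q : ℕ × ℕ | q.1 = q.2}
    have h1 : ∑' p : ℕ × ℕ, aa p.1 p.2 =
        ∑' p : ℕ × ℕ,
          (Set.indicator {q : ℕ × ℕ | q.2 < q.1} (fun q => aa q.1 q.2) p
            + Set.indicator {q : ℕ × ℕ | q.1 < q.2} (fun q => aa q.1 q.2) p
            + Set.indicator {q : ℕ × ℕ | q.1 = q.2} (fun q => aa q.1 q.2) p) :=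
      tsum_congr indicator_split
    rw [h1, Summable.tsum_add (hiA.add hiB) hiD, Summable.tsum_add hiA hiB,
      ← tsum_subtype, ← tsum_subtype, ← tsum_subtype]
    rfl
  rw [hL, hsplit, tsum_A, tsum_B, tsum_D,
    tsum_congr aa_diag_eq]
  ring
end

section
/- The Riemann zeta function at 3 satisfies ζ(3) = (5/2) · ∑_{k=1}^∞ (-1)^{k+1}/(k³ · C(2k,k)). -/
open Finset Filter Topology

noncomputable def zEps (n k : ℕ) : ℝ :=
  (-1 : ℝ) ^ (k + 1) * ((k.factorial : ℝ)) ^ 2 * ((n - k).factorial : ℝ) /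
    (2 * ((k : ℝ)) ^ 3 * ((n + k).factorial : ℝ))

noncomputable def zF (n k : ℕ) : ℝ :=
  (-1 : ℝ) ^ (k + 1) * ((k.factorial : ℝ)) ^ 2 * ((n - k).factorial : ℝ) /
    (((n : ℝ)) ^ 2 * ((k : ℝ)) ^ 2 * ((n + k - 1).factorial : ℝ))

noncomputable def zE (N : ℕ) : ℝ := ∑ k ∈ Finset.range N, zEps N (k + 1)

lemma zDiff (k j : ℕ) :
    zEps (k + j + 2) (k + 1) - zEps (k + j + 1) (k + 1)
      = zF (k + j + 2) (k + 2) - zF (k + j + 2) (k + 1) := by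
  have h1 : k + j + 2 - (k + 1) = j + 1 := by omega
  have h2 : k + j + 1 - (k + 1) = j := by omega
  have h3 : k + j + 2 + (k + 1) = 2 * k + j + 3 := by omega
  have h4 : k + j + 1 + (k + 1) = 2 * k + j + 2 := by omega
  have h5 : k + j + 2 - (k + 2) = j := by omega
  have h6 : k + j + 2 + (k + 2) - 1 = 2 * k + j + 3 := by omega
  have h7 : k + j + 2 + (k + 1) - 1 = 2 * k + j + 2 := by omega
  have e1 : (2 * k + j + 3).factorial = (2 * k + j + 3) * (2 * k + j + 2).factorial := by
    rw [show 2 * k + j + 3 = (2 * k + j + 2) + 1 from rfl, Nat.factorial_succ]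
  have e2 : (j + 1).factorial = (j + 1) * j.factorial := Nat.factorial_succ j
  have e3 : (k + 2).factorial = (k + 2) * (k + 1).factorial := Nat.factorial_succ (k + 1)
  have hfk : ((k + 1).factorial : ℝ) ≠ 0 := by positivity
  have hfj : ((j).factorial : ℝ) ≠ 0 := by positivity
  have hfc : (((2 * k + j + 2).factorial : ℕ) : ℝ) ≠ 0 := by positivity
  simp only [zEps, zF, h1, h2, h3, h4, h5, h6, h7, e1, e2, e3]
  push_cast
  have hk1 : ((k : ℝ) + 1) ≠ 0 := by positivity
  have hk2 : ((k : ℝ) + 2) ≠ 0 := by positivity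
  have hn : ((k : ℝ) + j + 2) ≠ 0 := by positivity
  have hc : (2 * (k : ℝ) + j + 3) ≠ 0 := by positivity
  field_simp
  ring

lemma zChoose_ge (M r : ℕ) : M + 1 ≤ (M + r + 1).choose (r + 1) := by
  induction r with
  | zero => simp [Nat.choose_one_right]
  | succ r ih =>
      have : (M + (r + 1) + 1).choose (r + 1 + 1)
          = (M + r + 1).choose (r + 1) + (M + r + 1).choose (r + 2) := by
        rw [show M + (r + 1) + 1 = (M + r + 1) + 1 from rfl]
        exact Nat.choose_succ_succ (M + r + 1) (r + 1)
      omega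

lemma zEps_bound (k j : ℕ) :
    |zEps (k + j + 1) (k + 1)| ≤ 1 / ((((k:ℝ) + j + 2)) * (((k:ℝ) + 1) * ((k:ℝ) + 2))) := by
  have h1 : k + j + 1 - (k + 1) = j := by omega
  have h3 : k + j + 1 + (k + 1) = 2 * k + j + 2 := by omega
  have habs : |zEps (k + j + 1) (k + 1)|
      = ((k + 1).factorial : ℝ) ^ 2 * (j.factorial : ℝ) /
        (2 * ((k : ℝ) + 1) ^ 3 * ((2 * k + j + 2).factorial : ℝ)) := by
    simp only [zEps, h1, h3]
    rw [abs_div, abs_mul, abs_mul, abs_pow, abs_neg, abs_one, one_pow, one_mul]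
    push_cast
    rw [abs_of_nonneg (by positivity : (0:ℝ) ≤ ((k + 1).factorial : ℝ) ^ 2),
      abs_of_nonneg (by positivity : (0:ℝ) ≤ (j.factorial : ℝ)),
      abs_of_nonneg (by positivity : (0:ℝ) ≤ 2 * ((k : ℝ) + 1) ^ 3 * ((2 * k + j + 2).factorial : ℝ))]
  rw [habs]
  rw [div_le_div_iff₀ (by positivity) (by positivity)]
  -- reduce to a ℕ inequality
  have hnat : (k + 1).factorial ^ 2 * j.factorial * ((k + j + 2) * ((k + 1) * (k + 2)))
      ≤ 2 * (k + 1) ^ 3 * (2 * k + j + 2).factorial := by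
    have f1 : (k + 1).factorial * j.factorial ≤ (k + j + 1).factorial := by
      have h := Nat.choose_mul_factorial_mul_factorial (show k + 1 ≤ k + j + 1 by omega)
      have hpos : 1 ≤ (k + j + 1).choose (k + 1) := Nat.choose_pos (by omega)
      have h2 : k + j + 1 - (k + 1) = j := by omega
      rw [h2] at h
      calc (k + 1).factorial * j.factorial
          ≤ (k + j + 1).choose (k + 1) * ((k + 1).factorial * j.factorial) :=
            Nat.le_mul_of_pos_left _ hpos
        _ = (k + j + 1).factorial := by rw [← h]; ring
    have f2 : (k + j + 2) * ((k + 1).factorial * (k + j + 1).factorial)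
        ≤ (2 * k + j + 2).factorial := by
      have h := Nat.choose_mul_factorial_mul_factorial (show k + 1 ≤ 2 * k + j + 2 by omega)
      have h2 : 2 * k + j + 2 - (k + 1) = k + j + 1 := by omega
      rw [h2] at h
      have hge : k + j + 2 ≤ (2 * k + j + 2).choose (k + 1) := by
        have := zChoose_ge (k + j + 1) k
        have he : k + j + 1 + k + 1 = 2 * k + j + 2 := by omega
        rw [he] at this
        omega
      calc (k + j + 2) * ((k + 1).factorial * (k + j + 1).factorial)
          ≤ (2 * k + j + 2).choose (k + 1) * ((k + 1).factorial * (k + j + 1).factorial) :=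
            Nat.mul_le_mul_right _ hge
        _ = (2 * k + j + 2).factorial := by rw [← h]; ring
    have g1 : (k + 1) * (k + 2) ≤ 2 * (k + 1) ^ 2 := by nlinarith
    calc (k + 1).factorial ^ 2 * j.factorial * ((k + j + 2) * ((k + 1) * (k + 2)))
        ≤ (k + 1).factorial ^ 2 * j.factorial * ((k + j + 2) * (2 * (k + 1) ^ 2)) := by
          exact Nat.mul_le_mul_left _ (Nat.mul_le_mul_left _ g1)
      _ = 2 * (k + 1) ^ 2 * ((k + j + 2) * ((k + 1).factorial * ((k + 1).factorial * j.factorial))) := by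
          ring
      _ ≤ 2 * (k + 1) ^ 2 * ((k + j + 2) * ((k + 1).factorial * (k + j + 1).factorial)) := by
          exact Nat.mul_le_mul_left _ (Nat.mul_le_mul_left _ (Nat.mul_le_mul_left _ f1))
      _ ≤ 2 * (k + 1) ^ 2 * (2 * k + j + 2).factorial := Nat.mul_le_mul_left _ f2
      _ ≤ 2 * (k + 1) ^ 3 * (2 * k + j + 2).factorial := by
          have : (k + 1) ^ 2 ≤ (k + 1) ^ 3 := Nat.pow_le_pow_right (by omega) (by omega)
          exact Nat.mul_le_mul_right _ (by omega)
  calc ((k + 1).factorial : ℝ) ^ 2 * (j.factorial : ℝ) * (((k:ℝ) + j + 2) * (((k:ℝ) + 1) * ((k:ℝ) + 2)))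
      = (((k + 1).factorial ^ 2 * j.factorial * ((k + j + 2) * ((k + 1) * (k + 2))) : ℕ) : ℝ) := by
        push_cast; ring
    _ ≤ ((2 * (k + 1) ^ 3 * (2 * k + j + 2).factorial : ℕ) : ℝ) := by exact_mod_cast hnat
    _ = 1 * (2 * ((k : ℝ) + 1) ^ 3 * ((2 * k + j + 2).factorial : ℝ)) := by push_cast; ring

lemma zStep (N : ℕ) :
    zE (N + 1) - zE N
      = 5 / 2 * ((-1 : ℝ) ^ N / (((N : ℝ) + 1) ^ 3 * ((2 * (N + 1)).choose (N + 1) : ℝ)))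
        - 1 / ((N : ℝ) + 1) ^ 3 := by
  have hE : zE (N + 1) - zE N
      = zEps (N + 1) (N + 1) + ∑ k ∈ Finset.range N, (zEps (N + 1) (k + 1) - zEps N (k + 1)) := by
    simp only [zE, Finset.sum_range_succ, Finset.sum_sub_distrib]
    ring
  have hsum : ∑ k ∈ Finset.range N, (zEps (N + 1) (k + 1) - zEps N (k + 1))
      = zF (N + 1) (N + 1) - zF (N + 1) 1 := by
    have : ∀ k ∈ Finset.range N, zEps (N + 1) (k + 1) - zEps N (k + 1)
        = zF (N + 1) (k + 2) - zF (N + 1) (k + 1) := by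
      intro k hk
      simp only [Finset.mem_range] at hk
      obtain ⟨j, rfl⟩ : ∃ j, N = k + j + 1 := ⟨N - k - 1, by omega⟩
      have h2 : k + j + 1 + 1 = k + j + 2 := rfl
      rw [h2]
      exact zDiff k j
    rw [Finset.sum_congr rfl this]
    have := Finset.sum_range_sub (fun i => zF (N + 1) (i + 1)) N
    simpa using this
  rw [hE, hsum]
  -- now pure algebra
  have h1 : N + 1 - (N + 1) = 0 := by omega
  have h3 : N + 1 + (N + 1) = 2 * N + 2 := by omega
  have h6 : N + 1 + (N + 1) - 1 = 2 * N + 1 := by omega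
  have h7 : N + 1 - 1 = N := by omega
  have h8 : N + 1 + 1 - 1 = N + 1 := by omega
  have hC : ((2 * (N + 1)).choose (N + 1) : ℝ) * ((N + 1).factorial : ℝ) * ((N + 1).factorial : ℝ)
      = ((2 * N + 2).factorial : ℝ) := by
    have h := Nat.choose_mul_factorial_mul_factorial (show N + 1 ≤ 2 * (N + 1) by omega)
    have h2 : 2 * (N + 1) - (N + 1) = N + 1 := by omega
    rw [h2] at h
    have h3' : 2 * (N + 1) = 2 * N + 2 := by omega
    rw [h3'] at h
    exact_mod_cast h
  have e1 : (2 * N + 2).factorial = (2 * N + 2) * (2 * N + 1).factorial := by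
    rw [show 2 * N + 2 = (2 * N + 1) + 1 from rfl, Nat.factorial_succ]
  have e2 : (N + 1).factorial = (N + 1) * N.factorial := Nat.factorial_succ N
  have hCpos : (0 : ℝ) < ((2 * (N + 1)).choose (N + 1) : ℝ) := by
    exact_mod_cast Nat.choose_pos (show N + 1 ≤ 2 * (N + 1) by omega)
  have hfN : ((N.factorial : ℕ) : ℝ) ≠ 0 := by positivity
  have hf2 : (((2 * N + 1).factorial : ℕ) : ℝ) ≠ 0 := by positivity
  have hN1 : ((N : ℝ) + 1) ≠ 0 := by positivity
  rw [e1] at hC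
  rw [e2] at hC
  push_cast at hC
  have hCval : ((2 * (N + 1)).choose (N + 1) : ℝ)
      = (2 * (N : ℝ) + 2) * ((2 * N + 1).factorial : ℝ) / ((((N : ℝ) + 1) * (N.factorial : ℝ)) ^ 2) := by
    rw [eq_div_iff (by positivity)]
    linear_combination hC
  simp only [zEps, zF, h1, h3, h6, h7, h8, e1, e2, Nat.factorial_zero]
  rw [hCval]
  push_cast
  field_simp
  ring

lemma zFinId (N : ℕ) :
    ∑ n ∈ Finset.range N, 1 / ((n : ℝ) + 1) ^ 3
      = 5 / 2 * ∑ k ∈ Finset.range N,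
          ((-1 : ℝ) ^ k / (((k : ℝ) + 1) ^ 3 * ((2 * (k + 1)).choose (k + 1) : ℝ)))
        - zE N := by
  induction N with
  | zero => simp [zE]
  | succ N ih =>
      rw [Finset.sum_range_succ, Finset.sum_range_succ, ih]
      have := zStep N
      have hE : zE (N + 1) = zE N + (5 / 2 * ((-1 : ℝ) ^ N / (((N : ℝ) + 1) ^ 3 * ((2 * (N + 1)).choose (N + 1) : ℝ)))
        - 1 / ((N : ℝ) + 1) ^ 3) := by linarith
      rw [hE]
      ring

lemma zE_tendsto : Tendsto zE atTop (𝓝 0) := by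
  have hb : ∀ N : ℕ, |zE N| ≤ 1 / ((N : ℝ) + 1) := by
    intro N
    have h1 : |zE N| ≤ ∑ k ∈ Finset.range N, |zEps N (k + 1)| := by
      exact Finset.abs_sum_le_sum_abs _ _
    have h2 : ∑ k ∈ Finset.range N, |zEps N (k + 1)|
        ≤ ∑ k ∈ Finset.range N, 1 / (((N : ℝ) + 1) * (((k : ℝ) + 1) * ((k : ℝ) + 2))) := by
      apply Finset.sum_le_sum
      intro k hk
      simp only [Finset.mem_range] at hk
      obtain ⟨j, rfl⟩ : ∃ j, N = k + j + 1 := ⟨N - k - 1, by omega⟩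
      have := zEps_bound k j
      calc |zEps (k + j + 1) (k + 1)| ≤ 1 / ((((k:ℝ) + j + 2)) * (((k:ℝ) + 1) * ((k:ℝ) + 2))) := this
        _ = 1 / ((((k + j + 1 : ℕ) : ℝ) + 1) * (((k : ℝ) + 1) * ((k : ℝ) + 2))) := by push_cast; ring_nf
    have h3 : ∑ k ∈ Finset.range N, 1 / (((N : ℝ) + 1) * (((k : ℝ) + 1) * ((k : ℝ) + 2)))
        ≤ 1 / ((N : ℝ) + 1) := by
      have ht : ∑ k ∈ Finset.range N, (1 / ((k : ℝ) + 1) - 1 / ((k : ℝ) + 2))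
          = 1 - 1 / ((N : ℝ) + 1) := by
        have := Finset.sum_range_sub (fun i => -(1 / ((i : ℝ) + 1))) N
        have h' : ∀ k : ℕ, -(1 / (((k + 1 : ℕ) : ℝ) + 1)) - -(1 / ((k : ℝ) + 1))
            = 1 / ((k : ℝ) + 1) - 1 / ((k : ℝ) + 2) := by
          intro k; push_cast; ring
        calc ∑ k ∈ Finset.range N, (1 / ((k : ℝ) + 1) - 1 / ((k : ℝ) + 2))
            = ∑ k ∈ Finset.range N, (-(1 / (((k + 1 : ℕ) : ℝ) + 1)) - -(1 / ((k : ℝ) + 1))) := by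
              refine Finset.sum_congr rfl fun k _ => (h' k).symm
          _ = -(1 / ((N : ℝ) + 1)) - -(1 / ((0 : ℕ) + 1)) := this
          _ = 1 - 1 / ((N : ℝ) + 1) := by push_cast; ring
      have heq : ∑ k ∈ Finset.range N, 1 / (((N : ℝ) + 1) * (((k : ℝ) + 1) * ((k : ℝ) + 2)))
          = (1 / ((N : ℝ) + 1)) * ∑ k ∈ Finset.range N, (1 / ((k : ℝ) + 1) - 1 / ((k : ℝ) + 2)) := by
        rw [Finset.mul_sum]
        refine Finset.sum_congr rfl fun k _ => ?_
        have hk1 : ((k : ℝ) + 1) ≠ 0 := by positivity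
        have hk2 : ((k : ℝ) + 2) ≠ 0 := by positivity
        have hN : ((N : ℝ) + 1) ≠ 0 := by positivity
        field_simp
        ring
      rw [heq, ht]
      have hN : (0 : ℝ) < (N : ℝ) + 1 := by positivity
      have h4 : (0 : ℝ) ≤ 1 / ((N : ℝ) + 1) := by positivity
      nlinarith
    linarith
  have ht : Tendsto (fun N : ℕ => 1 / ((N : ℝ) + 1)) atTop (𝓝 0) :=
    tendsto_one_div_add_atTop_nhds_zero_nat
  exact squeeze_zero_norm hb ht

theorem zeta_three_central_binom :
    ∑' n : ℕ, 1 / ((n : ℝ) + 1) ^ 3 =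
      (5 / 2) * ∑' k : ℕ, (-1 : ℝ) ^ k / (((k : ℝ) + 1) ^ 3 * ((2 * (k + 1)).choose (k + 1) : ℝ)) := by
  set B : ℕ → ℝ := fun n => 1 / ((n : ℝ) + 1) ^ 3 with hBdef
  set A : ℕ → ℝ := fun k => (-1 : ℝ) ^ k / (((k : ℝ) + 1) ^ 3 * ((2 * (k + 1)).choose (k + 1) : ℝ)) with hAdef
  have hB : Summable B := by
    have h := (Real.summable_one_div_nat_pow (p := 3)).2 (by norm_num)
    have h2 := (summable_nat_add_iff 1).2 h
    refine h2.congr fun n => ?_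
    push_cast
    rfl
  have hA : Summable A := by
    refine Summable.of_norm_bounded hB fun k => ?_
    have hC1 : (1 : ℝ) ≤ ((2 * (k + 1)).choose (k + 1) : ℝ) := by
      exact_mod_cast Nat.one_le_iff_ne_zero.2 (Nat.choose_pos (show k + 1 ≤ 2 * (k + 1) by omega)).ne'
    have hk : (0 : ℝ) < ((k : ℝ) + 1) ^ 3 := by positivity
    have : ‖A k‖ = 1 / (((k : ℝ) + 1) ^ 3 * ((2 * (k + 1)).choose (k + 1) : ℝ)) := by
      simp only [hAdef, norm_div, norm_pow, norm_neg, norm_one, one_pow]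
      rw [Real.norm_eq_abs, abs_of_pos (by nlinarith)]
    rw [this, hBdef]
    rw [div_le_div_iff₀ (by nlinarith) hk]
    nlinarith
  have h1 : Tendsto (fun N => ∑ n ∈ Finset.range N, B n) atTop (𝓝 (∑' n, B n)) :=
    hB.hasSum.tendsto_sum_nat
  have h2 : Tendsto (fun N => ∑ k ∈ Finset.range N, A k) atTop (𝓝 (∑' k, A k)) :=
    hA.hasSum.tendsto_sum_nat
  have h4 : Tendsto (fun N => 5 / 2 * ∑ k ∈ Finset.range N, A k - zE N) atTop
      (𝓝 (5 / 2 * (∑' k, A k) - 0)) := (h2.const_mul _).sub zE_tendsto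
  have h5 : Tendsto (fun N => ∑ n ∈ Finset.range N, B n) atTop (𝓝 (5 / 2 * (∑' k, A k) - 0)) := by
    refine h4.congr fun N => ?_
    exact (zFinId N).symm
  have := tendsto_nhds_unique h1 h5
  rw [this, sub_zero]
end

section
/- ∑_{k=1}^∞ 1/C(2k,k) = (2π√3 + 9)/27. -/
open Real MeasureTheory intervalIntegral Set

lemma beta_nat (m : ℕ) : ∀ n : ℕ, ∫ x in (0:ℝ)..1, x ^ n * (1 - x) ^ m
    = (n.factorial * m.factorial : ℝ) / (n + m + 1).factorial := by
  induction m with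
  | zero =>
    intro n
    have hn : ((n:ℝ) + 1) ≠ 0 := by positivity
    have hf : ((n.factorial : ℝ)) ≠ 0 := by positivity
    simp only [pow_zero, mul_one, integral_pow, one_pow, Nat.factorial]
    rw [zero_pow (by omega)]
    push_cast
    field_simp
    norm_num
  | succ m ih =>
    intro n
    have hd : ∀ x ∈ Set.uIcc (0:ℝ) 1, HasDerivAt (fun y : ℝ => y ^ (n+1) * (1-y)^(m+1))
        (((n:ℝ)+1) * x^n * (1-x)^(m+1) - ((m:ℝ)+1) * (x^(n+1) * (1-x)^m)) x := by
      intro x _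
      have h1 : HasDerivAt (fun y : ℝ => y ^ (n+1)) (((n:ℝ)+1) * x ^ n) x := by
        simpa using hasDerivAt_pow (n+1) x
      have h2 : HasDerivAt (fun y : ℝ => (1-y) ^ (m+1)) (-(((m:ℝ)+1) * (1-x)^m)) x := by
        have hb : HasDerivAt (fun y : ℝ => 1 - y) (-1) x := (hasDerivAt_id x).const_sub 1
        have := (hasDerivAt_pow (m+1) (1-x)).comp x hb
        simp only [Function.comp_def] at this
        exact this.congr_deriv (by push_cast; ring)
      have := h1.mul h2
      refine this.congr_deriv ?_
      push_cast
      ring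
    have hint : IntervalIntegrable (fun x : ℝ =>
        ((n:ℝ)+1) * x^n * (1-x)^(m+1) - ((m:ℝ)+1) * (x^(n+1) * (1-x)^m)) volume 0 1 :=
      (Continuous.intervalIntegrable (by continuity) _ _)
    have key := integral_eq_sub_of_hasDerivAt hd hint
    simp only [one_pow, sub_self, zero_pow (Nat.succ_ne_zero m), mul_zero, zero_pow
      (Nat.succ_ne_zero n), zero_mul, sub_zero] at key
    rw [intervalIntegral.integral_sub ((Continuous.intervalIntegrable (by continuity) _ _))
      ((Continuous.intervalIntegrable (by continuity) _ _))] at key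
    simp_rw [mul_assoc] at key
    rw [intervalIntegral.integral_const_mul, intervalIntegral.integral_const_mul] at key
    have e1 : ((n:ℝ)+1) * ∫ x in (0:ℝ)..1, x^n*(1-x)^(m+1)
        = ((m:ℝ)+1) * ∫ x in (0:ℝ)..1, x^(n+1)*(1-x)^m := by linarith [key]
    rw [ih (n+1)] at e1
    have hn : ((n:ℝ) + 1) ≠ 0 := by positivity
    have h2 : ((n + (m+1) + 1).factorial : ℝ) ≠ 0 := by positivity
    have hfe : (n + 1 + m + 1) = n + (m+1) + 1 := by omega
    rw [hfe] at e1
    have : (∫ x in (0:ℝ)..1, x^n*(1-x)^(m+1))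
        = ((m:ℝ)+1) * ((n+1).factorial * m.factorial / (n + (m+1) + 1).factorial) / ((n:ℝ)+1) := by
      field_simp at e1 ⊢
      linarith [e1]
    rw [this, Nat.factorial_succ n, Nat.factorial_succ m]
    push_cast
    field_simp

lemma term_int (k : ℕ) :
    ∫ x in (0:ℝ)..1, (2*((k:ℝ)+1)+1) * (x*(1-x))^(k+1)
      = 1 / (((2*(k+1)).choose (k+1) : ℝ)) := by
  rw [intervalIntegral.integral_const_mul]
  simp_rw [mul_pow]
  rw [beta_nat (k+1) (k+1)]
  have hc := Nat.choose_mul_factorial_mul_factorial (show k+1 ≤ 2*(k+1) by omega)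
  rw [show 2*(k+1) - (k+1) = k+1 by omega] at hc
  have h1 : ((2*(k+1)).choose (k+1) : ℝ) * (k+1).factorial * (k+1).factorial
      = (2*(k+1)).factorial := by exact_mod_cast congrArg (Nat.cast : ℕ → ℝ) hc
  have h2 : (((k+1) + (k+1) + 1).factorial : ℝ) = (2*((k:ℝ)+1)+1) * (2*(k+1)).factorial := by
    rw [show (k+1)+(k+1)+1 = (2*(k+1)) + 1 by ring, Nat.factorial_succ]
    push_cast; ring
  have hC : ((2*(k+1)).choose (k+1) : ℝ) ≠ 0 := by
    exact_mod_cast (Nat.choose_pos (show k+1 ≤ 2*(k+1) by omega)).ne'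
  have hfac : ((2*(k+1)).factorial : ℝ) ≠ 0 := by positivity
  have h3 : (2*((k:ℝ)+1)+1) ≠ 0 := by positivity
  rw [h2]
  field_simp
  linear_combination h1

lemma sum_eval {t : ℝ} (h0 : 0 ≤ t) (h1 : t < 1) :
    HasSum (fun k : ℕ => (2*((k:ℝ)+1)+1) * t^(k+1))
      (3*t/(1-t) + 2*t^2/(1-t)^2) := by
  have ht : 1 - t ≠ 0 := by linarith
  have hnorm : ‖t‖ < 1 := by rwa [Real.norm_eq_abs, abs_of_nonneg h0]
  have hg : HasSum (fun k : ℕ => t^k) (1/(1-t)) := by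
    simpa [one_div] using hasSum_geometric_of_norm_lt_one hnorm
  have hk : HasSum (fun k : ℕ => (k:ℝ) * t^k) (t/(1-t)^2) :=
    hasSum_coe_mul_geometric_of_norm_lt_one hnorm
  have h := ((hk.mul_left 2).add (hg.mul_left 3)).mul_left t
  convert h using 1
  · rfl
  · funext k; rw [pow_succ]; ring
  · field_simp
    ring

noncomputable def gfun (x : ℝ) : ℝ :=
  3*(x*(1-x))/(1-x*(1-x)) + 2*(x*(1-x))^2/(1-x*(1-x))^2

lemma denom_ne (x : ℝ) : 1 - x*(1-x) ≠ 0 := by nlinarith [sq_nonneg (x - 1/2)]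

lemma gfun_cont : Continuous gfun := by
  apply Continuous.add
  · exact (continuous_const.mul (continuous_id.mul (continuous_const.sub continuous_id))).div
      (continuous_const.sub (continuous_id.mul (continuous_const.sub continuous_id))) denom_ne
  · exact (continuous_const.mul ((continuous_id.mul (continuous_const.sub continuous_id)).pow 2)).div
      ((continuous_const.sub (continuous_id.mul (continuous_const.sub continuous_id))).pow 2)
      (fun x => pow_ne_zero 2 (denom_ne x))

noncomputable def Ffun (x : ℝ) : ℝ :=
  2*Real.sqrt 3/9 * Real.arctan ((2*x-1)/Real.sqrt 3) + (4*x-2)/(3*(x^2-x+1)) - x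

lemma sqrt3_pos : (0:ℝ) < Real.sqrt 3 := Real.sqrt_pos.2 (by norm_num)

lemma Ffun_deriv (x : ℝ) : HasDerivAt Ffun (gfun x) x := by
  have hs : Real.sqrt 3 ≠ 0 := sqrt3_pos.ne'
  have hs2 : (Real.sqrt 3)^2 = 3 := Real.sq_sqrt (by norm_num)
  have hD : x^2 - x + 1 ≠ 0 := by nlinarith [sq_nonneg (x - 1/2)]
  have hD3 : 3*(x^2 - x + 1) ≠ 0 := by
    intro h; exact hD (by linarith [h])
  have hlin : HasDerivAt (fun y : ℝ => (2*y-1)/Real.sqrt 3) (2/Real.sqrt 3) x := by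
    simpa using (((hasDerivAt_id x).const_mul 2).sub_const 1).div_const (Real.sqrt 3)
  have harc : HasDerivAt (fun y : ℝ => Real.arctan ((2*y-1)/Real.sqrt 3))
      (1 / (1 + ((2*x-1)/Real.sqrt 3)^2) * (2/Real.sqrt 3)) x :=
    (Real.hasDerivAt_arctan _).comp x hlin
  have hnum : HasDerivAt (fun y : ℝ => 4*y-2) 4 x := by
    simpa using ((hasDerivAt_id x).const_mul 4).sub_const 2
  have hden : HasDerivAt (fun y : ℝ => 3*(y^2-y+1)) (3*(2*x-1)) x := by
    have h1 : HasDerivAt (fun y : ℝ => y^2-y+1) (2*x-1) x := by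
      simpa using (((hasDerivAt_pow 2 x).sub (hasDerivAt_id x)).add_const 1)
    simpa using h1.const_mul 3
  have hrat : HasDerivAt (fun y : ℝ => (4*y-2)/(3*(y^2-y+1)))
      ((4 * (3*(x^2-x+1)) - (4*x-2) * (3*(2*x-1))) / (3*(x^2-x+1))^2) x := hnum.div hden hD3
  have h := ((harc.const_mul (2*Real.sqrt 3/9)).add hrat).sub (hasDerivAt_id x)
  refine h.congr_deriv ?_
  symm
  have hd1 : 1 + ((2*x-1)/Real.sqrt 3)^2 ≠ 0 := by positivity
  have hdx : 1 - x*(1-x) ≠ 0 := denom_ne x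
  have hD' : x*(x-1)+1 ≠ 0 := by nlinarith [sq_nonneg (x - 1/2)]
  unfold gfun
  field_simp
  rw [hs2]
  ring

lemma integral_gfun : ∫ x in (0:ℝ)..1, gfun x = (2 * Real.pi * Real.sqrt 3 + 9) / 27 := by
  have h := integral_eq_sub_of_hasDerivAt (f := Ffun)
    (fun x _ => Ffun_deriv x) (gfun_cont.intervalIntegrable 0 1)
  rw [h]
  have harctan : Real.arctan (1/Real.sqrt 3) = Real.pi/6 := by
    rw [← Real.tan_pi_div_six]
    exact Real.arctan_tan (by linarith [Real.pi_pos]) (by linarith [Real.pi_pos])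
  unfold Ffun
  rw [show (2*(1:ℝ)-1)/Real.sqrt 3 = 1/Real.sqrt 3 by norm_num,
    show (2*(0:ℝ)-1)/Real.sqrt 3 = -(1/Real.sqrt 3) by ring,
    Real.arctan_neg, harctan]
  norm_num
  ring

theorem sum_inv_central_binom :
    ∑' k : ℕ, 1 / (((2 * (k + 1)).choose (k + 1) : ℝ)) =
      (2 * Real.pi * Real.sqrt 3 + 9) / 27 := by
  set f : ℕ → ℝ → ℝ := fun k x => (2*((k:ℝ)+1)+1) * (x*(1-x))^(k+1) with hf
  have hcont : ∀ k, Continuous (f k) := fun k => by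
    exact continuous_const.mul ((continuous_id.mul (continuous_const.sub continuous_id)).pow (k+1))
  have hbound : ∀ k : ℕ, ∀ x ∈ Ioc (0:ℝ) 1, ‖f k x‖ ≤ (2*((k:ℝ)+1)+1) * (1/4)^(k+1) := by
    intro k x hx
    have h0 : 0 ≤ x*(1-x) := mul_nonneg hx.1.le (by linarith [hx.2])
    have h14 : x*(1-x) ≤ 1/4 := by nlinarith [sq_nonneg (x - 1/2)]
    rw [Real.norm_eq_abs, abs_of_nonneg (by positivity)]
    have : (x*(1-x))^(k+1) ≤ (1/4:ℝ)^(k+1) := pow_le_pow_left₀ h0 h14 (k+1)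
    have hk : (0:ℝ) ≤ 2*((k:ℝ)+1)+1 := by positivity
    exact mul_le_mul_of_nonneg_left this hk
  have hsum14 : Summable (fun k : ℕ => (2*((k:ℝ)+1)+1) * (1/4:ℝ)^(k+1)) :=
    (sum_eval (by norm_num) (by norm_num)).summable
  have hInt : ∀ k : ℕ, Integrable (f k) (volume.restrict (Ioc (0:ℝ) 1)) := fun k =>
    ((hcont k).integrableOn_Ioc)
  have hNorm : Summable (fun k : ℕ => ∫ x in Ioc (0:ℝ) 1, ‖f k x‖) := by
    apply Summable.of_nonneg_of_le
      (fun k => integral_nonneg (fun x => norm_nonneg _)) _ hsum14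
    intro k
    calc ∫ x in Ioc (0:ℝ) 1, ‖f k x‖
        ≤ ∫ _x in Ioc (0:ℝ) 1, (2*((k:ℝ)+1)+1) * (1/4)^(k+1) := by
          apply setIntegral_mono_on (hInt k).norm (integrable_const _) measurableSet_Ioc
          exact hbound k
      _ = (2*((k:ℝ)+1)+1) * (1/4)^(k+1) := by
          simp [Real.volume_Ioc]
  have swap := integral_tsum_of_summable_integral_norm hInt hNorm
  calc ∑' k : ℕ, 1 / (((2 * (k + 1)).choose (k + 1) : ℝ))
      = ∑' k : ℕ, ∫ x in Ioc (0:ℝ) 1, f k x := by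
        congr 1; funext k
        rw [← term_int k, intervalIntegral.integral_of_le zero_le_one]
    _ = ∫ x in Ioc (0:ℝ) 1, ∑' k, f k x := swap
    _ = ∫ x in Ioc (0:ℝ) 1, gfun x := by
        apply setIntegral_congr_fun measurableSet_Ioc
        intro x hx
        have h0 : 0 ≤ x*(1-x) := mul_nonneg hx.1.le (by linarith [hx.2])
        have h1 : x*(1-x) < 1 := by nlinarith [sq_nonneg (x - 1/2)]
        exact (sum_eval h0 h1).tsum_eq
    _ = ∫ x in (0:ℝ)..1, gfun x := (intervalIntegral.integral_of_le zero_le_one).symm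
    _ = (2 * Real.pi * Real.sqrt 3 + 9) / 27 := integral_gfun
end

section
/- ∑_{k=1}^∞ (-1)^{k+1}/(k · C(2k,k)) = (2/√5) · log((√5 + 1)/2). -/
open MeasureTheory Real

private lemma prod_shift (m : ℕ) :
    ∀ n : ℕ, m.factorial * ∏ j ∈ Finset.range n, (m + 1 + j) = (m + n).factorial
  | 0 => by simp
  | n + 1 => by
    rw [Finset.prod_range_succ, ← mul_assoc, prod_shift m n,
      show m + (n + 1) = (m + n) + 1 by ring, Nat.factorial_succ]
    ring

private lemma beta_nat_s4 (k : ℕ) :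
    ∫ t in (0:ℝ)..1, t ^ k * (1 - t) ^ (k + 1) =
      ((k + 1).factorial * k.factorial : ℝ) / (2 * k + 2).factorial := by
  have h := Complex.betaIntegral_eval_nat_add_one_right (u := (k : ℂ) + 1)
    (by simp; positivity) (k + 1)
  have h2 : Complex.betaIntegral ((k : ℂ) + 1) (((k + 1 : ℕ) : ℂ) + 1) =
      ((∫ t in (0:ℝ)..1, t ^ k * (1 - t) ^ (k + 1) : ℝ) : ℂ) := by
    rw [Complex.betaIntegral, ← intervalIntegral.integral_ofReal]
    apply intervalIntegral.integral_congr
    intro x _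
    show (x:ℂ) ^ ((k:ℂ) + 1 - 1) * (1 - (x:ℂ)) ^ (((k + 1 : ℕ) : ℂ) + 1 - 1) = _
    rw [add_sub_cancel_right, add_sub_cancel_right, Complex.cpow_natCast,
      Complex.cpow_natCast]
    push_cast
    ring
  rw [h2] at h
  have hp : (∏ j ∈ Finset.range (k + 1 + 1), (((k : ℂ) + 1) + j)) =
      ((2 * k + 2).factorial : ℂ) / (k.factorial : ℂ) := by
    have h3 := congrArg (Nat.cast : ℕ → ℂ) (prod_shift k (k + 2))
    push_cast at h3
    rw [eq_div_iff (by exact_mod_cast k.factorial_ne_zero)]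
    rw [show k + (k + 2) = 2 * k + 2 by ring] at h3
    rw [← h3, mul_comm]
  rw [hp] at h
  have hk0 : (k.factorial : ℂ) ≠ 0 := by exact_mod_cast k.factorial_ne_zero
  have hk1 : ((k + 1).factorial : ℂ) ≠ 0 := by exact_mod_cast (k + 1).factorial_ne_zero
  have hk2 : (((2 * k + 2).factorial : ℕ) : ℂ) ≠ 0 := by
    exact_mod_cast (2 * k + 2).factorial_ne_zero
  field_simp at h ⊢
  exact_mod_cast h

private lemma frac_eq (k : ℕ) :
    ((k + 1).factorial * k.factorial : ℝ) / (2 * k + 2).factorial =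
      1 / (((k : ℝ) + 1) * ((2 * (k + 1)).choose (k + 1) : ℝ)) := by
  have hch := Nat.choose_mul_factorial_mul_factorial (show k + 1 ≤ 2 * k + 2 by omega)
  rw [show 2 * k + 2 - (k + 1) = k + 1 by omega] at hch
  have hcast : (((2 * (k + 1)).choose (k + 1) : ℝ)) * (k + 1).factorial * (k + 1).factorial
      = ((2 * k + 2).factorial : ℝ) := by
    rw [show 2 * (k + 1) = 2 * k + 2 by ring]
    exact_mod_cast congrArg (Nat.cast : ℕ → ℝ) hch
  have hfs : ((k + 1).factorial : ℝ) = ((k : ℝ) + 1) * k.factorial := by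
    push_cast [Nat.factorial_succ]
    ring
  have h3 : (0:ℝ) < ((2 * k + 2).factorial : ℝ) := by
    exact_mod_cast (2 * k + 2).factorial_pos
  have h5 : (0:ℝ) < (((2 * (k + 1)).choose (k + 1) : ℝ)) := by
    exact_mod_cast Nat.choose_pos (show k + 1 ≤ 2 * (k + 1) by omega)
  have h4 : (0:ℝ) < ((k : ℝ) + 1) := by positivity
  rw [div_eq_div_iff (by positivity) (by positivity)]
  linear_combination hcast - (((2 * (k + 1)).choose (k + 1) : ℝ)) * ((k + 1).factorial : ℝ) * hfs

private lemma term_eq (k : ℕ) :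
    ∫ t in Set.Ioc (0:ℝ) 1, ((-1:ℝ) ^ k * (t ^ k * (1 - t) ^ (k + 1))) =
      (-1 : ℝ) ^ k / (((k : ℝ) + 1) * ((2 * (k + 1)).choose (k + 1) : ℝ)) := by
  rw [integral_const_mul,
    ← intervalIntegral.integral_of_le (by norm_num : (0:ℝ) ≤ 1), beta_nat_s4 k, frac_eq k]
  rw [mul_one_div]

private lemma norm_term_eq (k : ℕ) :
    ∫ t in Set.Ioc (0:ℝ) 1, ‖(-1:ℝ) ^ k * (t ^ k * (1 - t) ^ (k + 1))‖ =
      1 / (((k : ℝ) + 1) * ((2 * (k + 1)).choose (k + 1) : ℝ)) := by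
  rw [MeasureTheory.setIntegral_congr_fun (g := fun t : ℝ => t ^ k * (1 - t) ^ (k + 1))
    measurableSet_Ioc ?_,
    ← intervalIntegral.integral_of_le (by norm_num : (0:ℝ) ≤ 1), beta_nat_s4 k, frac_eq k]
  intro t ⟨ht0, ht1⟩
  show ‖(-1:ℝ) ^ k * (t ^ k * (1 - t) ^ (k + 1))‖ = t ^ k * (1 - t) ^ (k + 1)
  rw [norm_mul, norm_pow, norm_neg, norm_one, one_pow, one_mul, Real.norm_eq_abs,
    abs_of_nonneg (mul_nonneg (by positivity) (pow_nonneg (by linarith) _))]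

private lemma summable_norms :
    Summable fun k : ℕ => 1 / (((k : ℝ) + 1) * ((2 * (k + 1)).choose (k + 1) : ℝ)) := by
  apply Summable.of_nonneg_of_le (fun k => by positivity) (fun k => ?_)
    (summable_geometric_of_lt_one (by norm_num) (by norm_num : (1/4 : ℝ) < 1))
  have hnat : 4 ^ k ≤ (k + 1) * ((2 * (k + 1)).choose (k + 1)) := by
    have h := Nat.four_pow_le_two_mul_self_mul_centralBinom (k + 1) (Nat.succ_pos k)
    have h2 : 4 ^ k * 2 ≤ ((k + 1) * ((2 * (k + 1)).choose (k + 1))) * 2 := by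
      calc 4 ^ k * 2 ≤ 4 ^ k * 4 := Nat.mul_le_mul (le_refl _) (by norm_num)
        _ = 4 ^ (k + 1) := by rw [pow_succ]
        _ ≤ 2 * (k + 1) * Nat.centralBinom (k + 1) := h
        _ = ((k + 1) * ((2 * (k + 1)).choose (k + 1))) * 2 := by
            rw [Nat.centralBinom_eq_two_mul_choose]; ring
    calc 4 ^ k ≤ 4 ^ k * 2 / 2 := by omega
      _ ≤ ((k + 1) * ((2 * (k + 1)).choose (k + 1))) * 2 / 2 := Nat.div_le_div_right h2
      _ = (k + 1) * ((2 * (k + 1)).choose (k + 1)) := by omega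
  have hreal : (4:ℝ) ^ k ≤ ((k : ℝ) + 1) * ((2 * (k + 1)).choose (k + 1) : ℝ) := by
    exact_mod_cast hnat
  rw [one_div, show (1/4 : ℝ) ^ k = ((4:ℝ) ^ k)⁻¹ by rw [← inv_pow]; norm_num]
  exact inv_anti₀ (by positivity) hreal

private lemma pointwise_sum {t : ℝ} (ht : t ∈ Set.Ioc (0:ℝ) 1) :
    ∑' k : ℕ, ((-1:ℝ) ^ k * (t ^ k * (1 - t) ^ (k + 1))) = (1 - t) / (1 + t * (1 - t)) := by
  obtain ⟨ht0, ht1⟩ := ht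
  have hr : ‖-(t * (1 - t))‖ < 1 := by
    rw [Real.norm_eq_abs, abs_neg, abs_of_nonneg (by nlinarith)]
    nlinarith
  have hgeo := (hasSum_geometric_of_norm_lt_one hr).mul_left (1 - t)
  have heq : (fun k : ℕ => (1 - t) * (-(t * (1 - t))) ^ k)
      = fun k : ℕ => (-1:ℝ) ^ k * (t ^ k * (1 - t) ^ (k + 1)) := by
    funext k
    rw [show -(t * (1 - t)) = (-1) * (t * (1 - t)) by ring, mul_pow, mul_pow]
    ring
  rw [heq] at hgeo
  rw [hgeo.tsum_eq, show (1:ℝ) - -(t * (1 - t)) = 1 + t * (1 - t) by ring, div_eq_mul_inv]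

private lemma integral_eval :
    ∫ t in (0:ℝ)..1, (1 - t) / (1 + t * (1 - t)) =
      (2 / Real.sqrt 5) * Real.log ((Real.sqrt 5 + 1) / 2) := by
  set s := Real.sqrt 5 with hsdef
  have hs : s ^ 2 = 5 := Real.sq_sqrt (by norm_num)
  have hs0 : 0 ≤ s := Real.sqrt_nonneg 5
  have hs2 : 2 < s := by nlinarith
  set a : ℝ := (1 - s) / 2 with hadef
  set b : ℝ := (1 + s) / 2 with hbdef
  have hden : ∀ t : ℝ, (t - a) * (b - t) = 1 + t * (1 - t) := by
    intro t
    rw [hadef, hbdef]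
    linear_combination (1/4 : ℝ) * hs
  have hta : ∀ t ∈ Set.uIcc (0:ℝ) 1, 0 < t - a := by
    intro t ht
    rw [Set.uIcc_of_le (by norm_num : (0:ℝ) ≤ 1)] at ht
    rw [hadef]; nlinarith [ht.1]
  have htb : ∀ t ∈ Set.uIcc (0:ℝ) 1, 0 < b - t := by
    intro t ht
    rw [Set.uIcc_of_le (by norm_num : (0:ℝ) ≤ 1)] at ht
    rw [hbdef]; nlinarith [ht.2]
  have hsne : s ≠ 0 := by positivity
  rw [intervalIntegral.integral_eq_sub_of_hasDerivAt
    (f := fun t => (b / s) * Real.log (t - a) - (a / s) * Real.log (b - t))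
    (f' := fun t => (1 - t) / (1 + t * (1 - t))) ?_ ?_]
  · have h1a : (1:ℝ) - a = b := by rw [hadef, hbdef]; ring
    have hb1 : b - 1 = (s - 1) / 2 := by rw [hbdef]; ring
    have h0a : (0:ℝ) - a = (s - 1) / 2 := by rw [hadef]; ring
    have hinv : (s - 1) / 2 = b⁻¹ := by
      apply eq_inv_of_mul_eq_one_left
      rw [hbdef]
      linear_combination (1/4 : ℝ) * hs
    have hbb : (s + 1) / 2 = b := by rw [hbdef]; ring
    have hbpos : 0 < b := by rw [hbdef]; positivity
    simp only [h1a, hb1, h0a, sub_zero, hinv, Real.log_inv, hbb]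
    have hab1 : a + b = 1 := by rw [hadef, hbdef]; ring
    field_simp
    linear_combination (2 * Real.log b) * hab1
  · intro t ht
    have ha' := ne_of_gt (hta t ht)
    have hb' := ne_of_gt (htb t ht)
    have h1 : HasDerivAt (fun u : ℝ => Real.log (u - a)) (1 / (t - a)) t := by
      simpa using ((hasDerivAt_id t).sub_const a).log ha'
    have h2 : HasDerivAt (fun u : ℝ => Real.log (b - u)) (-1 / (b - t)) t := by
      have := ((hasDerivAt_id t).const_sub b).log hb'
      simpa using this
    have h3 := (h1.const_mul (b / s)).sub (h2.const_mul (a / s))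
    show HasDerivAt _ ((1 - t) / (1 + t * (1 - t))) t
    refine h3.congr_deriv ?_
    rw [← hden t]
    have hba : b * (b - t) + a * (t - a) = s * (1 - t) := by rw [hadef, hbdef]; ring
    have hre : b / s * (1 / (t - a)) - a / s * (-1 / (b - t))
        = (b * (b - t) + a * (t - a)) / (s * ((t - a) * (b - t))) := by
      field_simp
      ring
    rw [hre, hba, mul_div_mul_left _ _ hsne]
  · apply ContinuousOn.intervalIntegrable
    apply ContinuousOn.div
    · fun_prop
    · fun_prop
    · intro t ht
      rw [← hden t]
      exact ne_of_gt (mul_pos (hta t ht) (htb t ht))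

theorem alt_sum_inv_k_central_binom :
    ∑' k : ℕ, (-1 : ℝ) ^ k / (((k : ℝ) + 1) * ((2 * (k + 1)).choose (k + 1) : ℝ)) =
      (2 / Real.sqrt 5) * Real.log ((Real.sqrt 5 + 1) / 2) := by
  have hcont : ∀ k : ℕ, Continuous fun t : ℝ => (-1:ℝ) ^ k * (t ^ k * (1 - t) ^ (k + 1)) := by
    intro k; fun_prop
  have hint : ∀ k : ℕ, Integrable (fun t : ℝ => (-1:ℝ) ^ k * (t ^ k * (1 - t) ^ (k + 1)))
      (volume.restrict (Set.Ioc 0 1)) := fun k => (hcont k).integrableOn_Ioc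
  have hsum : Summable fun k : ℕ =>
      ∫ t in Set.Ioc (0:ℝ) 1, ‖(-1:ℝ) ^ k * (t ^ k * (1 - t) ^ (k + 1))‖ := by
    simp_rw [norm_term_eq]
    exact summable_norms
  have key := MeasureTheory.integral_tsum_of_summable_integral_norm hint hsum
  calc ∑' k : ℕ, (-1 : ℝ) ^ k / (((k : ℝ) + 1) * ((2 * (k + 1)).choose (k + 1) : ℝ))
      = ∑' k : ℕ, ∫ t in Set.Ioc (0:ℝ) 1, ((-1:ℝ) ^ k * (t ^ k * (1 - t) ^ (k + 1))) := by
        exact (tsum_congr fun k => term_eq k).symm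
    _ = ∫ t in Set.Ioc (0:ℝ) 1, ∑' k : ℕ, ((-1:ℝ) ^ k * (t ^ k * (1 - t) ^ (k + 1))) := key
    _ = ∫ t in Set.Ioc (0:ℝ) 1, (1 - t) / (1 + t * (1 - t)) :=
        MeasureTheory.setIntegral_congr_fun measurableSet_Ioc fun t ht => pointwise_sum ht
    _ = ∫ t in (0:ℝ)..1, (1 - t) / (1 + t * (1 - t)) :=
        (intervalIntegral.integral_of_le (by norm_num : (0:ℝ) ≤ 1)).symm
    _ = (2 / Real.sqrt 5) * Real.log ((Real.sqrt 5 + 1) / 2) := integral_eval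
end

section
/- ζ(5) = 2·∑_{k=1}^∞ (-1)^{k+1}/(k⁵·C(2k,k)) − (5/2)·∑_{k=1}^∞ [(-1)^{k+1}/(k³·C(2k,k))] · ∑_{j=1}^{k-1} 1/j². -/
open Finset

noncomputable def Hs (k : ℕ) : ℝ := ∑ j ∈ Finset.range k, 1 / ((j : ℝ) + 1) ^ 2

noncomputable def fc (n : ℕ) : ℝ := (Nat.factorial n : ℝ)

noncomputable def x1 (n k : ℕ) : ℝ :=
  (-1) ^ (k + 1) * fc (n - k - 1) * (fc k) ^ 2 * (1 / (n : ℝ) ^ 4 - Hs k / (n : ℝ) ^ 2) / fc (n + k)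

noncomputable def g1 (n k : ℕ) : ℝ :=
  (-1) ^ k * Hs (k - 1) * fc (n - k - 1) * (fc (k - 1)) ^ 2 / fc (n + k)

noncomputable def e1 (n k : ℕ) : ℝ :=
  -(Hs (k - 1)) * fc (n - k) * (fc k) ^ 2 / (2 * (k : ℝ) ^ 3 * fc (n + k))

noncomputable def bb (n : ℕ) : ℝ :=
  (-1) ^ (n + 1) * (fc (n - 1)) ^ 2 * (1 / (n : ℝ) ^ 4 - Hs (n - 1) / (n : ℝ) ^ 2) * (2 * n) / fc (2 * n)

lemma fc_pos (n : ℕ) : 0 < fc n := by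
  unfold fc; exact_mod_cast Nat.factorial_pos n

lemma fc_ne (n : ℕ) : fc n ≠ 0 := ne_of_gt (fc_pos n)

lemma fc_succ (n : ℕ) : fc (n + 1) = ((n : ℝ) + 1) * fc n := by
  unfold fc; rw [Nat.factorial_succ]; push_cast; ring

lemma Hs_succ (k : ℕ) : Hs (k + 1) = Hs k + 1 / ((k : ℝ) + 1) ^ 2 := by
  unfold Hs; rw [Finset.sum_range_succ]

-- step lemma SK
set_option maxHeartbeats 2000000 in
lemma SK (m i : ℕ) :
    x1 (m + i + 2) (i + 1) - x1 (m + i + 2) i = g1 (m + i + 2) (i + 1) := by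
  unfold x1 g1
  have h1 : m + i + 2 - (i + 1) - 1 = m := by omega
  have h2 : m + i + 2 - i - 1 = m + 1 := by omega
  have h3 : m + i + 2 + (i + 1) = (m + 2 * i + 2) + 1 := by omega
  have h4 : m + i + 2 + i = m + 2 * i + 2 := by omega
  have h0 : i + 1 - 1 = i := by omega
  rw [h0, h1, h2, h3, h4, fc_succ (m + 2 * i + 2), fc_succ m, fc_succ i, Hs_succ i]
  have hM : ((m + i + 2 : ℕ) : ℝ) = (m : ℝ) + (i : ℝ) + 2 := by push_cast; ring
  have h5 : ((m + 2 * i + 2 : ℕ) : ℝ) = (m:ℝ) + 2*(i:ℝ) + 2 := by push_cast; ring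
  rw [hM, h5, pow_succ, pow_succ]
  have ha := fc_ne m
  have hb := fc_ne i
  have hc := fc_ne (m + 2 * i + 2)
  generalize fc m = a at ha ⊢
  generalize fc i = b at hb ⊢
  generalize fc (m + 2 * i + 2) = c at hc ⊢
  generalize Hs i = h
  generalize hx : (m : ℝ) = x
  generalize hy : (i : ℝ) = y
  have hx0 : (0:ℝ) ≤ x := by rw [← hx]; positivity
  have hy0 : (0:ℝ) ≤ y := by rw [← hy]; positivity
  have hMn : x + y + 2 ≠ 0 := by positivity
  have hyn : y + 1 ≠ 0 := by positivity
  have hZn : x + 2*y + 2 + 1 ≠ 0 := by positivity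
  generalize (-1 : ℝ) ^ i = s
  field_simp
  ring

lemma Hs_zero : Hs 0 = 0 := by unfold Hs; simp

lemma fc_zero : fc 0 = 1 := by unfold fc; simp

lemma x1_zero (n : ℕ) : x1 (n + 1) 0 = -(1 / ((n : ℝ) + 1) ^ 5) := by
  unfold x1
  have h1 : n + 1 - 0 - 1 = n := by omega
  have h2 : n + 1 + 0 = n + 1 := by omega
  rw [h1, h2, fc_succ n, Hs_zero, fc_zero]
  have hM : ((n + 1 : ℕ) : ℝ) = (n : ℝ) + 1 := by push_cast; ring
  rw [hM]
  have hn : ((n:ℝ) + 1) ≠ 0 := by positivity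
  have hf := fc_ne n
  field_simp
  ring

lemma x1_diag (n : ℕ) : x1 (n + 1) n = -(bb (n + 1)) := by
  unfold x1 bb
  have h1 : n + 1 - n - 1 = 0 := by omega
  have h2 : n + 1 + n = 2 * n + 1 := by omega
  have h3 : n + 1 - 1 = n := by omega
  have h4 : 2 * (n + 1) = (2 * n + 1) + 1 := by omega
  rw [h1, h2, h3, h4, fc_succ (2 * n + 1), fc_zero]
  have hM : ((n + 1 : ℕ) : ℝ) = (n : ℝ) + 1 := by push_cast; ring
  have h5 : ((2 * n + 1 : ℕ) : ℝ) = 2 * (n:ℝ) + 1 := by push_cast; ring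
  rw [hM, h5, pow_succ]
  have hn : ((n:ℝ) + 1) ≠ 0 := by positivity
  have hf := fc_ne (2 * n + 1)
  field_simp
  ring

lemma idI (n : ℕ) :
    1 / ((n : ℝ) + 1) ^ 5 = bb (n + 1) + ∑ i ∈ Finset.range n, g1 (n + 1) (i + 1) := by
  have tele := Finset.sum_range_sub (fun j => x1 (n + 1) j) n
  have step : ∀ i ∈ Finset.range n,
      x1 (n + 1) (i + 1) - x1 (n + 1) i = g1 (n + 1) (i + 1) := by
    intro i hi
    have hi' := Finset.mem_range.mp hi
    obtain ⟨m, hm⟩ : ∃ m, n + 1 = m + i + 2 := ⟨n - i - 1, by omega⟩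
    rw [hm]; exact SK m i
  rw [Finset.sum_congr rfl step] at tele
  rw [tele, x1_diag, x1_zero]
  ring

lemma L2 (m i : ℕ) :
    g1 (m + i + 2) (i + 1) = (-1) ^ (i + 1) * (e1 (m + i + 2) (i + 1) - e1 (m + i + 1) (i + 1)) := by
  unfold g1 e1
  have h0 : i + 1 - 1 = i := by omega
  have h1 : m + i + 2 - (i + 1) - 1 = m := by omega
  have h2 : m + i + 2 - (i + 1) = m + 1 := by omega
  have h3 : m + i + 1 - (i + 1) = m := by omega
  have h4 : m + i + 2 + (i + 1) = (m + 2 * i + 2) + 1 := by omega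
  have h5 : m + i + 1 + (i + 1) = m + 2 * i + 2 := by omega
  rw [h0, h1, h2, h3, h4, h5, fc_succ (m + 2 * i + 2), fc_succ m, fc_succ i, pow_succ]
  have h6 : ((m + 2 * i + 2 : ℕ) : ℝ) = (m:ℝ) + 2*(i:ℝ) + 2 := by push_cast; ring
  have h7 : ((i + 1 : ℕ) : ℝ) = (i : ℝ) + 1 := by push_cast; ring
  rw [h6, h7]
  have ha := fc_ne m
  have hb := fc_ne i
  have hc := fc_ne (m + 2 * i + 2)
  generalize fc m = a at ha ⊢
  generalize fc i = b at hb ⊢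
  generalize fc (m + 2 * i + 2) = c at hc ⊢
  generalize Hs i = h
  generalize hy : (i : ℝ) = y
  generalize hx : (m : ℝ) = x
  have hx0 : (0:ℝ) ≤ x := by rw [← hx]; positivity
  have hy0 : (0:ℝ) ≤ y := by rw [← hy]; positivity
  have hyn : y + 1 ≠ 0 := by positivity
  have hZn : x + 2*y + 2 + 1 ≠ 0 := by positivity
  generalize (-1 : ℝ) ^ i = s
  field_simp
  ring

lemma FIN (N : ℕ) :
    ∑ n ∈ Finset.range N, 1 / ((n : ℝ) + 1) ^ 5 =
      ∑ n ∈ Finset.range N, bb (n + 1)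
      + (∑ i ∈ Finset.range (N - 1), (-1 : ℝ) ^ (i + 1) * e1 N (i + 1)
         - ∑ i ∈ Finset.range (N - 1), (-1 : ℝ) ^ (i + 1) * e1 (i + 1) (i + 1)) := by
  induction N with
  | zero => simp
  | succ N ih =>
    rw [Finset.sum_range_succ, Finset.sum_range_succ, ih]
    have hNN : N + 1 - 1 = N := by omega
    rw [hNN]
    rcases Nat.eq_zero_or_pos N with h0 | hN
    · subst h0
      have h1 := idI 0
      simp only [Finset.range_zero, Finset.sum_empty] at h1 ⊢
      simp only [Nat.cast_zero] at h1
      rw [show (0:ℕ) + 1 = 1 from rfl]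
      push_cast
      linarith
    · obtain ⟨M, rfl⟩ : ∃ M, N = M + 1 := ⟨N - 1, by omega⟩
      have key := idI (M + 1)
      have hg : ∀ i ∈ Finset.range (M + 1),
          g1 (M + 1 + 1) (i + 1) = (-1 : ℝ) ^ (i + 1) * (e1 (M + 2) (i + 1) - e1 (M + 1) (i + 1)) := by
        intro i hi
        have hi' := Finset.mem_range.mp hi
        obtain ⟨m, hm1, hm2⟩ : ∃ m, M + 1 + 1 = m + i + 2 ∧ M + 1 = m + i + 1 := ⟨M - i, by omega, by omega⟩
        rw [hm1, hm2]
        exact L2 m i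
      rw [Finset.sum_congr rfl hg] at key
      have hsub : ∑ i ∈ Finset.range (M + 1),
          (-1 : ℝ) ^ (i + 1) * (e1 (M + 2) (i + 1) - e1 (M + 1) (i + 1)) =
          ∑ i ∈ Finset.range (M + 1), (-1 : ℝ) ^ (i + 1) * e1 (M + 2) (i + 1)
          - ∑ i ∈ Finset.range (M + 1), (-1 : ℝ) ^ (i + 1) * e1 (M + 1) (i + 1) := by
        rw [← Finset.sum_sub_distrib]
        apply Finset.sum_congr rfl
        intro i _
        ring
      rw [hsub] at key
      rw [Finset.sum_range_succ (fun i => (-1 : ℝ) ^ (i + 1) * e1 (M + 1) (i + 1)) M] at key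
      rw [Finset.sum_range_succ (fun i => (-1 : ℝ) ^ (i + 1) * e1 (i + 1) (i + 1)) M]
      rw [show M + 1 - 1 = M from by omega]
      push_cast at key ⊢
      linarith


lemma Hs_nonneg (k : ℕ) : 0 ≤ Hs k := by
  unfold Hs; positivity

lemma Hs_le_aux : ∀ k : ℕ, Hs (k + 1) ≤ 2 - 1 / ((k : ℝ) + 1) := by
  intro k
  induction k with
  | zero => rw [Hs_succ, Hs_zero]; norm_num
  | succ k ih =>
    rw [Hs_succ]
    have h1 : 1 / (((k:ℝ) + 1) + 1) ^ 2 ≤ 1 / ((k:ℝ) + 1) - 1 / (((k:ℝ) + 1) + 1) := by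
      rw [div_sub_div _ _ (by positivity) (by positivity)]
      rw [div_le_div_iff₀ (by positivity) (by positivity)]
      ring_nf
      nlinarith [sq_nonneg ((k:ℝ) + 1)]
    push_cast
    push_cast at ih
    linarith

lemma Hs_le_two (k : ℕ) : Hs k ≤ 2 := by
  cases k with
  | zero => rw [Hs_zero]; norm_num
  | succ k =>
    have := Hs_le_aux k
    have h2 : 0 < 1 / ((k:ℝ) + 1) := by positivity
    linarith

lemma hCB (k : ℕ) : ((2 * (k+1)).choose (k+1) : ℝ) * (fc (k+1))^2 = fc (2*(k+1)) := by
  have h := Nat.choose_mul_factorial_mul_factorial (show k+1 ≤ 2*(k+1) by omega)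
  have h2 : 2 * (k+1) - (k+1) = k+1 := by omega
  rw [h2] at h
  unfold fc
  push_cast [← h]
  ring

lemma choose_pos_real (k : ℕ) : (0:ℝ) < ((2 * (k+1)).choose (k+1) : ℝ) := by
  exact_mod_cast Nat.choose_pos (show k+1 ≤ 2*(k+1) by omega)

lemma bb_decomp (n : ℕ) :
    bb (n + 1) = 2 * ((-1 : ℝ) ^ n / (((n : ℝ) + 1) ^ 5 * ((2 * (n + 1)).choose (n + 1) : ℝ)))
      - 2 * (((-1 : ℝ) ^ n / (((n : ℝ) + 1) ^ 3 * ((2 * (n + 1)).choose (n + 1) : ℝ))) * Hs n) := by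
  unfold bb
  have h3 : n + 1 - 1 = n := by omega
  rw [h3]
  have hC := hCB n
  have hCpos := choose_pos_real n
  have hf := fc_ne (n+1)
  have hfn := fc_ne n
  have hM : ((n + 1 : ℕ) : ℝ) = (n : ℝ) + 1 := by push_cast; ring
  rw [← hC, fc_succ n, hM, pow_succ]
  have hn : ((n:ℝ) + 1) ≠ 0 := by positivity
  have hCne : ((2 * (n+1)).choose (n+1) : ℝ) ≠ 0 := ne_of_gt hCpos
  field_simp
  ring

lemma diag_eq (i : ℕ) :
    (-1 : ℝ) ^ (i + 1) * e1 (i + 1) (i + 1) =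
      (1/2) * (((-1 : ℝ) ^ i / (((i : ℝ) + 1) ^ 3 * ((2 * (i + 1)).choose (i + 1) : ℝ))) * Hs i) := by
  unfold e1
  have h0 : i + 1 - 1 = i := by omega
  have h1 : i + 1 - (i + 1) = 0 := by omega
  have h2 : i + 1 + (i + 1) = 2 * (i + 1) := by omega
  rw [h0, h1, h2, fc_zero]
  have hC := hCB i
  have hCpos := choose_pos_real i
  have hf := fc_ne (i+1)
  have hM : ((i + 1 : ℕ) : ℝ) = (i : ℝ) + 1 := by push_cast; ring
  rw [← hC, hM, pow_succ]
  have hn : ((i:ℝ) + 1) ≠ 0 := by positivity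
  have hCne : ((2 * (i+1)).choose (i+1) : ℝ) ≠ 0 := ne_of_gt hCpos
  field_simp

lemma nat_fact_bound (k d : ℕ) (hk : 1 ≤ k) :
    (k + 1 + d) * Nat.factorial (2 * k) * Nat.factorial (d + 1) ≤ Nat.factorial (2 * k + 1 + d) := by
  induction d with
  | zero =>
    have h1 : Nat.factorial (2 * k + 1 + 0) = (2 * k + 1) * Nat.factorial (2 * k) := rfl
    have h2 : (k + 1 + 0) * Nat.factorial (2 * k) * Nat.factorial (0 + 1)
        = (k + 1) * Nat.factorial (2 * k) := by norm_num [Nat.factorial]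
    rw [h1, h2]
    exact Nat.mul_le_mul (by omega) (le_refl _)
  | succ d ih =>
    have hstep : (k + 1 + (d+1)) * (d + 2) ≤ (2 * k + 1 + (d+1)) * (k + 1 + d) := by nlinarith
    calc (k + 1 + (d+1)) * Nat.factorial (2 * k) * Nat.factorial (d + 1 + 1)
        = ((k + 1 + (d+1)) * (d + 2)) * (Nat.factorial (2 * k) * Nat.factorial (d + 1)) := by
          rw [Nat.factorial_succ]; ring
      _ ≤ ((2 * k + 1 + (d+1)) * (k + 1 + d)) * (Nat.factorial (2 * k) * Nat.factorial (d + 1)) :=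
          Nat.mul_le_mul_right _ hstep
      _ = (2 * k + 1 + (d+1)) * ((k + 1 + d) * Nat.factorial (2 * k) * Nat.factorial (d + 1)) := by
          ring
      _ ≤ (2 * k + 1 + (d+1)) * Nat.factorial (2 * k + 1 + d) := Nat.mul_le_mul_left _ ih
      _ = Nat.factorial (2 * k + 1 + (d + 1)) := by
          rw [show 2 * k + 1 + (d + 1) = (2 * k + 1 + d) + 1 from by omega, Nat.factorial_succ]

lemma nat_sq_fact_le (k : ℕ) : Nat.factorial k * Nat.factorial k ≤ Nat.factorial (2 * k) := by
  have h := Nat.choose_mul_factorial_mul_factorial (show k ≤ 2 * k by omega)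
  have h2 : 2 * k - k = k := by omega
  rw [h2] at h
  calc Nat.factorial k * Nat.factorial k
      = 1 * (Nat.factorial k * Nat.factorial k) := by ring
    _ ≤ (2*k).choose k * (Nat.factorial k * Nat.factorial k) :=
        Nat.mul_le_mul_right _ (Nat.choose_pos (by omega))
    _ = (2*k).choose k * Nat.factorial k * Nat.factorial k := by ring
    _ = Nat.factorial (2 * k) := h

lemma nat_main_bound (k N : ℕ) (hk : 1 ≤ k) (hN : k + 1 ≤ N) :
    N * (Nat.factorial k * Nat.factorial k) * Nat.factorial (N - k) ≤ Nat.factorial (N + k) := by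
  obtain ⟨d, rfl⟩ : ∃ d, N = k + 1 + d := ⟨N - k - 1, by omega⟩
  have h1 : k + 1 + d - k = d + 1 := by omega
  have h2 : k + 1 + d + k = 2 * k + 1 + d := by omega
  rw [h1, h2]
  calc (k + 1 + d) * (Nat.factorial k * Nat.factorial k) * Nat.factorial (d + 1)
      ≤ (k + 1 + d) * Nat.factorial (2 * k) * Nat.factorial (d + 1) := by
        have := nat_sq_fact_le k
        exact Nat.mul_le_mul_right _ (Nat.mul_le_mul_left _ this)
    _ ≤ Nat.factorial (2 * k + 1 + d) := nat_fact_bound k d hk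

lemma e1_bound (i N : ℕ) (h : i + 2 ≤ N) :
    |e1 N (i + 1)| ≤ 1 / (((i : ℝ) + 1) ^ 2 * N) := by
  unfold e1
  have h0 : i + 1 - 1 = i := by omega
  rw [h0]
  have hfpos1 := fc_pos (N - (i+1))
  have hfpos2 := fc_pos (i+1)
  have hfpos3 := fc_pos (N + (i+1))
  have hNpos : (0:ℝ) < (N:ℝ) := by
    have : 0 < N := by omega
    exact_mod_cast this
  have hi1 : (0:ℝ) < ((i+1:ℕ):ℝ) := by positivity
  have hHs := Hs_le_two i
  have hHsn := Hs_nonneg i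
  have hmain : (N:ℝ) * (fc (i+1) * fc (i+1)) * fc (N - (i+1)) ≤ fc (N + (i+1)) := by
    have := nat_main_bound (i+1) N (by omega) (by omega)
    unfold fc
    exact_mod_cast this
  have hcast : ((i+1:ℕ):ℝ) = (i:ℝ) + 1 := by push_cast; ring
  rw [abs_div, abs_mul, abs_mul, abs_neg, abs_of_nonneg hHsn]
  rw [abs_of_pos (by positivity : (0:ℝ) < fc (N - (i+1)))]
  rw [abs_of_pos (by positivity : (0:ℝ) < (fc (i+1))^2)]
  rw [abs_of_pos (by positivity : (0:ℝ) < 2 * ((i+1:ℕ):ℝ)^3 * fc (N + (i+1)))]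
  rw [div_le_div_iff₀ (by positivity) (by positivity)]
  have key : fc (N - (i+1)) * (fc (i+1))^2 * (N:ℝ) ≤ fc (N + (i+1)) := by
    calc fc (N - (i+1)) * (fc (i+1))^2 * (N:ℝ)
        = (N:ℝ) * (fc (i+1) * fc (i+1)) * fc (N - (i+1)) := by ring
      _ ≤ fc (N + (i+1)) := hmain
  calc Hs i * fc (N - (i+1)) * fc (i+1) ^ 2 * (((i:ℝ) + 1) ^ 2 * (N:ℝ))
      ≤ 2 * fc (N - (i+1)) * fc (i+1) ^ 2 * (((i:ℝ) + 1) ^ 2 * (N:ℝ)) := by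
        have hpos : (0:ℝ) < fc (N - (i+1)) * fc (i+1) ^ 2 * (((i:ℝ) + 1) ^ 2 * (N:ℝ)) := by
          positivity
        nlinarith [hpos]
    _ = (2 * ((i:ℝ)+1)^2) * (fc (N - (i+1)) * fc (i+1) ^ 2 * (N:ℝ)) := by ring
    _ ≤ (2 * ((i:ℝ)+1)^2) * fc (N + (i+1)) := by
        apply mul_le_mul_of_nonneg_left key (by positivity)
    _ ≤ (2 * ((i:ℝ)+1)^3) * fc (N + (i+1)) := by
        apply mul_le_mul_of_nonneg_right _ (le_of_lt hfpos3)
        have hy : (1:ℝ) ≤ (i:ℝ) + 1 := by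
          have : (0:ℝ) ≤ (i:ℝ) := Nat.cast_nonneg i
          linarith
        nlinarith [hy]
    _ = 1 * (2 * ((i+1:ℕ):ℝ) ^ 3 * fc (N + (i+1))) := by rw [hcast]; ring

noncomputable def uu (k : ℕ) : ℝ := (-1 : ℝ) ^ k / (((k : ℝ) + 1) ^ 5 * ((2 * (k + 1)).choose (k + 1) : ℝ))

noncomputable def vv (k : ℕ) : ℝ :=
  ((-1 : ℝ) ^ k / (((k : ℝ) + 1) ^ 3 * ((2 * (k + 1)).choose (k + 1) : ℝ))) * Hs k

lemma summable_shift_pow (p : ℕ) (hp : 1 < p) : Summable (fun n : ℕ => 1 / ((n : ℝ) + 1) ^ p) := by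
  have h := Real.summable_one_div_nat_pow.mpr hp
  have h2 := (summable_nat_add_iff (f := fun n : ℕ => 1 / (n : ℝ) ^ p) 1).mpr h
  apply h2.congr
  intro n
  push_cast
  ring

lemma summable_uu : Summable uu := by
  apply Summable.of_abs
  apply Summable.of_nonneg_of_le (fun n => abs_nonneg _) _ (summable_shift_pow 2 (by norm_num))
  intro n
  unfold uu
  have hC := choose_pos_real n
  have hn : (0:ℝ) < (n:ℝ) + 1 := by positivity
  rw [abs_div, abs_pow, abs_neg, abs_one, one_pow]
  rw [abs_of_pos (by positivity : (0:ℝ) < ((n:ℝ)+1)^5 * ((2 * (n + 1)).choose (n + 1) : ℝ))]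
  rw [div_le_div_iff₀ (by positivity) (by positivity)]
  have hC1 : (1:ℝ) ≤ ((2 * (n + 1)).choose (n + 1) : ℝ) := by
    exact_mod_cast Nat.succ_le_of_lt (Nat.choose_pos (show n+1 ≤ 2*(n+1) by omega))
  have h1 : ((n:ℝ)+1)^2 ≤ ((n:ℝ)+1)^5 := by
    apply pow_le_pow_right₀ (by linarith) (by norm_num)
  nlinarith [pow_pos hn 2, pow_pos hn 5]

lemma summable_vv : Summable vv := by
  apply Summable.of_abs
  apply Summable.of_nonneg_of_le (fun n => abs_nonneg _)
    _ ((summable_shift_pow 2 (by norm_num)).mul_left 2)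
  intro n
  unfold vv
  have hC := choose_pos_real n
  have hn : (0:ℝ) < (n:ℝ) + 1 := by positivity
  have hC1 : (1:ℝ) ≤ ((2 * (n + 1)).choose (n + 1) : ℝ) := by
    exact_mod_cast Nat.succ_le_of_lt (Nat.choose_pos (show n+1 ≤ 2*(n+1) by omega))
  rw [abs_mul, abs_div, abs_pow, abs_neg, abs_one, one_pow, abs_of_nonneg (Hs_nonneg n)]
  rw [abs_of_pos (by positivity : (0:ℝ) < ((n:ℝ)+1)^3 * ((2 * (n + 1)).choose (n + 1) : ℝ))]
  rw [div_mul_eq_mul_div, div_le_iff₀ (by positivity)]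
  have h1 : ((n:ℝ)+1)^2 ≤ ((n:ℝ)+1)^3 := by
    apply pow_le_pow_right₀ (by linarith) (by norm_num)
  have hHs := Hs_le_two n
  have hHsn := Hs_nonneg n
  calc 1 * Hs n ≤ 2 := by linarith
    _ ≤ 2 / ((n:ℝ)+1)^2 * (((n:ℝ)+1)^2 * 1) := by
        rw [div_mul_eq_mul_div]
        rw [le_div_iff₀ (by positivity)]
        nlinarith [pow_pos hn 2]
    _ ≤ 2 / ((n:ℝ)+1)^2 * (((n:ℝ)+1)^3 * ((2 * (n + 1)).choose (n + 1) : ℝ)) := by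
        apply mul_le_mul_of_nonneg_left _ (by positivity)
        nlinarith [pow_pos hn 2, pow_pos hn 3]
    _ = 2 * (1 / ((n:ℝ)+1)^2) * (((n:ℝ)+1)^3 * ((2 * (n + 1)).choose (n + 1) : ℝ)) := by ring

lemma R_bound (N : ℕ) :
    ‖∑ i ∈ Finset.range (N - 1), (-1 : ℝ) ^ (i + 1) * e1 N (i + 1)‖ ≤ 2 / (N : ℝ) := by
  rcases le_or_gt N 1 with hN | hN
  · have h0 : N - 1 = 0 := by omega
    rw [h0]
    simp only [Finset.range_zero, Finset.sum_empty, norm_zero]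
    positivity
  · have hNpos : (0:ℝ) < (N:ℝ) := by exact_mod_cast Nat.lt_of_lt_of_le Nat.zero_lt_one (le_of_lt hN)
    rw [Real.norm_eq_abs]
    calc |∑ i ∈ Finset.range (N - 1), (-1 : ℝ) ^ (i + 1) * e1 N (i + 1)|
        ≤ ∑ i ∈ Finset.range (N - 1), |(-1 : ℝ) ^ (i + 1) * e1 N (i + 1)| :=
          Finset.abs_sum_le_sum_abs _ _
      _ ≤ ∑ i ∈ Finset.range (N - 1), 1 / (((i : ℝ) + 1) ^ 2 * N) := by
          apply Finset.sum_le_sum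
          intro i hi
          have hi' := Finset.mem_range.mp hi
          rw [abs_mul, abs_pow, abs_neg, abs_one, one_pow, one_mul]
          exact e1_bound i N (by omega)
      _ = (∑ i ∈ Finset.range (N - 1), 1 / ((i : ℝ) + 1) ^ 2) * (1 / (N:ℝ)) := by
          rw [Finset.sum_mul]
          apply Finset.sum_congr rfl
          intro i _
          rw [div_mul_div_comm, one_mul]
      _ ≤ 2 * (1 / (N:ℝ)) := by
          apply mul_le_mul_of_nonneg_right _ (by positivity)
          exact Hs_le_two (N - 1)
      _ = 2 / (N : ℝ) := by ring

lemma main_identity :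
    ∑' n : ℕ, 1 / ((n : ℝ) + 1) ^ 5 = 2 * (∑' k : ℕ, uu k) - (5/2) * ∑' k : ℕ, vv k := by
  have hsum5 := summable_shift_pow 5 (by norm_num)
  have hA := hsum5.hasSum.tendsto_sum_nat
  have hBu := summable_uu.hasSum.tendsto_sum_nat
  have hBv := summable_vv.hasSum.tendsto_sum_nat
  -- B tendsto
  have hB : Filter.Tendsto (fun N => ∑ n ∈ Finset.range N, bb (n + 1)) Filter.atTop
      (nhds (2 * (∑' k, uu k) - 2 * ∑' k, vv k)) := by
    have heq : ∀ N, ∑ n ∈ Finset.range N, bb (n + 1)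
        = 2 * (∑ n ∈ Finset.range N, uu n) - 2 * ∑ n ∈ Finset.range N, vv n := by
      intro N
      rw [Finset.mul_sum, Finset.mul_sum, ← Finset.sum_sub_distrib]
      apply Finset.sum_congr rfl
      intro n _
      rw [bb_decomp n]
      rfl
    simp only [heq]
    exact (hBu.const_mul 2).sub (hBv.const_mul 2)
  -- D tendsto
  have hD : Filter.Tendsto (fun N => ∑ i ∈ Finset.range (N - 1), (-1 : ℝ) ^ (i + 1) * e1 (i + 1) (i + 1))
      Filter.atTop (nhds ((1/2) * ∑' k, vv k)) := by
    have heq : ∀ N, ∑ i ∈ Finset.range (N - 1), (-1 : ℝ) ^ (i + 1) * e1 (i + 1) (i + 1)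
        = (1/2) * ∑ i ∈ Finset.range (N - 1), vv i := by
      intro N
      rw [Finset.mul_sum]
      apply Finset.sum_congr rfl
      intro i _
      rw [diag_eq i]
      rfl
    simp only [heq]
    have hcomp : Filter.Tendsto (fun N : ℕ => ∑ i ∈ Finset.range (N - 1), vv i)
        Filter.atTop (nhds (∑' k, vv k)) :=
      hBv.comp (Filter.tendsto_sub_atTop_nat 1)
    exact hcomp.const_mul (1/2)
  -- R tendsto 0
  have hR : Filter.Tendsto (fun N => ∑ i ∈ Finset.range (N - 1), (-1 : ℝ) ^ (i + 1) * e1 N (i + 1))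
      Filter.atTop (nhds 0) :=
    squeeze_zero_norm R_bound (tendsto_const_div_atTop_nhds_zero_nat 2)
  -- combine
  have hcomb : Filter.Tendsto (fun N => ∑ n ∈ Finset.range N, 1 / ((n : ℝ) + 1) ^ 5)
      Filter.atTop (nhds ((2 * (∑' k, uu k) - 2 * ∑' k, vv k) + (0 - (1/2) * ∑' k, vv k))) := by
    have : (fun N => ∑ n ∈ Finset.range N, 1 / ((n : ℝ) + 1) ^ 5)
        = fun N => (∑ n ∈ Finset.range N, bb (n + 1))
          + ((∑ i ∈ Finset.range (N - 1), (-1 : ℝ) ^ (i + 1) * e1 N (i + 1))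
             - ∑ i ∈ Finset.range (N - 1), (-1 : ℝ) ^ (i + 1) * e1 (i + 1) (i + 1)) := by
      funext N
      exact FIN N
    rw [this]
    exact hB.add (hR.sub hD)
  have := tendsto_nhds_unique hA hcomb
  rw [this]
  ring

theorem zeta_five_central_binom :
    ∑' n : ℕ, 1 / ((n : ℝ) + 1) ^ 5 =
      2 * (∑' k : ℕ, (-1 : ℝ) ^ k / (((k : ℝ) + 1) ^ 5 * ((2 * (k + 1)).choose (k + 1) : ℝ)))
      - (5 / 2) * ∑' k : ℕ,
          ((-1 : ℝ) ^ k / (((k : ℝ) + 1) ^ 3 * ((2 * (k + 1)).choose (k + 1) : ℝ))) *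
            ∑ j ∈ Finset.range k, 1 / ((j : ℝ) + 1) ^ 2 := by
  exact main_identity
end

section
/- For every positive integer n, (3n)!·n!/((2n)!·(2n)!) · ∑_{k=0}^{n} [(3n)_k·(n+1)_k·(−n)_k / ((2n+1)_k·(n+1/2)_k)] · (1/4)^k / k! = 1, where (a)_k denotes the Pochhammer symbol (rising factorial). -/
set_option maxHeartbeats 1000000

open Finset

/-- WZ summand: `a(n,k) = (-1)^k·3n·(3n-1+k)!·((n+k)!)²/(k!(n-k)!(2n+k)!(2n+2k)!)`. -/
noncomputable def wzA (n k : ℕ) : ℝ :=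
  (-1) ^ k * (3 * n) * (3 * n - 1 + k).factorial * ((n + k).factorial) ^ 2 /
    (k.factorial * (n - k).factorial * (2 * n + k).factorial * (2 * n + 2 * k).factorial)

/-- WZ certificate function. -/
noncomputable def wzG (n k : ℕ) : ℝ :=
  (-1) ^ (k + 1) * ((5 * n + 1) * k + 11 * n ^ 2 + 6 * n + 1) * k *
      (3 * n - 1 + k).factorial * ((n + k).factorial) ^ 2 /
    (k.factorial * (n + 1 - k).factorial * (2 * n + k + 1).factorial *
      (2 * n + 2 * k).factorial)

lemma wzG_zero (n : ℕ) : wzG n 0 = 0 := by simp [wzG]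

lemma fact_pos'_s8 (m : ℕ) : (0:ℝ) < (m.factorial : ℝ) := by
  exact_mod_cast m.factorial_pos

/-- Local WZ identity, part 1: for `1 ≤ n`, `k ≤ n`,
`a(n+1,k) - a(n,k) = G(n,k+1) - G(n,k)`. -/
lemma wz_local (n k : ℕ) (hn : 1 ≤ n) (hk : k ≤ n) :
    wzA (n + 1) k - wzA n k = wzG n (k + 1) - wzG n k := by
  obtain ⟨m, rfl⟩ : ∃ m, n = m + 1 := ⟨n - 1, by omega⟩
  simp only [wzA, wzG]
  rw [show 3 * (m + 1 + 1) - 1 + k = ((3*m+2+k)+1+1)+1 by omega,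
      show m + 1 + 1 + k = (m+1+k)+1 by omega,
      show m + 1 + 1 - k = (m+1-k)+1 by omega,
      show 2 * (m + 1 + 1) + k = ((2*m+2+k)+1)+1 by omega,
      show 2 * (m + 1 + 1) + 2 * k = ((2*m+2+2*k)+1)+1 by omega,
      show 3 * (m + 1) - 1 + (k + 1) = (3*m+2+k)+1 by omega,
      show m + 1 + (k + 1) = (m+1+k)+1 by omega,
      show m + 1 + 1 - (k + 1) = m+1-k by omega,
      show 2 * (m + 1) + (k + 1) + 1 = ((2*m+2+k)+1)+1 by omega,
      show 2 * (m + 1) + 2 * (k + 1) = ((2*m+2+2*k)+1)+1 by omega,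
      show 2 * (m + 1) + k + 1 = (2*m+2+k)+1 by omega,
      show 3 * (m + 1) - 1 + k = 3*m+2+k by omega,
      show 2 * (m + 1) + k = 2*m+2+k by omega,
      show 2 * (m + 1) + 2 * k = 2*m+2+2*k by omega]
  simp only [Nat.factorial_succ]
  have hc : ((m + 1 - k : ℕ) : ℝ) = (m : ℝ) + 1 - k := by
    rw [Nat.cast_sub (by omega : k ≤ m + 1)]; push_cast; ring
  have hk' : (k : ℝ) ≤ (m : ℝ) + 1 := by exact_mod_cast hk
  have hs : (m : ℝ) + 1 - k + 1 ≠ 0 := by nlinarith [hk']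
  have hR := (fact_pos'_s8 k).ne'
  have hS := (fact_pos'_s8 (m + 1 - k)).ne'
  have hT := (fact_pos'_s8 (2*m+2+k)).ne'
  have hU := (fact_pos'_s8 (2*m+2+2*k)).ne'
  push_cast [hc]
  rw [pow_succ]
  field_simp
  ring

/-- Local WZ identity, part 2 (boundary): `a(n+1,n+1) = -G(n,n+1)`. -/
lemma wz_boundary (n : ℕ) (hn : 1 ≤ n) :
    wzA (n + 1) (n + 1) = - wzG n (n + 1) := by
  obtain ⟨m, rfl⟩ : ∃ m, n = m + 1 := ⟨n - 1, by omega⟩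
  simp only [wzA, wzG]
  rw [show 3 * (m + 1 + 1) - 1 + (m + 1 + 1) = ((4*m+4)+1+1)+1 by omega,
      show m + 1 + 1 + (m + 1 + 1) = (2*m+3)+1 by omega,
      show m + 1 + 1 - (m + 1 + 1) = 0 by omega,
      show 2 * (m + 1 + 1) + (m + 1 + 1) = (3*m+5)+1 by omega,
      show 2 * (m + 1 + 1) + 2 * (m + 1 + 1) = (((4*m+4)+1)+1+1)+1 by omega,
      show 3 * (m + 1) - 1 + (m + 1 + 1) = 4*m+4 by omega,
      show m + 1 + (m + 1 + 1) = 2*m+3 by omega,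
      show 2 * (m + 1) + (m + 1 + 1) + 1 = 3*m+5 by omega,
      show 2 * (m + 1) + 2 * (m + 1 + 1) = ((4*m+4)+1)+1 by omega]
  simp only [Nat.factorial_succ, Nat.factorial_zero]
  have hP := (fact_pos'_s8 (4*m+4)).ne'
  have hQ := (fact_pos'_s8 (2*m+3)).ne'
  have hR := (fact_pos'_s8 (m+1+1)).ne'
  have hT := (fact_pos'_s8 (3*m+5)).ne'
  push_cast
  rw [pow_succ, pow_succ]
  field_simp
  ring

/-- The WZ sum is constantly 1. -/
lemma wz_sum (n : ℕ) (hn : 1 ≤ n) :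
    ∑ k ∈ range (n + 1), wzA n k = 1 := by
  induction n with
  | zero => omega
  | succ m ih =>
    rcases Nat.eq_or_lt_of_le hn with h1 | h1
    · -- n = 1 base case
      have hm : m = 0 := by omega
      subst hm
      rw [show (0:ℕ)+1+1 = 2 by rfl, Finset.sum_range_succ, Finset.sum_range_succ,
        Finset.sum_range_zero]
      simp only [wzA]
      norm_num [Nat.factorial]
    · have hm : 1 ≤ m := by omega
      have key : ∑ k ∈ range (m + 1 + 1), wzA (m + 1) k
          = ∑ k ∈ range (m + 1), wzA m k := by
        rw [Finset.sum_range_succ]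
        have h2 : ∑ k ∈ range (m + 1), wzA (m + 1) k
            = ∑ k ∈ range (m + 1), (wzA m k + (wzG m (k + 1) - wzG m k)) := by
          refine Finset.sum_congr rfl fun k hk => ?_
          have hkm : k ≤ m := by simpa [Nat.lt_succ_iff] using hk
          have := wz_local m k hm hkm
          linarith
        rw [h2, Finset.sum_add_distrib, Finset.sum_range_sub (f := fun k => wzG m k),
          wzG_zero, wz_boundary m hm]
        ring
      rw [key, ih hm]

/-- Recurrence in `k` for the hypergeometric term. -/
lemma t_rec (x : ℝ) (hx : 0 ≤ x) (k : ℕ) :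
    (ascPochhammer ℝ (k+1)).eval (3*x) * (ascPochhammer ℝ (k+1)).eval (x+1) *
        (ascPochhammer ℝ (k+1)).eval (-x) /
      ((ascPochhammer ℝ (k+1)).eval (2*x+1) * (ascPochhammer ℝ (k+1)).eval (x+1/2)) *
        (1/4)^(k+1) / (k+1).factorial
    = ((ascPochhammer ℝ k).eval (3*x) * (ascPochhammer ℝ k).eval (x+1) *
        (ascPochhammer ℝ k).eval (-x) /
      ((ascPochhammer ℝ k).eval (2*x+1) * (ascPochhammer ℝ k).eval (x+1/2)) *
        (1/4)^k / k.factorial) *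
      ((3*x+k) * (x+1+k) * (-x+k) * (1/4) / ((2*x+1+k) * (x+1/2+k) * ((k:ℝ)+1))) := by
  have hE4 : (0:ℝ) < (ascPochhammer ℝ k).eval (2*x+1) :=
    ascPochhammer_pos _ _ (by positivity)
  have hE5 : (0:ℝ) < (ascPochhammer ℝ k).eval (x+1/2) :=
    ascPochhammer_pos _ _ (by positivity)
  have h1 : (2*x+1+k) ≠ 0 := by positivity
  have h2 : (x+1/2+k) ≠ 0 := by positivity
  have h3 : ((k:ℝ)+1) ≠ 0 := by positivity
  have hR := (fact_pos'_s8 k).ne'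
  simp only [ascPochhammer_succ_eval, pow_succ, Nat.factorial_succ]
  push_cast
  field_simp [hE4.ne', hE5.ne']

/-- Recurrence in `k` for the WZ summand. -/
lemma wzA_rec (m k : ℕ) (hk : k + 1 ≤ m + 1) :
    wzA (m + 1) (k + 1) = wzA (m + 1) k *
      ((3 * ((m+1 : ℕ) : ℝ) + k) * (((m+1 : ℕ) : ℝ) + 1 + k) * (-((m+1 : ℕ) : ℝ) + k) * (1 / 4) /
        ((2 * ((m+1 : ℕ) : ℝ) + 1 + k) * (((m+1 : ℕ) : ℝ) + 1 / 2 + k) * ((k : ℝ) + 1))) := by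
  simp only [wzA]
  rw [show 3 * (m + 1) - 1 + (k + 1) = (3*m+2+k)+1 by omega,
      show m + 1 + (k + 1) = (m+1+k)+1 by omega,
      show m + 1 - (k + 1) = m - k by omega,
      show 2 * (m + 1) + (k + 1) = (2*m+2+k)+1 by omega,
      show 2 * (m + 1) + 2 * (k + 1) = ((2*m+2+2*k)+1)+1 by omega,
      show 3 * (m + 1) - 1 + k = 3*m+2+k by omega,
      show m + 1 - k = (m-k)+1 by omega,
      show 2 * (m + 1) + k = 2*m+2+k by omega,
      show 2 * (m + 1) + 2 * k = 2*m+2+2*k by omega]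
  simp only [Nat.factorial_succ]
  have hc : ((m - k : ℕ) : ℝ) = (m : ℝ) - k := by
    rw [Nat.cast_sub (by omega : k ≤ m)]
  have hk' : (k : ℝ) ≤ (m : ℝ) := by exact_mod_cast (by omega : k ≤ m)
  have hs : (m : ℝ) - k + 1 ≠ 0 := by nlinarith
  have h1 : (2 * ((m:ℝ) + 1) + 1 + k) ≠ 0 := by positivity
  have h2 : ((m:ℝ) + 1 + 1/2 + k) ≠ 0 := by positivity
  have h3 : ((k:ℝ) + 1) ≠ 0 := by positivity
  have hR := (fact_pos'_s8 k).ne'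
  have hS := (fact_pos'_s8 (m - k)).ne'
  have hT := (fact_pos'_s8 (2*m+2+k)).ne'
  have hU := (fact_pos'_s8 (2*m+2+2*k)).ne'
  push_cast [hc]
  rw [pow_succ]
  field_simp
  ring

/-- Per-term identity: prefactor times the hypergeometric term equals `wzA n k`. -/
lemma term_eq_s8 (n : ℕ) (hn : 0 < n) : ∀ k, k ≤ n →
    ((3 * n).factorial * n.factorial : ℝ) / (((2 * n).factorial) * ((2 * n).factorial)) *
      (((ascPochhammer ℝ k).eval (3 * n : ℝ) * (ascPochhammer ℝ k).eval ((n : ℝ) + 1) *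
              (ascPochhammer ℝ k).eval (-(n : ℝ)) /
            ((ascPochhammer ℝ k).eval (2 * (n : ℝ) + 1) *
              (ascPochhammer ℝ k).eval ((n : ℝ) + 1 / 2))) *
          (1 / 4) ^ k / k.factorial) = wzA n k := by
  obtain ⟨m, rfl⟩ : ∃ m, n = m + 1 := ⟨n - 1, by omega⟩
  intro k
  induction k with
  | zero =>
    intro _
    simp only [ascPochhammer_zero, Polynomial.eval_one, pow_zero, Nat.factorial_zero,
      Nat.cast_one, wzA]
    rw [show 3 * (m + 1) - 1 + 0 = 3*m+2 by omega,
        show m + 1 + 0 = m+1 by omega,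
        show m + 1 - 0 = m+1 by omega,
        show 2 * (m + 1) + 0 = 2*m+2 by omega,
        show 3 * (m + 1) = (3*m+2)+1 by omega,
        show 2 * (m + 1) = 2*m+2 by omega]
    simp only [Nat.factorial_succ]
    have h1 := (fact_pos'_s8 (3*m+2)).ne'
    have h2 := (fact_pos'_s8 (2*m+2)).ne'
    have h3 := (fact_pos'_s8 (m+1)).ne'
    push_cast
    field_simp
    ring
  | succ k ih =>
    intro hk1
    have hx : (0:ℝ) ≤ ((m+1 : ℕ) : ℝ) := by positivity
    have ht := t_rec ((m+1 : ℕ) : ℝ) hx k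
    rw [ht, wzA_rec m k hk1, ← ih (by omega)]
    ring

theorem finite_hypergeometric_identity (n : ℕ) (hn : 0 < n) :
    ((3 * n).factorial * n.factorial : ℝ) / (((2 * n).factorial) * ((2 * n).factorial)) *
      ∑ k ∈ Finset.range (n + 1),
        ((ascPochhammer ℝ k).eval (3 * n : ℝ) * (ascPochhammer ℝ k).eval ((n : ℝ) + 1) *
              (ascPochhammer ℝ k).eval (-(n : ℝ)) /
            ((ascPochhammer ℝ k).eval (2 * (n : ℝ) + 1) *
              (ascPochhammer ℝ k).eval ((n : ℝ) + 1 / 2))) *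
          (1 / 4) ^ k / k.factorial = 1 := by
  rw [Finset.mul_sum]
  rw [Finset.sum_congr rfl fun k hk =>
    term_eq_s8 n hn k (by simpa [Nat.lt_succ_iff] using hk)]
  exact wz_sum n hn
end

section
/- For every nonnegative integer n, the terminating hypergeometric sum ₃F₂(3n, n+1, −n; 2n+1, n+1/2 | 1/4) equals C(2n,n)/C(3n,n). -/
open Finset

lemma e_nat (a k : ℕ) :
    (ascPochhammer ℝ k).eval ((a : ℝ) + 1) * (a.factorial : ℝ) = ((a + k).factorial : ℝ) := by
  have h2 : (ascPochhammer ℝ k).eval ((a : ℝ) + 1) = (((a + 1).ascFactorial k : ℕ) : ℝ) := by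
    rw [show ((a : ℝ) + 1) = ((a + 1 : ℕ) : ℝ) by push_cast; ring, ← ascPochhammer_eval_cast,
      ascPochhammer_nat_eq_ascFactorial]
  rw [h2]
  exact_mod_cast congrArg (Nat.cast (R := ℝ))
    ((Nat.mul_comm _ _).trans (Nat.factorial_mul_ascFactorial a k))

lemma e_neg (n k : ℕ) (hk : k ≤ n) :
    (ascPochhammer ℝ k).eval (-(n : ℝ)) * ((n - k).factorial : ℝ)
      = (-1) ^ k * (n.factorial : ℝ) := by
  induction k with
  | zero => simp
  | succ k ih =>
    have hk' : k ≤ n := Nat.le_of_succ_le hk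
    have hcast : ((n - k : ℕ) : ℝ) = (n : ℝ) - k := by
      push_cast [hk']; ring
    have hfac : ((n - k).factorial : ℝ) = ((n - k : ℕ) : ℝ) * ((n - (k+1)).factorial : ℝ) := by
      have h1 : n - k = (n - (k+1)) + 1 := by omega
      rw [h1, Nat.factorial_succ]
      push_cast
      ring
    have this1 := ih hk'
    rw [hfac, hcast] at this1
    rw [ascPochhammer_succ_eval, pow_succ]
    linear_combination (-1 : ℝ) * this1

lemma e_neg_zero (n k : ℕ) (hk : n < k) :
    (ascPochhammer ℝ k).eval (-(n : ℝ)) = 0 := by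
  obtain ⟨m, rfl⟩ : ∃ m, k = (n + 1) + m := ⟨k - (n+1), by omega⟩
  have h := ascPochhammer_mul (S := ℝ) (n + 1) m
  have := congrArg (Polynomial.eval (-(n : ℝ))) h
  rw [Polynomial.eval_mul] at this
  rw [← this, ascPochhammer_succ_eval]
  have : (-(n : ℝ) + n) = 0 := by ring
  rw [this, mul_zero, zero_mul]

lemma e_half (n k : ℕ) :
    (ascPochhammer ℝ k).eval ((n : ℝ) + 1/2) * 4 ^ k * ((n + k).factorial : ℝ)
        * ((2 * n).factorial : ℝ)
      = ((2 * n + 2 * k).factorial : ℝ) * (n.factorial : ℝ) := by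
  induction k with
  | zero => push_cast; ring_nf; simp [mul_comm]
  | succ k ih =>
    have h1 : (n + (k+1)).factorial = (n + k + 1) * (n + k).factorial := by
      rw [show n + (k+1) = (n + k) + 1 by ring, Nat.factorial_succ]
    have h2 : (2 * n + 2 * (k+1)).factorial
        = (2*n+2*k+2) * ((2*n+2*k+1) * (2 * n + 2 * k).factorial) := by
      rw [show 2*n + 2*(k+1) = (2*n+2*k+1) + 1 by ring, Nat.factorial_succ,
        Nat.factorial_succ]
    rw [ascPochhammer_succ_eval, h1, h2]
    push_cast
    linear_combination (4 * ((n:ℝ) + k + 1/2) * ((n:ℝ) + k + 1)) * ih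

noncomputable def Thg (n k : ℕ) : ℝ :=
  (-1) ^ k * ((3*n+k).factorial : ℝ) * ((n+k).factorial : ℝ)^2 /
    ((3*n+k : ℕ) * ((n-k).factorial : ℝ) * ((2*n+k).factorial : ℝ)
      * ((2*n+2*k).factorial : ℝ) * (k.factorial : ℝ))

noncomputable def Ghg (n k : ℕ) : ℝ :=
  (-1) ^ (k+1) * k * (11*(n:ℝ)^2 + 6*n + 1 + (5*n+1)*k) * ((3*n+k).factorial : ℝ)
      * ((n+k).factorial : ℝ)^2 /
    ((3*n+k : ℕ) * ((n+1-k).factorial : ℝ) * ((2*n+k+1).factorial : ℝ)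
      * ((2*n+2*k).factorial : ℝ) * (k.factorial : ℝ))

lemma fact_ne (m : ℕ) : ((m.factorial : ℕ) : ℝ) ≠ 0 := by
  exact_mod_cast m.factorial_ne_zero

set_option maxHeartbeats 2000000 in
lemma step_hg (n k : ℕ) (hn : 1 ≤ n) (hk : k ≤ n) :
    3*((n:ℝ)+1) * Thg (n+1) k - 3*(n:ℝ) * Thg n k = Ghg n (k+1) - Ghg n k := by
  have hx : (1 : ℝ) ≤ (n : ℝ) := by exact_mod_cast hn
  have hy : (k : ℝ) ≤ (n : ℝ) := by exact_mod_cast hk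
  -- factorial expansions
  have hA : ((3*(n+1)+k).factorial : ℝ)
      = ((3*n+k).factorial : ℝ) * ((3*n+k+1) * ((3*n+k+2) * (3*n+k+3))) := by
    rw [show 3*(n+1)+k = (3*n+k) + 1 + 1 + 1 by ring]
    simp [Nat.factorial_succ]
    push_cast; ring
  have hB : (((n+1)+k).factorial : ℝ) = ((n+k).factorial : ℝ) * ((n:ℝ)+k+1) := by
    rw [show (n+1)+k = (n+k)+1 by ring, Nat.factorial_succ]; push_cast; ring
  have hC : (((n+1)-k).factorial : ℝ) = ((n-k).factorial : ℝ) * ((n:ℝ)-k+1) := by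
    rw [show (n+1)-k = (n-k)+1 by omega, Nat.factorial_succ]
    push_cast [hk]; ring
  have hD : ((2*(n+1)+k).factorial : ℝ)
      = ((2*n+k).factorial : ℝ) * ((2*n+k+1) * (2*n+k+2)) := by
    rw [show 2*(n+1)+k = (2*n+k)+1+1 by ring]
    simp [Nat.factorial_succ]; push_cast; ring
  have hD1 : ((2*n+k+1).factorial : ℝ) = ((2*n+k).factorial : ℝ) * (2*(n:ℝ)+k+1) := by
    rw [Nat.factorial_succ]; push_cast; ring
  have hD2 : ((2*n+(k+1)+1).factorial : ℝ)
      = ((2*n+k).factorial : ℝ) * ((2*(n:ℝ)+k+1) * (2*(n:ℝ)+k+2)) := by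
    rw [show 2*n+(k+1)+1 = (2*n+k)+1+1 by ring]
    simp [Nat.factorial_succ]; push_cast; ring
  have hE : ((2*(n+1)+2*k).factorial : ℝ)
      = ((2*n+2*k).factorial : ℝ) * ((2*(n:ℝ)+2*k+1) * (2*(n:ℝ)+2*k+2)) := by
    rw [show 2*(n+1)+2*k = (2*n+2*k)+1+1 by ring]
    simp [Nat.factorial_succ]; push_cast; ring
  have hE2 : ((2*n+2*(k+1)).factorial : ℝ)
      = ((2*n+2*k).factorial : ℝ) * ((2*(n:ℝ)+2*k+1) * (2*(n:ℝ)+2*k+2)) := by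
    rw [show 2*n+2*(k+1) = (2*n+2*k)+1+1 by ring]
    simp [Nat.factorial_succ]; push_cast; ring
  have hK : (((k+1)).factorial : ℝ) = (k.factorial : ℝ) * ((k:ℝ)+1) := by
    rw [Nat.factorial_succ]; push_cast; ring
  have hA1 : ((3*n+(k+1)).factorial : ℝ) = ((3*n+k).factorial : ℝ) * (3*(n:ℝ)+k+1) := by
    rw [show 3*n+(k+1) = (3*n+k)+1 by ring, Nat.factorial_succ]; push_cast; ring
  have hB1 : ((n+(k+1)).factorial : ℝ) = ((n+k).factorial : ℝ) * ((n:ℝ)+k+1) := by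
    rw [show n+(k+1) = (n+k)+1 by ring, Nat.factorial_succ]; push_cast; ring
  have hC1 : ((n+1-(k+1)).factorial : ℝ) = ((n-k).factorial : ℝ) := by
    rw [show n+1-(k+1) = n-k by omega]
  have hCn1 : ((n+1-k).factorial : ℝ) = ((n-k).factorial : ℝ) * ((n:ℝ)-k+1) := hC
  -- cast of (3n+k) divisors
  have c1 : ((3*(n+1)+k : ℕ) : ℝ) = 3*(n:ℝ)+k+3 := by push_cast; ring
  have c2 : ((3*n+k : ℕ) : ℝ) = 3*(n:ℝ)+k := by push_cast; ring
  have c3 : ((3*n+(k+1) : ℕ) : ℝ) = 3*(n:ℝ)+k+1 := by push_cast; ring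
  -- sign
  have hs : ((-1:ℝ)) ^ (k+1+1) = (-1:ℝ)^k := by ring
  have hs1 : ((-1:ℝ)) ^ (k+1) = -(-1:ℝ)^k := by ring
  simp only [Thg, Ghg, hA, hB, hC, hD, hD1, hD2, hE, hE2, hK, hA1, hB1, hC1, hCn1,
    c1, c2, c3, hs, hs1]
  have n1 : (3*(n:ℝ)+k) ≠ 0 := by positivity
  have n2 : (3*(n:ℝ)+k+1) ≠ 0 := by positivity
  have n3 : (3*(n:ℝ)+k+3) ≠ 0 := by positivity
  have n4 : ((n:ℝ)-k+1) ≠ 0 := by nlinarith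
  have n5 : (2*(n:ℝ)+k+1) ≠ 0 := by positivity
  have n6 : (2*(n:ℝ)+k+2) ≠ 0 := by positivity
  have n7 : (2*(n:ℝ)+2*k+1) ≠ 0 := by positivity
  have n8 : (2*(n:ℝ)+2*k+2) ≠ 0 := by positivity
  have n9 : ((k:ℝ)+1) ≠ 0 := by positivity
  have f1 := fact_ne (3*n+k)
  have f2 := fact_ne (n+k)
  have f3 := fact_ne (n-k)
  have f4 := fact_ne (2*n+k)
  have f5 := fact_ne (2*n+2*k)
  have f6 := fact_ne k
  field_simp
  push_cast
  ring

set_option maxHeartbeats 1000000 in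
lemma boundary_hg (n : ℕ) :
    3*((n:ℝ)+1) * Thg (n+1) (n+1) = - Ghg n (n+1) := by
  have h1 : ((3*(n+1)+(n+1)).factorial : ℝ)
      = ((4*n+1).factorial : ℝ) * ((4*(n:ℝ)+2) * ((4*(n:ℝ)+3) * (4*(n:ℝ)+4))) := by
    rw [show 3*(n+1)+(n+1) = (4*n+1)+1+1+1 by ring]
    simp [Nat.factorial_succ]; push_cast; ring
  have h2 : (((n+1)+(n+1)).factorial : ℝ) = ((2*n+1).factorial : ℝ) * (2*(n:ℝ)+2) := by
    rw [show (n+1)+(n+1) = (2*n+1)+1 by ring, Nat.factorial_succ]; push_cast; ring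
  have h3 : ((n+1)-(n+1)) = 0 := by omega
  have h4 : ((2*(n+1)+(n+1)).factorial : ℝ) = ((3*n+2).factorial : ℝ) * (3*(n:ℝ)+3) := by
    rw [show 2*(n+1)+(n+1) = (3*n+2)+1 by ring, Nat.factorial_succ]; push_cast; ring
  have h5 : ((2*(n+1)+2*(n+1)).factorial : ℝ)
      = ((4*n+1).factorial : ℝ) * ((4*(n:ℝ)+2) * ((4*(n:ℝ)+3) * (4*(n:ℝ)+4))) := by
    rw [show 2*(n+1)+2*(n+1) = (4*n+1)+1+1+1 by ring]
    simp [Nat.factorial_succ]; push_cast; ring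
  have g1 : ((3*n+(n+1)).factorial : ℝ) = ((4*n+1).factorial : ℝ) := by
    rw [show 3*n+(n+1) = 4*n+1 by ring]
  have g2 : ((n+(n+1)).factorial : ℝ) = ((2*n+1).factorial : ℝ) := by
    rw [show n+(n+1) = 2*n+1 by ring]
  have g3 : (n+1-(n+1)) = 0 := by omega
  have g4 : ((2*n+(n+1)+1).factorial : ℝ) = ((3*n+2).factorial : ℝ) := by
    rw [show 2*n+(n+1)+1 = 3*n+2 by ring]
  have g5 : ((2*n+2*(n+1)).factorial : ℝ) = ((4*n+1).factorial : ℝ) * (4*(n:ℝ)+2) := by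
    rw [show 2*n+2*(n+1) = (4*n+1)+1 by ring, Nat.factorial_succ]; push_cast; ring
  have c1 : ((3*(n+1)+(n+1) : ℕ) : ℝ) = 4*(n:ℝ)+4 := by push_cast; ring
  have c2 : ((3*n+(n+1) : ℕ) : ℝ) = 4*(n:ℝ)+1 := by push_cast; ring
  have hs : ((-1:ℝ)) ^ (n+1+1) = -(-1:ℝ)^(n+1) := by ring
  simp only [Thg, Ghg, h1, h2, h3, h4, h5, g1, g2, g3, g4, g5, c1, c2, hs,
    Nat.factorial_zero]
  have n1 : (4*(n:ℝ)+1) ≠ 0 := by positivity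
  have n2 : (4*(n:ℝ)+2) ≠ 0 := by positivity
  have n3 : (4*(n:ℝ)+3) ≠ 0 := by positivity
  have n4 : (4*(n:ℝ)+4) ≠ 0 := by positivity
  have n5 : (3*(n:ℝ)+3) ≠ 0 := by positivity
  have f1 := fact_ne (4*n+1)
  have f2 := fact_ne (2*n+1)
  have f3 := fact_ne (3*n+2)
  have f4 := fact_ne (n+1)
  have hcoef : 11*(n:ℝ)^2 + 6*n + 1 + (5*n+1)*((n+1:ℕ):ℝ)
      = (2*(n:ℝ)+1)*(4*(n:ℝ)+1)*2 := by push_cast; ring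
  rw [hcoef]
  field_simp
  push_cast
  ring

lemma Ghg_zero (n : ℕ) : Ghg n 0 = 0 := by
  simp [Ghg]

lemma sum_hg : ∀ n, 1 ≤ n → ∑ k ∈ Finset.range (n+1), Thg n k = 1/(3*(n:ℝ)) := by
  intro n hn
  induction n, hn using Nat.le_induction with
  | base =>
    rw [Finset.sum_range_succ, Finset.sum_range_succ, Finset.sum_range_zero]
    norm_num [Thg, Nat.factorial]
  | succ n hn ih =>
    have hpos : (0:ℝ) < 3*((n:ℝ)+1) := by positivity
    have key : 3*((n:ℝ)+1) * ∑ k ∈ Finset.range (n+2), Thg (n+1) k = 1 := by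
      rw [Finset.mul_sum, Finset.sum_range_succ]
      have : ∀ k ∈ Finset.range (n+1),
          3*((n:ℝ)+1) * Thg (n+1) k = 3*(n:ℝ) * Thg n k + (Ghg n (k+1) - Ghg n k) := by
        intro k hk
        have := step_hg n k hn (by simpa using Nat.lt_succ_iff.mp (Finset.mem_range.mp hk))
        linarith [this]
      rw [Finset.sum_congr rfl this, Finset.sum_add_distrib, Finset.sum_range_sub (Ghg n),
        ← Finset.mul_sum, ih, boundary_hg n, Ghg_zero]
      field_simp
      ring
    have := key
    rw [Finset.mul_sum] at this
    have h2 : ∑ k ∈ Finset.range (n+2), Thg (n+1) k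
        = (3*((n:ℝ)+1))⁻¹ * (3*((n:ℝ)+1) * ∑ k ∈ Finset.range (n+2), Thg (n+1) k) := by
      field_simp
    rw [h2, key]
    push_cast
    field_simp

lemma e_half_ne (n k : ℕ) : (ascPochhammer ℝ k).eval ((n : ℝ) + 1/2) ≠ 0 := by
  intro h
  have := e_half n k
  rw [h] at this
  simp only [zero_mul] at this
  exact (mul_ne_zero (fact_ne _) (fact_ne _)) this.symm

lemma e_two_ne (n k : ℕ) : (ascPochhammer ℝ k).eval (2*(n : ℝ) + 1) ≠ 0 := by
  intro h
  have h2 : (2*(n:ℝ)+1) = ((2*n : ℕ) : ℝ) + 1 := by push_cast; ring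
  have := e_nat (2*n) k
  rw [← h2, h, zero_mul] at this
  exact fact_ne _ this.symm

set_option maxHeartbeats 1000000 in
lemma term_hg (n k : ℕ) (hn : 1 ≤ n) (hk : k ≤ n) :
    ((ascPochhammer ℝ k).eval (3 * n : ℝ) * (ascPochhammer ℝ k).eval ((n : ℝ) + 1) *
          (ascPochhammer ℝ k).eval (-(n : ℝ)) /
        ((ascPochhammer ℝ k).eval (2 * (n : ℝ) + 1) *
          (ascPochhammer ℝ k).eval ((n : ℝ) + 1 / 2))) *
      (1 / 4) ^ k / k.factorial
    = 3*(n:ℝ) * ((2*n).factorial : ℝ)^2 / (((3*n).factorial : ℝ) * (n.factorial : ℝ))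
        * Thg n k := by
  obtain ⟨m, rfl⟩ : ∃ m, n = m + 1 := ⟨n - 1, by omega⟩
  have a1 : (3 * ((m+1 : ℕ) : ℝ)) = ((3*m+2 : ℕ) : ℝ) + 1 := by push_cast; ring
  have a4 : (2 * ((m+1 : ℕ) : ℝ) + 1) = ((2*(m+1) : ℕ) : ℝ) + 1 := by push_cast; ring
  have E1 := e_nat (3*m+2) k
  have E2 := e_nat (m+1) k
  have E4 := e_nat (2*(m+1)) k
  have E3 := e_neg (m+1) k hk
  have E5 := e_half (m+1) k
  rw [a1, a4]
  -- solve for the evals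
  have e1 : (ascPochhammer ℝ k).eval (((3*m+2 : ℕ) : ℝ) + 1)
      = ((3*m+2+k).factorial : ℝ) / ((3*m+2).factorial : ℝ) :=
    (eq_div_iff (fact_ne _)).mpr E1
  have e2 : (ascPochhammer ℝ k).eval (((m+1 : ℕ) : ℝ) + 1)
      = (((m+1)+k).factorial : ℝ) / ((m+1).factorial : ℝ) :=
    (eq_div_iff (fact_ne _)).mpr E2
  have e4 : (ascPochhammer ℝ k).eval (((2*(m+1) : ℕ) : ℝ) + 1)
      = ((2*(m+1)+k).factorial : ℝ) / ((2*(m+1)).factorial : ℝ) :=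
    (eq_div_iff (fact_ne _)).mpr E4
  have e3 : (ascPochhammer ℝ k).eval (-((m+1 : ℕ) : ℝ))
      = (-1)^k * (((m+1).factorial : ℝ)) / (((m+1)-k).factorial : ℝ) :=
    (eq_div_iff (fact_ne _)).mpr E3
  have e5 : (ascPochhammer ℝ k).eval (((m+1 : ℕ) : ℝ) + 1/2)
      = ((2*(m+1)+2*k).factorial : ℝ) * (((m+1).factorial : ℝ))
          / (4 ^ k * (((m+1)+k).factorial : ℝ) * ((2*(m+1)).factorial : ℝ)) := by
    rw [eq_div_iff (by positivity : (4:ℝ) ^ k * (((m+1)+k).factorial : ℝ)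
        * ((2*(m+1)).factorial : ℝ) ≠ 0)]
    calc (ascPochhammer ℝ k).eval (((m+1 : ℕ) : ℝ) + 1/2)
          * (4 ^ k * ((((m+1))+k).factorial : ℝ) * ((2*(m+1)).factorial : ℝ))
        = (ascPochhammer ℝ k).eval (((m+1 : ℕ) : ℝ) + 1/2) * 4 ^ k
            * ((((m+1))+k).factorial : ℝ) * ((2*(m+1)).factorial : ℝ) := by ring
      _ = _ := E5
  rw [e1, e2, e3, e4, e5]
  simp only [Thg]
  have hA : ((3*(m+1)+k).factorial : ℝ) = ((3*m+2+k).factorial : ℝ) * (3*(m:ℝ)+3+k) := by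
    rw [show 3*(m+1)+k = (3*m+2+k)+1 by ring, Nat.factorial_succ]; push_cast; ring
  have hF3 : ((3*(m+1)).factorial : ℝ) = ((3*m+2).factorial : ℝ) * (3*(m:ℝ)+3) := by
    rw [show 3*(m+1) = (3*m+2)+1 by ring, Nat.factorial_succ]; push_cast; ring
  have c2 : ((3*(m+1)+k : ℕ) : ℝ) = 3*(m:ℝ)+3+k := by push_cast; ring
  rw [hA, hF3, c2]
  have n1 : (3*(m:ℝ)+3+k) ≠ 0 := by positivity
  have n2 : (3*(m:ℝ)+3) ≠ 0 := by positivity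
  have n3 : ((m+1:ℕ):ℝ) ≠ 0 := by positivity
  have f1 := fact_ne (3*m+2+k)
  have f2 := fact_ne ((m+1)+k)
  have f3 := fact_ne ((m+1)-k)
  have f4 := fact_ne (2*(m+1)+k)
  have f5 := fact_ne (2*(m+1)+2*k)
  have f6 := fact_ne k
  have f7 := fact_ne (3*m+2)
  have f8 := fact_ne (m+1)
  have f9 := fact_ne (2*(m+1))
  have h4 : (4:ℝ) ^ k ≠ 0 := by positivity
  field_simp
  have h14 : (1/4:ℝ)^k * 4^k = 1 := by rw [← mul_pow]; norm_num
  push_cast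
  linear_combination (3*(m:ℝ)+3) * h14

theorem hypergeometric_3F2_value (n : ℕ) :
    ∑' k : ℕ,
        ((ascPochhammer ℝ k).eval (3 * n : ℝ) * (ascPochhammer ℝ k).eval ((n : ℝ) + 1) *
              (ascPochhammer ℝ k).eval (-(n : ℝ)) /
            ((ascPochhammer ℝ k).eval (2 * (n : ℝ) + 1) *
              (ascPochhammer ℝ k).eval ((n : ℝ) + 1 / 2))) *
          (1 / 4) ^ k / k.factorial =
      ((2 * n).choose n : ℝ) / ((3 * n).choose n : ℝ) := by
  rcases n with _ | m
  · rw [tsum_eq_single 0 ?_]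
    · norm_num [ascPochhammer_zero]
    · intro k hk
      have h0 : (ascPochhammer ℝ k).eval (-((0:ℕ):ℝ)) = 0 :=
        e_neg_zero 0 k (Nat.pos_of_ne_zero hk)
      rw [h0]
      simp
  · set N := m + 1 with hN
    have hN1 : 1 ≤ N := Nat.le_add_left 1 m
    have h0 : ∀ k ∉ Finset.range (N+1),
        ((ascPochhammer ℝ k).eval (3 * N : ℝ) * (ascPochhammer ℝ k).eval ((N : ℝ) + 1) *
              (ascPochhammer ℝ k).eval (-(N : ℝ)) /
            ((ascPochhammer ℝ k).eval (2 * (N : ℝ) + 1) *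
              (ascPochhammer ℝ k).eval ((N : ℝ) + 1 / 2))) *
          (1 / 4) ^ k / k.factorial = 0 := by
      intro k hk
      have hNk : N < k := by
        by_contra h
        exact hk (Finset.mem_range.mpr (by omega))
      rw [e_neg_zero N k hNk]
      simp
    rw [tsum_eq_sum h0]
    rw [Finset.sum_congr rfl
      (fun k hk => term_hg N k hN1 (Nat.lt_succ_iff.mp (Finset.mem_range.mp hk)))]
    rw [← Finset.mul_sum, sum_hg N hN1]
    rw [Nat.cast_choose ℝ (show N ≤ 2*N by omega), Nat.cast_choose ℝ (show N ≤ 3*N by omega),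
      show 2*N - N = N by omega, show 3*N - N = 2*N by omega]
    have f1 := fact_ne N
    have f2 := fact_ne (2*N)
    have f3 := fact_ne (3*N)
    have n1 : (3*(N:ℝ)) ≠ 0 := by positivity
    field_simp
end

section
/- For every positive integer n, 3·∑_{k=n}^{2n} [1/C(2k,k)] · ∏_{m=1}^{k-1}(4n²−m²) / ∏_{m=1, m≠n}^{k}(n²−m²) = 1. -/
open Nat

noncomputable def Fb (n j : ℕ) : ℝ :=
  (-1)^j * ((3*n+j-1).choose (n-1)) * (n.choose j) / ((2*n+2*j).choose (n+j))

noncomputable def Gc (n j : ℕ) : ℝ :=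
  (-1)^(j+1) * j * ((11*n^2+6*n+1 : ℕ)+(5*n+1)*j) * ((3*n+j-1).choose (n-1)) * ((n+1).choose j) /
    (3*n*(n+1)*(j+2*n+1)*((2*n+2*j).choose (n+j)))

set_option maxHeartbeats 2000000 in
lemma wz_main (m j : ℕ) (hj : j ≤ m+1) :
    Fb (m+2) j - Fb (m+1) j = Gc (m+1) (j+1) - Gc (m+1) j := by
  unfold Fb Gc
  rw [show 3*(m+2)+j-1 = 3*m+j+5 by omega, show (m+2)-1 = m+1 by omega,
      show 2*(m+2)+2*j = 2*m+2*j+4 by ring, show (m+2)+j = m+j+2 by ring,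
      show 3*(m+1)+j-1 = 3*m+j+2 by omega, show (m+1)-1 = m by omega,
      show 2*(m+1)+2*j = 2*m+2*j+2 by ring, show (m+1)+j = m+j+1 by ring,
      show 3*(m+1)+(j+1)-1 = 3*m+j+3 by omega,
      show 2*(m+1)+2*(j+1) = 2*m+2*j+4 by ring, show (m+1)+(j+1) = m+j+2 by ring,
      show (m+1)+1 = m+2 from rfl]
  rw [Nat.cast_choose ℝ (show m+1 ≤ 3*m+j+5 by omega),
      Nat.cast_choose ℝ (show j ≤ m+2 by omega),
      Nat.cast_choose ℝ (show m+j+2 ≤ 2*m+2*j+4 by omega),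
      Nat.cast_choose ℝ (show m ≤ 3*m+j+2 by omega),
      Nat.cast_choose ℝ (show j ≤ m+1 from hj),
      Nat.cast_choose ℝ (show m+j+1 ≤ 2*m+2*j+2 by omega),
      Nat.cast_choose ℝ (show m ≤ 3*m+j+3 by omega),
      Nat.cast_choose ℝ (show j+1 ≤ m+2 by omega)]
  rw [show 3*m+j+5-(m+1) = 2*m+j+4 by omega, show m+2-j = (m+1-j)+1 by omega,
      show 2*m+2*j+4-(m+j+2) = m+j+2 by omega,
      show 3*m+j+2-m = 2*m+j+2 by omega,
      show 2*m+2*j+2-(m+j+1) = m+j+1 by omega,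
      show 3*m+j+3-m = 2*m+j+3 by omega,
      show m+2-(j+1) = m+1-j by omega]
  have E1 : ((3*m+j+5)! : ℝ)
      = (3*(m:ℝ)+j+5)*(3*(m:ℝ)+j+4)*(3*(m:ℝ)+j+3) * ((3*m+j+2)! : ℝ) := by
    rw [show 3*m+j+5 = 3*m+j+2+1+1+1 by omega, Nat.factorial_succ, Nat.factorial_succ,
      Nat.factorial_succ]
    push_cast; ring
  have E2 : ((3*m+j+3)! : ℝ) = (3*(m:ℝ)+j+3) * ((3*m+j+2)! : ℝ) := by
    rw [show 3*m+j+3 = 3*m+j+2+1 by omega, Nat.factorial_succ]; push_cast; ring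
  have E3 : ((2*m+j+4)! : ℝ) = (2*(m:ℝ)+j+4)*(2*(m:ℝ)+j+3) * ((2*m+j+2)! : ℝ) := by
    rw [show 2*m+j+4 = 2*m+j+2+1+1 by omega, Nat.factorial_succ, Nat.factorial_succ]
    push_cast; ring
  have E4 : ((2*m+j+3)! : ℝ) = (2*(m:ℝ)+j+3) * ((2*m+j+2)! : ℝ) := by
    rw [show 2*m+j+3 = 2*m+j+2+1 by omega, Nat.factorial_succ]; push_cast; ring
  have E5 : ((m+2)! : ℝ) = ((m:ℝ)+2)*((m:ℝ)+1) * ((m)! : ℝ) := by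
    rw [show m+2 = m+1+1 by omega, Nat.factorial_succ, Nat.factorial_succ]; push_cast; ring
  have E6 : ((m+1)! : ℝ) = ((m:ℝ)+1) * ((m)! : ℝ) := by
    rw [Nat.factorial_succ]; push_cast; ring
  have E7 : ((j+1)! : ℝ) = ((j:ℝ)+1) * ((j)! : ℝ) := by
    rw [Nat.factorial_succ]; push_cast; ring
  have hsub : ((m+1-j : ℕ) : ℝ) = (m:ℝ)+1-j := by
    push_cast [Nat.cast_sub hj]; ring
  have E8 : ((m+1-j+1)! : ℝ) = ((m:ℝ)+2-j) * ((m+1-j)! : ℝ) := by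
    rw [Nat.factorial_succ]; push_cast [hsub]; ring
  have E9 : ((m+j+2)! : ℝ) = ((m:ℝ)+j+2) * ((m+j+1)! : ℝ) := by
    rw [show m+j+2 = m+j+1+1 by omega, Nat.factorial_succ]; push_cast; ring
  have E10 : ((2*m+2*j+4)! : ℝ)
      = (2*(m:ℝ)+2*j+4)*(2*(m:ℝ)+2*j+3) * ((2*m+2*j+2)! : ℝ) := by
    rw [show 2*m+2*j+4 = 2*m+2*j+2+1+1 by omega, Nat.factorial_succ, Nat.factorial_succ]
    push_cast; ring
  rw [E1, E2, E3, E4, E5, E6, E7, E8, E9, E10]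
  have n1 : ((3*m+j+2)! : ℝ) ≠ 0 := Nat.cast_ne_zero.mpr (Nat.factorial_ne_zero _)
  have n2 : ((2*m+j+2)! : ℝ) ≠ 0 := Nat.cast_ne_zero.mpr (Nat.factorial_ne_zero _)
  have n3 : ((m)! : ℝ) ≠ 0 := Nat.cast_ne_zero.mpr (Nat.factorial_ne_zero _)
  have n4 : ((j)! : ℝ) ≠ 0 := Nat.cast_ne_zero.mpr (Nat.factorial_ne_zero _)
  have n5 : ((m+1-j)! : ℝ) ≠ 0 := Nat.cast_ne_zero.mpr (Nat.factorial_ne_zero _)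
  have n6 : ((m+j+1)! : ℝ) ≠ 0 := Nat.cast_ne_zero.mpr (Nat.factorial_ne_zero _)
  have n7 : ((2*m+2*j+2)! : ℝ) ≠ 0 := Nat.cast_ne_zero.mpr (Nat.factorial_ne_zero _)
  have hjr : (j:ℝ) ≤ (m:ℝ)+1 := by exact_mod_cast hj
  have p1 : (m:ℝ)+2-j ≠ 0 := by nlinarith
  have p2 : (m:ℝ)+1 ≠ 0 := by positivity
  have p3 : (m:ℝ)+2 ≠ 0 := by positivity
  have p4 : (j:ℝ)+2*m+4 ≠ 0 := by positivity
  have p5 : (j:ℝ)+2*m+3 ≠ 0 := by positivity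
  rw [pow_succ, pow_succ]
  push_cast
  field_simp
  ring

-- case j = m+2
set_option maxHeartbeats 2000000 in
lemma wz_top (m : ℕ) :
    Fb (m+2) (m+2) - Fb (m+1) (m+2) = Gc (m+1) (m+3) - Gc (m+1) (m+2) := by
  have h1 : Fb (m+1) (m+2) = 0 := by
    unfold Fb
    rw [show (m+1).choose (m+2) = 0 from Nat.choose_eq_zero_of_lt (by omega)]
    simp
  have h2 : Gc (m+1) (m+3) = 0 := by
    unfold Gc
    rw [show (m+2).choose (m+3) = 0 from Nat.choose_eq_zero_of_lt (by omega)]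
    simp
  rw [h1, h2, sub_zero, zero_sub]
  unfold Fb Gc
  rw [show 3*(m+2)+(m+2)-1 = 4*m+7 by omega, show (m+2)-1 = m+1 by omega,
      show 2*(m+2)+2*(m+2) = 4*m+8 by ring, show (m+2)+(m+2) = 2*m+4 by ring,
      show 3*(m+1)+(m+2)-1 = 4*m+4 by omega, show (m+1)-1 = m by omega,
      show 2*(m+1)+2*(m+2) = 4*m+6 by ring, show (m+1)+(m+2) = 2*m+3 by ring,
      show (m+1)+1 = m+2 from rfl, Nat.choose_self]
  rw [Nat.cast_choose ℝ (show m+1 ≤ 4*m+7 by omega),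
      Nat.cast_choose ℝ (show 2*m+4 ≤ 4*m+8 by omega),
      Nat.cast_choose ℝ (show m ≤ 4*m+4 by omega),
      Nat.cast_choose ℝ (show 2*m+3 ≤ 4*m+6 by omega)]
  rw [show 4*m+7-(m+1) = 3*m+6 by omega, show 4*m+8-(2*m+4) = 2*m+4 by omega,
      show 4*m+4-m = 3*m+4 by omega, show 4*m+6-(2*m+3) = 2*m+3 by omega]
  have E1 : ((4*m+7)! : ℝ) = (4*(m:ℝ)+7)*(4*(m:ℝ)+6)*(4*(m:ℝ)+5) * ((4*m+4)! : ℝ) := by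
    rw [show 4*m+7 = 4*m+4+1+1+1 by omega, Nat.factorial_succ, Nat.factorial_succ,
      Nat.factorial_succ]; push_cast; ring
  have E2 : ((3*m+6)! : ℝ) = (3*(m:ℝ)+6)*(3*(m:ℝ)+5) * ((3*m+4)! : ℝ) := by
    rw [show 3*m+6 = 3*m+4+1+1 by omega, Nat.factorial_succ, Nat.factorial_succ]
    push_cast; ring
  have E3 : ((m+1)! : ℝ) = ((m:ℝ)+1) * ((m)! : ℝ) := by
    rw [Nat.factorial_succ]; push_cast; ring
  have E4 : ((4*m+8)! : ℝ) = (4*(m:ℝ)+8)*(4*(m:ℝ)+7) * ((4*m+6)! : ℝ) := by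
    rw [show 4*m+8 = 4*m+6+1+1 by omega, Nat.factorial_succ, Nat.factorial_succ]
    push_cast; ring
  have E5 : ((2*m+4)! : ℝ) = (2*(m:ℝ)+4) * ((2*m+3)! : ℝ) := by
    rw [show 2*m+4 = 2*m+3+1 by omega, Nat.factorial_succ]; push_cast; ring
  rw [E1, E2, E3, E4, E5]
  have n1 : ((4*m+4)! : ℝ) ≠ 0 := Nat.cast_ne_zero.mpr (Nat.factorial_ne_zero _)
  have n2 : ((3*m+4)! : ℝ) ≠ 0 := Nat.cast_ne_zero.mpr (Nat.factorial_ne_zero _)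
  have n3 : ((m)! : ℝ) ≠ 0 := Nat.cast_ne_zero.mpr (Nat.factorial_ne_zero _)
  have n4 : ((4*m+6)! : ℝ) ≠ 0 := Nat.cast_ne_zero.mpr (Nat.factorial_ne_zero _)
  have n5 : ((2*m+3)! : ℝ) ≠ 0 := Nat.cast_ne_zero.mpr (Nat.factorial_ne_zero _)
  have p2 : (m:ℝ)+1 ≠ 0 := by positivity
  have p3 : (m:ℝ)+2 ≠ 0 := by positivity
  rw [show m+3 = (m+2)+1 from rfl, pow_succ, pow_succ, pow_succ]
  push_cast
  field_simp
  ring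

lemma wz_high (m j : ℕ) (hj : m+2 ≤ j) :
    Fb (m+2) j - Fb (m+1) j = Gc (m+1) (j+1) - Gc (m+1) j := by
  rcases Nat.eq_or_lt_of_le hj with rfl | h'
  · exact wz_top m
  · have h1 : Fb (m+2) j = 0 := by
      unfold Fb; rw [show (m+2).choose j = 0 from Nat.choose_eq_zero_of_lt (by omega)]; simp
    have h2 : Fb (m+1) j = 0 := by
      unfold Fb; rw [show (m+1).choose j = 0 from Nat.choose_eq_zero_of_lt (by omega)]; simp
    have h3 : Gc (m+1) (j+1) = 0 := by
      unfold Gc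
      rw [show ((m+1)+1).choose (j+1) = 0 from Nat.choose_eq_zero_of_lt (by omega)]; simp
    have h4 : Gc (m+1) j = 0 := by
      unfold Gc
      rw [show ((m+1)+1).choose j = 0 from Nat.choose_eq_zero_of_lt (by omega)]; simp
    rw [h1, h2, h3, h4]

lemma wz_all (m j : ℕ) :
    Fb (m+2) j - Fb (m+1) j = Gc (m+1) (j+1) - Gc (m+1) j := by
  rcases le_or_gt j (m+1) with h | h
  · exact wz_main m j h
  · exact wz_high m j h

lemma key (n : ℕ) (hn : 1 ≤ n) : ∑ j ∈ Finset.range (n+1), Fb n j = 1/3 := by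
  induction n, hn using Nat.le_induction with
  | base =>
    rw [show (1:ℕ)+1 = 2 from rfl, Finset.sum_range_succ, Finset.sum_range_one]
    norm_num [Fb]
    norm_num [show Nat.choose 4 2 = 6 by decide]
  | succ m hm ih =>
    obtain ⟨m', rfl⟩ : ∃ m', m = m'+1 := ⟨m-1, by omega⟩
    have tele : ∑ j ∈ Finset.range (m'+3), (Fb (m'+2) j - Fb (m'+1) j)
        = Gc (m'+1) (m'+3) - Gc (m'+1) 0 := by
      rw [Finset.sum_congr rfl (fun j _ => wz_all m' j)]
      exact Finset.sum_range_sub (fun j => Gc (m'+1) j) (m'+3)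
    have g0 : Gc (m'+1) 0 = 0 := by unfold Gc; simp
    have gtop : Gc (m'+1) (m'+3) = 0 := by
      unfold Gc
      rw [show ((m'+1)+1).choose (m'+3) = 0 from Nat.choose_eq_zero_of_lt (by omega)]; simp
    have ftop : Fb (m'+1) (m'+2) = 0 := by
      unfold Fb
      rw [show (m'+1).choose (m'+2) = 0 from Nat.choose_eq_zero_of_lt (by omega)]; simp
    have : ∑ j ∈ Finset.range (m'+3), Fb (m'+2) j
        = ∑ j ∈ Finset.range (m'+3), Fb (m'+1) j := by
      have := Finset.sum_sub_distrib (s := Finset.range (m'+3))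
        (f := fun j => Fb (m'+2) j) (g := fun j => Fb (m'+1) j)
      rw [tele, g0, gtop] at *
      linarith [this]
    rw [show m'+1+1+1 = m'+3 by omega, this, Finset.sum_range_succ, ftop, add_zero]
    rw [show m'+2 = (m'+1)+1 by omega]
    exact ih

lemma prod_sq (c K : ℕ) (h : K+1 ≤ c) :
    ∏ m ∈ Finset.Icc 1 K, ((c:ℝ)^2-(m:ℝ)^2)
      = (((c-1)! : ℝ) * ((c+K)! : ℝ)) / (((c-1-K)! : ℝ) * ((c)! : ℝ)) := by
  induction K with
  | zero =>
    have n1 : ((c-1)! : ℝ) ≠ 0 := Nat.cast_ne_zero.mpr (Nat.factorial_ne_zero _)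
    have n2 : ((c)! : ℝ) ≠ 0 := Nat.cast_ne_zero.mpr (Nat.factorial_ne_zero _)
    simp [div_self, n1, n2, mul_ne_zero]
  | succ K ih =>
    have hK : K+1 ≤ c := by omega
    rw [Finset.prod_Icc_succ_top (by omega : 1 ≤ K+1), ih hK]
    have e1 : ((c+(K+1))! : ℝ) = ((c:ℝ)+K+1) * ((c+K)! : ℝ) := by
      rw [show c+(K+1) = (c+K)+1 by ring, Nat.factorial_succ]; push_cast; ring
    have e2 : ((c-1-K)! : ℝ) = ((c:ℝ)-1-K) * ((c-1-(K+1))! : ℝ) := by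
      rw [show c-1-K = (c-1-(K+1))+1 by omega, Nat.factorial_succ]
      have : ((c-1-(K+1)+1 : ℕ) : ℝ) = (c:ℝ)-1-K := by
        have h5 : (c-1-(K+1)+1 : ℕ) = c - (K+1) := by omega
        rw [h5, Nat.cast_sub (show K+1 ≤ c by omega)]
        push_cast; ring
      rw [Nat.cast_mul, this]
    rw [e1, e2]
    have n1 : ((c-1-(K+1))! : ℝ) ≠ 0 := Nat.cast_ne_zero.mpr (Nat.factorial_ne_zero _)
    have n2 : ((c)! : ℝ) ≠ 0 := Nat.cast_ne_zero.mpr (Nat.factorial_ne_zero _)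
    have n3 : (c:ℝ)-1-K ≠ 0 := by
      have : (K:ℝ)+2 ≤ c := by exact_mod_cast h
      nlinarith
    field_simp
    push_cast
    ring

lemma prod_low (n k : ℕ) (hn : 1 ≤ n) (hk : n ≤ k) :
    ∏ m ∈ Finset.Icc (n+1) k, ((n:ℝ)^2-(m:ℝ)^2)
      = (-1)^(k-n) * ((k-n)! : ℝ) * ((n+k)! : ℝ) / ((2*n)! : ℝ) := by
  induction k with
  | zero => omega
  | succ k ih =>
    rcases Nat.eq_or_lt_of_le hk with h | h
    · rw [← h]
      have n2 : ((2*n)! : ℝ) ≠ 0 := Nat.cast_ne_zero.mpr (Nat.factorial_ne_zero _)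
      rw [show n+n = 2*n by ring]
      simp [div_self, n2]
    · have hk' : n ≤ k := by omega
      rw [Finset.prod_Icc_succ_top (by omega : n+1 ≤ k+1), ih hk']
      have e1 : ((k+1-n)! : ℝ) = ((k:ℝ)+1-n) * ((k-n)! : ℝ) := by
        rw [show k+1-n = (k-n)+1 by omega, Nat.factorial_succ]
        have : ((k-n+1 : ℕ) : ℝ) = (k:ℝ)+1-n := by
          push_cast [Nat.cast_sub hk']; ring
        rw [Nat.cast_mul, this]
      have e2 : ((n+(k+1))! : ℝ) = ((n:ℝ)+k+1) * ((n+k)! : ℝ) := by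
        rw [show n+(k+1) = (n+k)+1 by ring, Nat.factorial_succ]; push_cast; ring
      have e3 : ((-1:ℝ))^(k+1-n) = (-1)^(k-n) * (-1) := by
        rw [show k+1-n = (k-n)+1 by omega, pow_succ]
      rw [e1, e2, e3]
      have n1 : ((2*n)! : ℝ) ≠ 0 := Nat.cast_ne_zero.mpr (Nat.factorial_ne_zero _)
      field_simp
      push_cast
      ring

lemma erase_eq_union (n k : ℕ) (hn : 1 ≤ n) (hk : n ≤ k) :
    (Finset.Icc 1 k).erase n = Finset.Icc 1 (n-1) ∪ Finset.Icc (n+1) k := by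
  ext x
  simp only [Finset.mem_erase, Finset.mem_Icc, Finset.mem_union]
  omega

lemma summand_eq (m j : ℕ) (hj : j ≤ m+1) :
    (1 / ((2*(m+1+j)).choose (m+1+j) : ℝ)) *
      ((∏ i ∈ Finset.Icc 1 (m+1+j-1), (4*((m+1:ℕ):ℝ)^2 - (i:ℝ)^2)) /
        ∏ i ∈ (Finset.Icc 1 (m+1+j)).erase (m+1), (((m+1:ℕ):ℝ)^2 - (i:ℝ)^2))
      = Fb (m+1) j := by
  have hP1 : ∏ i ∈ Finset.Icc 1 (m+1+j-1), (4*((m+1:ℕ):ℝ)^2 - (i:ℝ)^2)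
      = (((2*m+1)! : ℝ) * ((3*m+j+2)! : ℝ)) / (((m+1-j)! : ℝ) * ((2*m+2)! : ℝ)) := by
    have := prod_sq (2*m+2) (m+j) (by omega)
    rw [show m+1+j-1 = m+j by omega]
    rw [show (4*((m+1:ℕ):ℝ)^2) = ((2*m+2 : ℕ):ℝ)^2 by push_cast; ring, this]
    rw [show 2*m+2-1 = 2*m+1 by omega, show 2*m+2+(m+j) = 3*m+j+2 by ring,
        show 2*m+1-(m+j) = m+1-j by omega]
  have hsplit : ∏ i ∈ (Finset.Icc 1 (m+1+j)).erase (m+1), (((m+1:ℕ):ℝ)^2 - (i:ℝ)^2)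
      = (∏ i ∈ Finset.Icc 1 m, (((m+1:ℕ):ℝ)^2 - (i:ℝ)^2)) *
        ∏ i ∈ Finset.Icc (m+2) (m+1+j), (((m+1:ℕ):ℝ)^2 - (i:ℝ)^2) := by
    rw [erase_eq_union (m+1) (m+1+j) (by omega) (by omega),
        show m+1-1 = m by omega]
    rw [Finset.prod_union (by
      rw [Finset.disjoint_left]
      intro x hx hx'
      simp only [Finset.mem_Icc] at hx hx'
      omega)]
  have hP2a : ∏ i ∈ Finset.Icc 1 m, (((m+1:ℕ):ℝ)^2 - (i:ℝ)^2)
      = (((m)! : ℝ) * ((2*m+1)! : ℝ)) / ((m+1)! : ℝ) := by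
    have := prod_sq (m+1) m (by omega)
    rw [this, show m+1-1 = m by omega, show m+1+m = 2*m+1 by ring, show m-m = 0 by omega]
    simp
  have hP2b : ∏ i ∈ Finset.Icc (m+2) (m+1+j), (((m+1:ℕ):ℝ)^2 - (i:ℝ)^2)
      = (-1)^j * ((j)! : ℝ) * ((2*m+j+2)! : ℝ) / ((2*m+2)! : ℝ) := by
    have := prod_low (m+1) (m+1+j) (by omega) (by omega)
    rw [show (m+1)+1 = m+2 from rfl] at this
    rw [this, show m+1+j-(m+1) = j by omega, show m+1+(m+1+j) = 2*m+j+2 by ring,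
        show 2*(m+1) = 2*m+2 by ring]
  rw [hP1, hsplit, hP2a, hP2b]
  unfold Fb
  rw [show 3*(m+1)+j-1 = 3*m+j+2 by omega, show (m+1)-1 = m by omega,
      show 2*(m+1)+2*j = 2*m+2*j+2 by ring, show (m+1)+j = m+j+1 by ring,
      show 2*(m+j+1) = 2*m+2*j+2 by ring]
  rw [Nat.cast_choose ℝ (show m ≤ 3*m+j+2 by omega),
      Nat.cast_choose ℝ (show j ≤ m+1 from hj),
      Nat.cast_choose ℝ (show m+j+1 ≤ 2*m+2*j+2 by omega)]
  rw [show 3*m+j+2-m = 2*m+j+2 by omega, show 2*m+2*j+2-(m+j+1) = m+j+1 by omega]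
  have E5 : ((m+1)! : ℝ) = ((m:ℝ)+1) * ((m)! : ℝ) := by
    rw [Nat.factorial_succ]; push_cast; ring
  have E6 : ((2*m+2)! : ℝ) = (2*(m:ℝ)+2) * ((2*m+1)! : ℝ) := by
    rw [show 2*m+2 = 2*m+1+1 by omega, Nat.factorial_succ]; push_cast; ring
  rw [E5, E6]
  have n1 : ((2*m+1)! : ℝ) ≠ 0 := Nat.cast_ne_zero.mpr (Nat.factorial_ne_zero _)
  have n2 : ((3*m+j+2)! : ℝ) ≠ 0 := Nat.cast_ne_zero.mpr (Nat.factorial_ne_zero _)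
  have n3 : ((m+1-j)! : ℝ) ≠ 0 := Nat.cast_ne_zero.mpr (Nat.factorial_ne_zero _)
  have n4 : ((m)! : ℝ) ≠ 0 := Nat.cast_ne_zero.mpr (Nat.factorial_ne_zero _)
  have n5 : ((j)! : ℝ) ≠ 0 := Nat.cast_ne_zero.mpr (Nat.factorial_ne_zero _)
  have n6 : ((2*m+j+2)! : ℝ) ≠ 0 := Nat.cast_ne_zero.mpr (Nat.factorial_ne_zero _)
  have n7 : ((m+j+1)! : ℝ) ≠ 0 := Nat.cast_ne_zero.mpr (Nat.factorial_ne_zero _)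
  have n8 : ((2*m+2*j+2)! : ℝ) ≠ 0 := Nat.cast_ne_zero.mpr (Nat.factorial_ne_zero _)
  have p2 : (m:ℝ)+1 ≠ 0 := by positivity
  have p3 : 2*(m:ℝ)+2 ≠ 0 := by positivity
  rcases Nat.even_or_odd j with he | ho
  · rw [he.neg_one_pow]
    field_simp
  · rw [ho.neg_one_pow]
    field_simp


theorem finite_central_binom_sum (n : ℕ) (hn : 0 < n) :
    3 * ∑ k ∈ Finset.Icc n (2 * n),
        (1 / ((2 * k).choose k : ℝ)) *
          ((∏ m ∈ Finset.Icc 1 (k - 1), (4 * (n : ℝ) ^ 2 - (m : ℝ) ^ 2)) /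
            ∏ m ∈ (Finset.Icc 1 k).erase n, ((n : ℝ) ^ 2 - (m : ℝ) ^ 2)) = 1 := by
  obtain ⟨m, rfl⟩ : ∃ m, n = m+1 := ⟨n-1, by omega⟩
  rw [← Finset.Ico_add_one_right_eq_Icc, Finset.sum_Ico_eq_sum_range]
  rw [show 2*(m+1)+1-(m+1) = m+2 by omega]
  have hs : ∑ j ∈ Finset.range (m+2),
      (1 / ((2 * (m+1+j)).choose (m+1+j) : ℝ)) *
        ((∏ i ∈ Finset.Icc 1 (m+1+j - 1), (4 * ((m+1:ℕ) : ℝ) ^ 2 - (i : ℝ) ^ 2)) /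
          ∏ i ∈ (Finset.Icc 1 (m+1+j)).erase (m+1), (((m+1:ℕ) : ℝ) ^ 2 - (i : ℝ) ^ 2))
      = ∑ j ∈ Finset.range (m+2), Fb (m+1) j := by
    refine Finset.sum_congr rfl (fun j hj => ?_)
    rw [Finset.mem_range] at hj
    exact summand_eq m j (by omega)
  rw [hs, show m+2 = (m+1)+1 from rfl, key (m+1) (by omega)]
  norm_num
end

section
/- ζ(6) = 3·∑_{k=1}^∞ 1/(k⁶·C(2k,k)) − 9·∑_{k=1}^∞ (1/(k⁴·C(2k,k)))·∑_{j=1}^{k-1} 1/j² − (45/2)·∑_{k=1}^∞ (1/(k²·C(2k,k)))·∑_{j=1}^{k-1} 1/j⁴ + (27/2)·∑_{k=1}^∞ (1/(k²·C(2k,k)))·(∑_{j=1}^{k-1} 1/j²)². -/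
noncomputable section
namespace Z6
open Finset Filter Topology


def s2 (K : ℕ) : ℝ := ∑ j ∈ Finset.range K, 1/((j:ℝ)+1)^2
def s4 (K : ℕ) : ℝ := ∑ j ∈ Finset.range K, 1/((j:ℝ)+1)^4
def t2 (K n : ℕ) : ℝ := ∑ j ∈ Finset.range (K+1), 1/((n:ℝ)+1+j)^2
def t4 (K n : ℕ) : ℝ := ∑ j ∈ Finset.range (K+1), 1/((n:ℝ)+1+j)^4
def Pp (K n : ℕ) : ℝ := ∏ j ∈ Finset.range (K+1), ((n:ℝ)+1+j)^2
def Rr (K n : ℕ) : ℝ := ((K.factorial : ℝ))^4 / (((2*K).factorial : ℝ) * Pp K n)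
def Gf (a b u v : ℝ) : ℝ := (a^2+b)/2 - 4*u*a + 8*(u^2-v)
def a2 (K n : ℕ) : ℝ := Rr K n * Gf (t2 K n) (t4 K n) (s2 K) (s4 K)
def wf (K n : ℕ) : ℝ := (2*((n:ℝ)+1)+3*(K:ℝ)+1)/(2*(2*(K:ℝ)+1))
def b2 (K n : ℕ) : ℝ := wf K n * a2 K n

lemma Gf_shift1 (a b u v e e2 κ κ2 : ℝ) (he : e2 = e^2) (hκ : κ2 = κ^2) :
    Gf (a+e) (b+e2) (u+κ) (v+κ2) = Gf a b u v + (e-4*κ)*(a+e-4*u) := by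
  subst he hκ; unfold Gf; ring

lemma Gf_shift2 (a b u v e e2 z z2 : ℝ) (he : e2 = e^2) (hz : z2 = z^2) :
    Gf (a+e-z) (b+e2-z2) u v = Gf a b u v + (e-z)*(a+e-4*u) := by
  subst he hz; unfold Gf; ring

lemma Pp_pos (K n : ℕ) : 0 < Pp K n := by
  apply Finset.prod_pos; intro j _; positivity

lemma Rr_pos (K n : ℕ) : 0 < Rr K n := by
  unfold Rr
  have := Pp_pos K n
  have h1 : (0:ℝ) < (K.factorial : ℝ) := by exact_mod_cast K.factorial_pos
  have h2 : (0:ℝ) < ((2*K).factorial : ℝ) := by exact_mod_cast (2*K).factorial_pos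
  positivity

lemma Pp_succK (K n : ℕ) :
    Pp (K+1) n = Pp K n * ((n:ℝ)+1+((K:ℝ)+1))^2 := by
  unfold Pp
  rw [Finset.prod_range_succ]
  push_cast; ring

lemma Pp_succn (K n : ℕ) :
    Pp K (n+1) * ((n:ℝ)+1)^2 = Pp K n * ((n:ℝ)+1+((K:ℝ)+1))^2 := by
  have h1 : Pp K n * ((n:ℝ)+1+((K:ℝ)+1))^2 = ∏ j ∈ Finset.range (K+2), ((n:ℝ)+1+j)^2 := by
    rw [Finset.prod_range_succ (fun j => ((n:ℝ)+1+j)^2) (K+1)]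
    unfold Pp; push_cast; ring
  have h2 : Pp K (n+1) * ((n:ℝ)+1)^2 = ∏ j ∈ Finset.range (K+2), ((n:ℝ)+1+j)^2 := by
    rw [Finset.prod_range_succ' (fun j => ((n:ℝ)+1+j)^2) (K+1)]
    unfold Pp; push_cast
    congr 1
    · apply Finset.prod_congr rfl; intro j _; ring
    · ring
  rw [h1, h2]

lemma t2_succK (K n : ℕ) :
    t2 (K+1) n = t2 K n + 1/((n:ℝ)+1+((K:ℝ)+1))^2 := by
  unfold t2; rw [Finset.sum_range_succ]; push_cast; ring

lemma t4_succK (K n : ℕ) :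
    t4 (K+1) n = t4 K n + 1/((n:ℝ)+1+((K:ℝ)+1))^4 := by
  unfold t4; rw [Finset.sum_range_succ]; push_cast; ring

lemma t2_succn (K n : ℕ) :
    t2 K (n+1) = t2 K n + 1/((n:ℝ)+1+((K:ℝ)+1))^2 - 1/((n:ℝ)+1)^2 := by
  have h1 : t2 K n + 1/((n:ℝ)+1+((K:ℝ)+1))^2 = ∑ j ∈ Finset.range (K+2), 1/((n:ℝ)+1+j)^2 := by
    rw [Finset.sum_range_succ (fun j => 1/((n:ℝ)+1+j)^2) (K+1)]
    unfold t2; push_cast; ring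
  have h2 : t2 K (n+1) + 1/((n:ℝ)+1)^2 = ∑ j ∈ Finset.range (K+2), 1/((n:ℝ)+1+j)^2 := by
    rw [Finset.sum_range_succ' (fun j => 1/((n:ℝ)+1+j)^2) (K+1)]
    unfold t2; push_cast
    congr 1
    · apply Finset.sum_congr rfl; intro j _; norm_num; ring_nf
    · norm_num
  linarith [h1, h2]

lemma t4_succn (K n : ℕ) :
    t4 K (n+1) = t4 K n + 1/((n:ℝ)+1+((K:ℝ)+1))^4 - 1/((n:ℝ)+1)^4 := by
  have h1 : t4 K n + 1/((n:ℝ)+1+((K:ℝ)+1))^4 = ∑ j ∈ Finset.range (K+2), 1/((n:ℝ)+1+j)^4 := by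
    rw [Finset.sum_range_succ (fun j => 1/((n:ℝ)+1+j)^4) (K+1)]
    unfold t4; push_cast; ring
  have h2 : t4 K (n+1) + 1/((n:ℝ)+1)^4 = ∑ j ∈ Finset.range (K+2), 1/((n:ℝ)+1+j)^4 := by
    rw [Finset.sum_range_succ' (fun j => 1/((n:ℝ)+1+j)^4) (K+1)]
    unfold t4; push_cast
    congr 1
    · apply Finset.sum_congr rfl; intro j _; norm_num; ring_nf
    · norm_num
  linarith [h1, h2]

lemma s2_succ (K : ℕ) : s2 (K+1) = s2 K + 1/((K:ℝ)+1)^2 := by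
  unfold s2; rw [Finset.sum_range_succ]

lemma s4_succ (K : ℕ) : s4 (K+1) = s4 K + 1/((K:ℝ)+1)^4 := by
  unfold s4; rw [Finset.sum_range_succ]

lemma Rr_succK (K n : ℕ) :
    Rr (K+1) n = Rr K n * (((K:ℝ)+1)^3/(2*(2*(K:ℝ)+1))) * (1/((n:ℝ)+1+((K:ℝ)+1))^2) := by
  unfold Rr
  rw [Pp_succK]
  have hf1 : ((K+1).factorial : ℝ) = ((K:ℝ)+1) * (K.factorial : ℝ) := by
    push_cast [Nat.factorial_succ]; ring
  have hf2 : ((2*(K+1)).factorial : ℝ) = (2*(K:ℝ)+2)*(2*(K:ℝ)+1) * ((2*K).factorial : ℝ) := by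
    have : 2*(K+1) = (2*K+1)+1 := by ring
    rw [this, Nat.factorial_succ, Nat.factorial_succ]
    push_cast; ring
  rw [hf1, hf2]
  have h1 : ((2*K).factorial : ℝ) ≠ 0 := by exact_mod_cast (2*K).factorial_ne_zero
  have h2 : Pp K n ≠ 0 := ne_of_gt (Pp_pos K n)
  have h3 : ((n:ℝ)+1+((K:ℝ)+1)) ≠ 0 := by positivity
  have h4 : (2*(K:ℝ)+1) ≠ 0 := by positivity
  have h5 : (2*(K:ℝ)+2) ≠ 0 := by positivity
  field_simp

lemma Rr_succn (K n : ℕ) :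
    Rr K (n+1) = Rr K n * ((n:ℝ)+1)^2 * (1/((n:ℝ)+1+((K:ℝ)+1))^2) := by
  unfold Rr
  have h := Pp_succn K n
  have h2 : Pp K n ≠ 0 := ne_of_gt (Pp_pos K n)
  have h2' : Pp K (n+1) ≠ 0 := ne_of_gt (Pp_pos K (n+1))
  have h3 : ((n:ℝ)+1+((K:ℝ)+1)) ≠ 0 := by positivity
  have h4 : ((n:ℝ)+1) ≠ 0 := by positivity
  have h1 : ((2*K).factorial : ℝ) ≠ 0 := by exact_mod_cast (2*K).factorial_ne_zero
  field_simp
  linear_combination (-1:ℝ) * h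


lemma key (K n : ℕ) : a2 K n - a2 (K+1) n = b2 K n - b2 K (n+1) := by
  have hX : ((n:ℝ)+1+((K:ℝ)+1)) ≠ 0 := by positivity
  have hn : ((n:ℝ)+1) ≠ 0 := by positivity
  have hK : ((K:ℝ)+1) ≠ 0 := by positivity
  have h2K : (2*(K:ℝ)+1) ≠ 0 := by positivity
  unfold b2 a2 wf
  rw [Rr_succK, Rr_succn, t2_succK, t4_succK, t2_succn, t4_succn, s2_succ, s4_succ]
  rw [Gf_shift1 (t2 K n) (t4 K n) (s2 K) (s4 K) (1/((n:ℝ)+1+((K:ℝ)+1))^2)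
      (1/((n:ℝ)+1+((K:ℝ)+1))^4) (1/((K:ℝ)+1)^2) (1/((K:ℝ)+1)^4) (by rw [div_pow, one_pow, ← pow_mul]) (by rw [div_pow, one_pow, ← pow_mul])]
  rw [Gf_shift2 (t2 K n) (t4 K n) (s2 K) (s4 K) (1/((n:ℝ)+1+((K:ℝ)+1))^2)
      (1/((n:ℝ)+1+((K:ℝ)+1))^4) (1/((n:ℝ)+1)^2) (1/((n:ℝ)+1)^4) (by rw [div_pow, one_pow, ← pow_mul]) (by rw [div_pow, one_pow, ← pow_mul])]
  push_cast
  set A := Rr K n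
  set B := Gf (t2 K n) (t4 K n) (s2 K) (s4 K)
  set T := t2 K n
  set U := s2 K
  field_simp
  ring



lemma s2_nonneg (K : ℕ) : 0 ≤ s2 K := by
  unfold s2; apply Finset.sum_nonneg; intro j _; positivity

lemma s4_nonneg (K : ℕ) : 0 ≤ s4 K := by
  unfold s4; apply Finset.sum_nonneg; intro j _; positivity

lemma t2_nonneg (K n : ℕ) : 0 ≤ t2 K n := by
  unfold t2; apply Finset.sum_nonneg; intro j _; positivity

lemma t4_nonneg (K n : ℕ) : 0 ≤ t4 K n := by
  unfold t4; apply Finset.sum_nonneg; intro j _; positivity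

lemma s2_le (K : ℕ) : s2 K ≤ 2 - 2/((K:ℝ)+1) := by
  induction K with
  | zero => simp [s2]
  | succ K ih =>
    rw [s2_succ]
    have h1 : (0:ℝ) < (K:ℝ)+1 := by positivity
    have h2 : (0:ℝ) < (K:ℝ)+2 := by positivity
    have key : 1/((K:ℝ)+1)^2 ≤ 2/((K:ℝ)+1) - 2/((K:ℝ)+2) := by
      rw [div_sub_div _ _ (ne_of_gt h1) (ne_of_gt h2), div_le_div_iff₀ (by positivity) (by positivity)]
      nlinarith
    push_cast
    have : ((K:ℝ)+1+1) = (K:ℝ)+2 := by ring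
    rw [this]
    linarith

lemma s2_le_two (K : ℕ) : s2 K ≤ 2 := by
  have := s2_le K
  have h1 : (0:ℝ) < (K:ℝ)+1 := by positivity
  have : 0 ≤ 2/((K:ℝ)+1) := by positivity
  linarith [s2_le K]

lemma s4_le_s2 (K : ℕ) : s4 K ≤ s2 K := by
  unfold s4 s2
  apply Finset.sum_le_sum
  intro j _
  have h0 : (0:ℝ) ≤ (j:ℝ) := by positivity
  have h1 : (1:ℝ) ≤ (j:ℝ)+1 := by linarith
  have h2 : ((j:ℝ)+1)^2 ≤ ((j:ℝ)+1)^4 := pow_le_pow_right₀ h1 (by norm_num)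
  apply one_div_le_one_div_of_le (by positivity) h2

lemma s4_le_two (K : ℕ) : s4 K ≤ 2 := le_trans (s4_le_s2 K) (s2_le_two K)

lemma t2_le_s2 (K n : ℕ) : t2 K n ≤ s2 (K+1) := by
  unfold t2 s2
  apply Finset.sum_le_sum
  intro j _
  apply one_div_le_one_div_of_le (by positivity)
  have h0 : (0:ℝ) ≤ (n:ℝ) := by positivity
  have h0j : (0:ℝ) ≤ (j:ℝ) := by positivity
  nlinarith

lemma t2_le_two (K n : ℕ) : t2 K n ≤ 2 := le_trans (t2_le_s2 K n) (s2_le_two (K+1))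

lemma t4_le_t2 (K n : ℕ) : t4 K n ≤ t2 K n := by
  unfold t4 t2
  apply Finset.sum_le_sum
  intro j _
  have h0 : (0:ℝ) ≤ (n:ℝ) := by positivity
  have h0j : (0:ℝ) ≤ (j:ℝ) := by positivity
  have h1 : (1:ℝ) ≤ (n:ℝ)+1+(j:ℝ) := by linarith
  have h2 : ((n:ℝ)+1+j)^2 ≤ ((n:ℝ)+1+j)^4 := pow_le_pow_right₀ h1 (by norm_num)
  apply one_div_le_one_div_of_le (by positivity) h2

lemma t4_le_two (K n : ℕ) : t4 K n ≤ 2 := le_trans (t4_le_t2 K n) (t2_le_two K n)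

lemma Gf_bound {a b u v : ℝ} (ha0 : 0 ≤ a) (ha : a ≤ 2) (hb0 : 0 ≤ b) (hb : b ≤ 2)
    (hu0 : 0 ≤ u) (hu : u ≤ 2) (hv0 : 0 ≤ v) (hv : v ≤ 2) : |Gf a b u v| ≤ 67 := by
  rw [Gf, abs_le]
  constructor <;> nlinarith

def q (K : ℕ) : ℝ := ((K.factorial : ℝ))^2 / ((2*K).factorial : ℝ)

lemma q_pos (K : ℕ) : 0 < q K := by
  unfold q
  have h1 : (0:ℝ) < (K.factorial : ℝ) := by exact_mod_cast K.factorial_pos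
  have h2 : (0:ℝ) < ((2*K).factorial : ℝ) := by exact_mod_cast (2*K).factorial_pos
  positivity

lemma q_succ (K : ℕ) : q (K+1) = q K * (((K:ℝ)+1)/(2*(2*(K:ℝ)+1))) := by
  unfold q
  have hf1 : ((K+1).factorial : ℝ) = ((K:ℝ)+1) * (K.factorial : ℝ) := by
    push_cast [Nat.factorial_succ]; ring
  have hf2 : ((2*(K+1)).factorial : ℝ) = (2*(K:ℝ)+2)*(2*(K:ℝ)+1) * ((2*K).factorial : ℝ) := by
    have : 2*(K+1) = (2*K+1)+1 := by ring
    rw [this, Nat.factorial_succ, Nat.factorial_succ]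
    push_cast; ring
  rw [hf1, hf2]
  have h1 : ((2*K).factorial : ℝ) ≠ 0 := by exact_mod_cast (2*K).factorial_ne_zero
  have h4 : (2*(K:ℝ)+1) ≠ 0 := by positivity
  have h5 : (2*(K:ℝ)+2) ≠ 0 := by positivity
  field_simp

lemma q_le (K : ℕ) : q K ≤ (1/2)^K := by
  induction K with
  | zero => simp [q, Nat.factorial]
  | succ K ih =>
    rw [q_succ, pow_succ]
    have h1 : ((K:ℝ)+1)/(2*(2*(K:ℝ)+1)) ≤ 1/2 := by
      rw [div_le_div_iff₀ (by positivity) (by norm_num)]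
      nlinarith [(show (0:ℝ) ≤ (K:ℝ) by positivity)]
    have h2 : 0 < q K := q_pos K
    have h3 : (0:ℝ) ≤ ((K:ℝ)+1)/(2*(2*(K:ℝ)+1)) := by positivity
    calc q K * (((K:ℝ)+1)/(2*(2*(K:ℝ)+1))) ≤ ((1/2)^K) * (1/2) := by
          apply mul_le_mul ih h1 h3 (by positivity)
      _ = (1/2)^K * (1/2) := rfl

lemma Pp_ge (K n : ℕ) : ((n:ℝ)+1)^2 * ((K.factorial : ℝ))^2 ≤ Pp K n := by
  induction K with
  | zero => simp [Pp, Nat.factorial]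
  | succ K ih =>
    rw [Pp_succK]
    have hf1 : (((K+1).factorial : ℝ))^2 = ((K:ℝ)+1)^2 * ((K.factorial : ℝ))^2 := by
      push_cast [Nat.factorial_succ]; ring
    rw [hf1]
    have h1 : ((K:ℝ)+1)^2 ≤ ((n:ℝ)+1+((K:ℝ)+1))^2 := by
      nlinarith [(show (0:ℝ) ≤ (n:ℝ) by positivity), (show (0:ℝ) ≤ (K:ℝ) by positivity)]
    have h2 : (0:ℝ) ≤ ((n:ℝ)+1)^2 * ((K.factorial : ℝ))^2 := by positivity
    calc ((n:ℝ)+1)^2 * (((K:ℝ)+1)^2 * ((K.factorial:ℝ))^2)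
        = (((n:ℝ)+1)^2 * ((K.factorial:ℝ))^2) * ((K:ℝ)+1)^2 := by ring
      _ ≤ Pp K n * ((n:ℝ)+1+((K:ℝ)+1))^2 := by
          apply mul_le_mul ih h1 (by positivity) (le_of_lt (Pp_pos K n))

lemma Rr_le (K n : ℕ) : Rr K n ≤ q K * (1/((n:ℝ)+1)^2) := by
  unfold Rr q
  have h2 : (0:ℝ) < ((2*K).factorial : ℝ) := by exact_mod_cast (2*K).factorial_pos
  have hKf : (0:ℝ) < (K.factorial : ℝ) := by exact_mod_cast K.factorial_pos
  have h3 : (0:ℝ) < ((2*K).factorial : ℝ) * (((n:ℝ)+1)^2 * ((K.factorial : ℝ))^2) := by positivity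
  have h4 : ((2*K).factorial : ℝ) * (((n:ℝ)+1)^2 * ((K.factorial : ℝ))^2) ≤ ((2*K).factorial : ℝ) * Pp K n := by
    apply mul_le_mul_of_nonneg_left (Pp_ge K n) (le_of_lt h2)
  have h5 : ((K.factorial : ℝ))^4 / (((2*K).factorial : ℝ) * Pp K n)
      ≤ ((K.factorial : ℝ))^4 / (((2*K).factorial : ℝ) * (((n:ℝ)+1)^2 * ((K.factorial : ℝ))^2)) := by
    apply div_le_div_of_nonneg_left (by positivity) h3 h4
  refine le_trans h5 (le_of_eq ?_)
  field_simp

lemma a2_abs (K n : ℕ) : |a2 K n| ≤ (67 * q K) * (1/((n:ℝ)+1)^2) := by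
  unfold a2
  rw [abs_mul]
  have h1 : |Rr K n| = Rr K n := abs_of_pos (Rr_pos K n)
  rw [h1]
  have h2 := Gf_bound (t2_nonneg K n) (t2_le_two K n) (t4_nonneg K n) (t4_le_two K n)
    (s2_nonneg K) (s2_le_two K) (s4_nonneg K) (s4_le_two K)
  calc Rr K n * |Gf (t2 K n) (t4 K n) (s2 K) (s4 K)| ≤ (q K * (1/((n:ℝ)+1)^2)) * 67 := by
        apply mul_le_mul (Rr_le K n) h2 (abs_nonneg _) (mul_nonneg (le_of_lt (q_pos K)) (by positivity))
    _ = (67 * q K) * (1/((n:ℝ)+1)^2) := by ring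

lemma wf_nonneg (K n : ℕ) : 0 ≤ wf K n := by unfold wf; positivity

lemma wf_le (K n : ℕ) : wf K n ≤ (3/2)*((n:ℝ)+1) := by
  unfold wf
  rw [div_le_iff₀ (by positivity)]
  nlinarith [(show (0:ℝ) ≤ (n:ℝ) by positivity), (show (0:ℝ) ≤ (K:ℝ) by positivity)]

lemma b2_abs (K n : ℕ) : |b2 K n| ≤ (101 * q K) * (1/((n:ℝ)+1)) := by
  unfold b2
  rw [abs_mul, abs_of_nonneg (wf_nonneg K n)]
  have h2 : (0:ℝ) < (n:ℝ)+1 := by positivity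
  calc wf K n * |a2 K n| ≤ ((3/2)*((n:ℝ)+1)) * ((67 * q K) * (1/((n:ℝ)+1)^2)) := by
        apply mul_le_mul (wf_le K n) (a2_abs K n) (abs_nonneg _) (by positivity)
    _ = (100.5 * q K) * (1/((n:ℝ)+1)) := by field_simp; ring
    _ ≤ (101 * q K) * (1/((n:ℝ)+1)) := by
        have hq := q_pos K
        have hmono : (100.5:ℝ) * q K ≤ 101 * q K := by nlinarith
        have hpos : (0:ℝ) ≤ 1/((n:ℝ)+1) := by positivity
        exact mul_le_mul_of_nonneg_right hmono hpos



lemma sq_summable : Summable (fun n : ℕ => 1/((n:ℝ)+1)^2) := by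
  have h : Summable (fun n : ℕ => 1/((n:ℝ))^2) :=
    Real.summable_one_div_nat_pow.mpr (by norm_num)
  refine ((summable_nat_add_iff 1).mpr h).congr ?_
  intro n; push_cast; ring

lemma a2_summable (K : ℕ) : Summable (fun n => a2 K n) := by
  rw [← summable_abs_iff]
  exact Summable.of_nonneg_of_le (fun n => abs_nonneg _) (fun n => a2_abs K n)
    (sq_summable.mul_left (67 * q K))

lemma b2_tendsto (K : ℕ) : Tendsto (fun n => b2 K n) atTop (𝓝 0) := by
  have ht : Tendsto (fun n : ℕ => (101 * q K) * (1/((n:ℝ)+1))) atTop (𝓝 0) := by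
    have h := tendsto_one_div_add_atTop_nhds_zero_nat.const_mul (101 * q K)
    simpa using h
  exact squeeze_zero_norm (fun n => by rw [Real.norm_eq_abs]; exact b2_abs K n) ht

lemma tsum_step (K : ℕ) : ∑' n, a2 K n = (∑' n, a2 (K+1) n) + b2 K 0 := by
  have hs1 := a2_summable K
  have hs2 := a2_summable (K+1)
  have hdiff : Summable (fun n => b2 K n - b2 K (n+1)) := by
    exact (hs1.sub hs2).congr (fun n => key K n)
  have hts : HasSum (fun n => b2 K n - b2 K (n+1)) (b2 K 0) := by
    rw [hdiff.hasSum_iff_tendsto_nat]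
    have hps : ∀ N, ∑ n ∈ Finset.range N, (b2 K n - b2 K (n+1)) = b2 K 0 - b2 K N :=
      fun N => Finset.sum_range_sub' (fun n => b2 K n) N
    simp only [hps]
    simpa using tendsto_const_nhds.sub (b2_tendsto K)
  calc ∑' n, a2 K n = ∑' n, (a2 (K+1) n + (b2 K n - b2 K (n+1))) := by
        apply tsum_congr; intro n; have := key K n; linarith
    _ = (∑' n, a2 (K+1) n) + ∑' n, (b2 K n - b2 K (n+1)) := Summable.tsum_add hs2 hdiff
    _ = (∑' n, a2 (K+1) n) + b2 K 0 := by rw [hts.tsum_eq]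

lemma partial_sum (M : ℕ) :
    ∑ k ∈ Finset.range M, b2 k 0 = (∑' n, a2 0 n) - ∑' n, a2 M n := by
  induction M with
  | zero => simp
  | succ M ih => rw [Finset.sum_range_succ, ih, tsum_step M]; ring

lemma tsum_sq_le : ∑' n : ℕ, 1/((n:ℝ)+1)^2 ≤ 2 := by
  apply Summable.tsum_le_of_sum_range_le sq_summable
  intro n
  have h : ∑ i ∈ Finset.range n, 1/((i:ℝ)+1)^2 = s2 n := rfl
  rw [h]; exact s2_le_two n

lemma S_bound (M : ℕ) : |∑' n, a2 M n| ≤ 134 * (1/2)^M := by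
  have hs := a2_summable M
  have habs : Summable (fun n => |a2 M n|) := by rwa [summable_abs_iff]
  have h1 : |∑' n, a2 M n| ≤ ∑' n, |a2 M n| := by
    have := norm_tsum_le_tsum_norm (f := fun n => a2 M n)
      (by simpa [Real.norm_eq_abs] using habs)
    simpa [Real.norm_eq_abs] using this
  have h2 : ∑' n, |a2 M n| ≤ ∑' n : ℕ, (67 * q M) * (1/((n:ℝ)+1)^2) :=
    Summable.tsum_le_tsum (a2_abs M) habs (sq_summable.mul_left _)
  have h3 : ∑' n : ℕ, (67 * q M) * (1/((n:ℝ)+1)^2)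
      = (67 * q M) * ∑' n : ℕ, 1/((n:ℝ)+1)^2 := tsum_mul_left
  have h4 : (67 * q M) * (∑' n : ℕ, 1/((n:ℝ)+1)^2) ≤ (67 * q M) * 2 :=
    mul_le_mul_of_nonneg_left tsum_sq_le (mul_nonneg (by norm_num) (q_pos M).le)
  have h5 : (67:ℝ) * q M * 2 ≤ 134 * (1/2)^M := by
    have := q_le M; nlinarith [q_pos M]
  linarith [h1, h2, h3 ▸ h2, h4, h5]

lemma S_tendsto : Tendsto (fun M => ∑' n, a2 M n) atTop (𝓝 0) := by
  have ht : Tendsto (fun M : ℕ => 134 * (1/2:ℝ)^M) atTop (𝓝 0) := by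
    have h := (tendsto_pow_atTop_nhds_zero_of_lt_one (by norm_num : (0:ℝ) ≤ 1/2)
      (by norm_num : (1/2:ℝ) < 1)).const_mul (134:ℝ)
    simpa using h
  exact squeeze_zero_norm (fun M => by rw [Real.norm_eq_abs]; exact S_bound M) ht

lemma b2_0_summable : Summable (fun K => b2 K 0) := by
  rw [← summable_abs_iff]
  apply Summable.of_nonneg_of_le (fun K => abs_nonneg _) (fun K => ?_)
    ((summable_geometric_of_lt_one (by norm_num : (0:ℝ) ≤ 1/2)
      (by norm_num : (1/2:ℝ) < 1)).mul_left 101)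
  have h1 := b2_abs K 0
  have h2 : (101 * q K) * (1/(((0:ℕ):ℝ)+1)) = 101 * q K := by norm_num
  have h3 : (101:ℝ) * q K ≤ 101 * (1/2)^K := by
    have := q_le K; nlinarith [q_pos K]
  calc |b2 K 0| ≤ (101 * q K) * (1/(((0:ℕ):ℝ)+1)) := h1
    _ = 101 * q K := h2
    _ ≤ 101 * (1/2)^K := h3

lemma hasSum_b2 : HasSum (fun K => b2 K 0) (∑' n, a2 0 n) := by
  rw [b2_0_summable.hasSum_iff_tendsto_nat]
  simp only [partial_sum]
  have h : Tendsto (fun M => (∑' n, a2 0 n) - ∑' n, a2 M n) atTop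
      (𝓝 ((∑' n, a2 0 n) - 0)) := tendsto_const_nhds.sub S_tendsto
  simpa using h



lemma a2_zero (n : ℕ) : a2 0 n = 1/((n:ℝ)+1)^6 := by
  unfold a2 Rr Pp t2 t4 s2 s4 Gf
  simp [Finset.prod_range_one, Finset.sum_range_one, Nat.factorial]
  have h : ((n:ℝ)+1) ≠ 0 := by positivity
  field_simp
  ring

lemma Pp_zero (K : ℕ) : Pp K 0 = (((K+1).factorial : ℝ))^2 := by
  induction K with
  | zero => simp [Pp, Nat.factorial]
  | succ K ih =>
    rw [Pp_succK, ih]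
    have hf : (((K+2).factorial : ℝ)) = ((K:ℝ)+2) * ((K+1).factorial : ℝ) := by
      push_cast [Nat.factorial_succ]; ring
    have : ((K+1)+1) = K+2 := rfl
    rw [this, hf]
    push_cast
    ring

lemma t2_zero (K : ℕ) : t2 K 0 = s2 (K+1) := by
  unfold t2 s2
  apply Finset.sum_congr rfl
  intro j _
  norm_num [add_comm]

lemma t4_zero (K : ℕ) : t4 K 0 = s4 (K+1) := by
  unfold t4 s4
  apply Finset.sum_congr rfl
  intro j _
  norm_num [add_comm]

lemma choose_fact (K : ℕ) :
    (((2*(K+1)).choose (K+1) : ℕ) : ℝ) * (((K+1).factorial : ℝ) * ((K+1).factorial : ℝ))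
      = ((2*(K+1)).factorial : ℝ) := by
  have h : (K+1) ≤ 2*(K+1) := by omega
  have h2 : 2*(K+1) - (K+1) = K+1 := by omega
  have := Nat.choose_mul_factorial_mul_factorial h
  rw [h2] at this
  have this2 : (2*(K+1)).choose (K+1) * ((K+1).factorial * (K+1).factorial)
      = (2*(K+1)).factorial := by rw [← mul_assoc]; exact this
  exact_mod_cast this2

lemma choose_pos' (K : ℕ) : (0:ℝ) < (((2*(K+1)).choose (K+1) : ℕ) : ℝ) := by
  have : 0 < (2*(K+1)).choose (K+1) := Nat.choose_pos (by omega)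
  exact_mod_cast this

lemma wR (K : ℕ) :
    wf K 0 * Rr K 0 = 3 / (((K:ℝ)+1)^2 * (((2*(K+1)).choose (K+1) : ℕ) : ℝ)) := by
  have hC := choose_fact K
  have hCpos := choose_pos' K
  have hf2 : ((2*(K+1)).factorial : ℝ) = (2*(K:ℝ)+2)*(2*(K:ℝ)+1) * ((2*K).factorial : ℝ) := by
    have h : 2*(K+1) = (2*K+1)+1 := by ring
    rw [h, Nat.factorial_succ, Nat.factorial_succ]
    push_cast; ring
  have hf1 : ((K+1).factorial : ℝ) = ((K:ℝ)+1) * (K.factorial : ℝ) := by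
    push_cast [Nat.factorial_succ]; ring
  have h2Kpos : (0:ℝ) < ((2*K).factorial : ℝ) := by exact_mod_cast (2*K).factorial_pos
  have hKfpos : (0:ℝ) < (K.factorial : ℝ) := by exact_mod_cast K.factorial_pos
  have hrel : (2*(K:ℝ)+2)*(2*(K:ℝ)+1) * ((2*K).factorial : ℝ)
      = (((2*(K+1)).choose (K+1) : ℕ) : ℝ) * (((K:ℝ)+1) * (K.factorial : ℝ))^2 := by
    rw [← hf2, ← hC, hf1]; ring
  unfold wf Rr
  rw [Pp_zero, hf1]
  have hKpos : (0:ℝ) < (K:ℝ)+1 := by positivity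
  have h2K1 : (0:ℝ) < 2*(K:ℝ)+1 := by positivity
  rw [div_mul_div_comm]
  rw [div_eq_div_iff (by positivity) (by positivity)]
  push_cast
  nlinarith [hrel, sq_nonneg ((K:ℝ)+1), mul_pos h2Kpos hKfpos]

lemma b2_zero_eq (K : ℕ) :
    b2 K 0 = 3 * (1 / (((K:ℝ) + 1) ^ 6 * (((2*(K+1)).choose (K+1) : ℕ) : ℝ)))
      - 9 * ((1 / (((K:ℝ) + 1) ^ 4 * (((2*(K+1)).choose (K+1) : ℕ) : ℝ))) * s2 K)
      - (45/2) * ((1 / (((K:ℝ) + 1) ^ 2 * (((2*(K+1)).choose (K+1) : ℕ) : ℝ))) * s4 K)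
      + (27/2) * ((1 / (((K:ℝ) + 1) ^ 2 * (((2*(K+1)).choose (K+1) : ℕ) : ℝ))) * (s2 K)^2) := by
  have hCpos := choose_pos' K
  have hKpos : (0:ℝ) < (K:ℝ)+1 := by positivity
  unfold b2 a2
  rw [t2_zero, t4_zero, s2_succ, s4_succ, ← mul_assoc, wR K]
  unfold Gf
  field_simp
  ring



lemma C_ge_one (k : ℕ) : (1:ℝ) ≤ ((2 * (k + 1)).choose (k + 1) : ℝ) := by
  have : 1 ≤ (2 * (k + 1)).choose (k + 1) := Nat.succ_le_of_lt (Nat.choose_pos (by omega))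
  exact_mod_cast this

lemma inv_pow_C_le (k : ℕ) (m : ℕ) (hm : 2 ≤ m) :
    1 / (((k:ℝ)+1)^m * ((2 * (k + 1)).choose (k + 1) : ℝ)) ≤ 1/((k:ℝ)+1)^2 := by
  have hk : (0:ℝ) ≤ (k:ℝ) := by positivity
  have h1 : (1:ℝ) ≤ (k:ℝ)+1 := by linarith
  have hC := C_ge_one k
  apply one_div_le_one_div_of_le (by positivity)
  calc ((k:ℝ)+1)^2 ≤ ((k:ℝ)+1)^m := pow_le_pow_right₀ h1 hm
    _ = ((k:ℝ)+1)^m * 1 := by ring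
    _ ≤ ((k:ℝ)+1)^m * ((2 * (k + 1)).choose (k + 1) : ℝ) := by
        apply mul_le_mul_of_nonneg_left hC (by positivity)

lemma sum_f6 : Summable (fun k : ℕ =>
    1 / (((k : ℝ) + 1) ^ 6 * ((2 * (k + 1)).choose (k + 1) : ℝ))) := by
  apply Summable.of_nonneg_of_le (fun k => ?_) (fun k => inv_pow_C_le k 6 (by norm_num)) sq_summable
  have := C_ge_one k
  positivity

lemma sum_aux (m : ℕ) (hm : 2 ≤ m) (g : ℕ → ℝ) (hg0 : ∀ k, 0 ≤ g k) (hg2 : ∀ k, g k ≤ 4) :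
    Summable (fun k : ℕ =>
      (1 / (((k : ℝ) + 1) ^ m * ((2 * (k + 1)).choose (k + 1) : ℝ))) * g k) := by
  apply Summable.of_nonneg_of_le (fun k => ?_) (fun k => ?_) (sq_summable.mul_left 4)
  · have := C_ge_one k
    have := hg0 k
    positivity
  · have h1 := inv_pow_C_le k m hm
    have h2 : (0:ℝ) ≤ 1 / (((k : ℝ) + 1) ^ m * ((2 * (k + 1)).choose (k + 1) : ℝ)) := by
      have := C_ge_one k
      positivity
    calc (1 / (((k : ℝ) + 1) ^ m * ((2 * (k + 1)).choose (k + 1) : ℝ))) * g k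
        ≤ (1/((k:ℝ)+1)^2) * 4 := by
          apply mul_le_mul h1 (hg2 k) (hg0 k) (by positivity)
      _ = 4 * (1/((k:ℝ)+1)^2) := by ring

end Z6

theorem zeta_six_sigma_form :
    ∑' n : ℕ, 1 / ((n : ℝ) + 1) ^ 6 =
      3 * (∑' k : ℕ, 1 / (((k : ℝ) + 1) ^ 6 * ((2 * (k + 1)).choose (k + 1) : ℝ)))
      - 9 * (∑' k : ℕ,
          (1 / (((k : ℝ) + 1) ^ 4 * ((2 * (k + 1)).choose (k + 1) : ℝ))) *
            ∑ j ∈ Finset.range k, 1 / ((j : ℝ) + 1) ^ 2)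
      - (45 / 2) * (∑' k : ℕ,
          (1 / (((k : ℝ) + 1) ^ 2 * ((2 * (k + 1)).choose (k + 1) : ℝ))) *
            ∑ j ∈ Finset.range k, 1 / ((j : ℝ) + 1) ^ 4)
      + (27 / 2) * ∑' k : ℕ,
          (1 / (((k : ℝ) + 1) ^ 2 * ((2 * (k + 1)).choose (k + 1) : ℝ))) *
            (∑ j ∈ Finset.range k, 1 / ((j : ℝ) + 1) ^ 2) ^ 2 := by
  have hs2eq : ∀ k : ℕ, Z6.s2 k = ∑ j ∈ Finset.range k, 1 / ((j : ℝ) + 1) ^ 2 := fun k => rfl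
  have hs4eq : ∀ k : ℕ, Z6.s4 k = ∑ j ∈ Finset.range k, 1 / ((j : ℝ) + 1) ^ 4 := fun k => rfl
  have hsum6 := Z6.sum_f6
  have hsum4 := Z6.sum_aux 4 (by norm_num) (fun k => ∑ j ∈ Finset.range k, 1 / ((j : ℝ) + 1) ^ 2)
    (fun k => Z6.s2_nonneg k)
    (fun k => by show Z6.s2 k ≤ 4; linarith [Z6.s2_le_two k])
  have hsumg4 := Z6.sum_aux 2 (by norm_num) (fun k => ∑ j ∈ Finset.range k, 1 / ((j : ℝ) + 1) ^ 4)
    (fun k => Z6.s4_nonneg k)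
    (fun k => by show Z6.s4 k ≤ 4; linarith [Z6.s4_le_two k])
  have hsumg2 := Z6.sum_aux 2 (by norm_num)
    (fun k => (∑ j ∈ Finset.range k, 1 / ((j : ℝ) + 1) ^ 2) ^ 2)
    (fun k => by positivity)
    (fun k => by
      show (Z6.s2 k)^2 ≤ 4
      have h1 := Z6.s2_le_two k
      have h2 := Z6.s2_nonneg k
      nlinarith)
  have h1 : ∑' n : ℕ, 1 / ((n : ℝ) + 1) ^ 6 = ∑' n, Z6.a2 0 n :=
    tsum_congr (fun n => (Z6.a2_zero n).symm)
  have h2 : ∑' n, Z6.a2 0 n = ∑' K, Z6.b2 K 0 := (Z6.hasSum_b2.tsum_eq).symm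
  have h3 : ∀ K : ℕ, Z6.b2 K 0 =
      3 * (1 / (((K : ℝ) + 1) ^ 6 * ((2 * (K + 1)).choose (K + 1) : ℝ)))
      - 9 * ((1 / (((K : ℝ) + 1) ^ 4 * ((2 * (K + 1)).choose (K + 1) : ℝ))) *
            ∑ j ∈ Finset.range K, 1 / ((j : ℝ) + 1) ^ 2)
      - (45/2) * ((1 / (((K : ℝ) + 1) ^ 2 * ((2 * (K + 1)).choose (K + 1) : ℝ))) *
            ∑ j ∈ Finset.range K, 1 / ((j : ℝ) + 1) ^ 4)
      + (27/2) * ((1 / (((K : ℝ) + 1) ^ 2 * ((2 * (K + 1)).choose (K + 1) : ℝ))) *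
            (∑ j ∈ Finset.range K, 1 / ((j : ℝ) + 1) ^ 2) ^ 2) := by
    intro K
    rw [← hs2eq, ← hs4eq]
    exact Z6.b2_zero_eq K
  rw [h1, h2, tsum_congr h3]
  rw [Summable.tsum_add (((hsum6.mul_left 3).sub (hsum4.mul_left 9)).sub (hsumg4.mul_left (45/2)))
      (hsumg2.mul_left (27/2))]
  rw [Summable.tsum_sub ((hsum6.mul_left 3).sub (hsum4.mul_left 9)) (hsumg4.mul_left (45/2))]
  rw [Summable.tsum_sub (hsum6.mul_left 3) (hsum4.mul_left 9)]
  rw [tsum_mul_left, tsum_mul_left, tsum_mul_left, tsum_mul_left]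
end
end
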